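/- arXiv:1811.05036 — 5 statements merged into one kernel-verified Lean document; each statement's English description precedes it below -/
import Mathlib

section
/- Let Γ₁ and Γ₂ be connected simplicial graphs. If Γ₁ and Γ₂ are shortcut, then the product graph Γ₁ × Γ₂ is shortcut. If Γ₁ and Γ₂ are strongly shortcut, then Γ₁ × Γ₂ is strongly shortcut. -/
open scoped Classical

noncomputable section

namespace ShortcutGraphs

/-- Path metric on (the geometric realization of) the cycle graph `C` with `n` edges:
points of `C` are parametrized by `ℝ` modulo `n`, with each edge isometric to `[0,1]`. -/
def cdist (n : ℕ) (p q : ℝ) : ℝ := ⨅ k : ℤ, |p - q + k * (n : ℝ)|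

variable {V : Type*}

/-- A cycle of length `n` in the simplicial graph `G`: a nondegenerate combinatorial map
from the cycle graph with `n` edges, recorded by the images of its vertices `0, 1, …, n-1`
(indexed by `ZMod n`); consecutive vertices map to adjacent vertices of `G`. -/
def IsCycle (G : SimpleGraph V) (n : ℕ) (c : ZMod n → V) : Prop :=
  ∀ i : ZMod n, G.Adj (c i) (c (i + 1))

/-- Distance, in the geometric realization of the graph `G` (each edge isometric to `[0,1]`,
equipped with the path metric), between the images under the cycle `c` of the points of the
cycle graph parametrized by `p` and `q`.  The point parametrized by `p` lies on the edge of
the cycle joining vertex `⌊p⌋` to vertex `⌊p⌋ + 1`, at distance `p - ⌊p⌋` from the former; a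
geodesic between two points of a graph either stays within one closed edge (the `if` terms)
or consists of a piece of an edge, a geodesic between two vertices, and a piece of an edge
(the `route` term). -/
def rdist (G : SimpleGraph V) (n : ℕ) (c : ZMod n → V) (p q : ℝ) : ℝ :=
  let i : ZMod n := ((⌊p⌋ : ℤ) : ZMod n)
  let j : ZMod n := ((⌊q⌋ : ℤ) : ZMod n)
  let s : ℝ := Int.fract p
  let t : ℝ := Int.fract q
  let a : V := c i
  let b : V := c (i + 1)
  let u : V := c j
  let v : V := c (j + 1)
  let route : ℝ :=
    min (min (s + (G.dist a u : ℝ) + t) (s + (G.dist a v : ℝ) + (1 - t)))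
        (min ((1 - s) + (G.dist b u : ℝ) + t) ((1 - s) + (G.dist b v : ℝ) + (1 - t)))
  min route
    (min (if a = u ∧ b = v then |s - t| else route)
         (if a = v ∧ b = u then |s + t - 1| else route))

/-- Two points of the cycle graph with `n` edges are antipodal if their distance is `n/2`. -/
def Antipodal (n : ℕ) (p q : ℝ) : Prop := cdist n p q = (n : ℝ) / 2

/-- The cycle `c` is isometric: it is an isometric embedding at the level of all points of
the geometric realizations. -/
def IsIsometricCycle (G : SimpleGraph V) (n : ℕ) (c : ZMod n → V) : Prop :=
  ∀ p q : ℝ, rdist G n c p q = cdist n p q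

/-- The cycle `c` is `ξ`-almost isometric: `d_Γ(f(p), f(q)) ≥ ξ·|C|/2` for every antipodal
pair of points `p, q` of the cycle. -/
def IsAlmostIsometricCycle (G : SimpleGraph V) (n : ℕ) (c : ZMod n → V) (ξ : ℝ) : Prop :=
  ∀ p q : ℝ, Antipodal n p q → ξ * ((n : ℝ) / 2) ≤ rdist G n c p q

/-- A graph is shortcut if there is a bound `θ` on the lengths of its isometric cycles. -/
def Shortcut (G : SimpleGraph V) : Prop :=
  ∃ θ : ℕ, ∀ (n : ℕ) (c : ZMod n → V), 0 < n → IsCycle G n c → IsIsometricCycle G n c → n ≤ θ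

/-- A graph is strongly shortcut if for some `ξ ∈ (0,1)` there is a bound `θ` on the lengths
of its `ξ`-almost isometric cycles. -/
def StronglyShortcut (G : SimpleGraph V) : Prop :=
  ∃ (θ : ℕ) (ξ : ℝ), 0 < ξ ∧ ξ < 1 ∧
    ∀ (n : ℕ) (c : ZMod n → V), 0 < n → IsCycle G n c → IsAlmostIsometricCycle G n c ξ → n ≤ θ
set_option maxHeartbeats 1000000

section CdistLemmas

lemma cdist_le (n : ℕ) (p q : ℝ) (k : ℤ) : cdist n p q ≤ |p - q + k * (n : ℝ)| :=
  ciInf_le ⟨0, by rintro x ⟨k, rfl⟩; exact abs_nonneg _⟩ k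

lemma cdist_nonneg (n : ℕ) (p q : ℝ) : 0 ≤ cdist n p q :=
  le_ciInf fun _ => abs_nonneg _

lemma cdist_eq_of_le_half {n : ℕ} (hn : 0 < n) {p q : ℝ} {k : ℤ}
    (h : |p - q + k * (n : ℝ)| ≤ (n : ℝ) / 2) : cdist n p q = |p - q + k * (n : ℝ)| := by
  refine le_antisymm (cdist_le n p q k) (le_ciInf fun k' => ?_)
  rcases eq_or_ne k' k with rfl | hk
  · exact le_refl _
  · have h2 : (1 : ℝ) ≤ |(k' : ℝ) - k| := by
      have h0 := Int.one_le_abs (sub_ne_zero.mpr hk)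
      have h0' : (1 : ℝ) ≤ ((|k' - k| : ℤ) : ℝ) := by exact_mod_cast h0
      rwa [Int.cast_abs, Int.cast_sub] at h0'
    have hnR : (0 : ℝ) ≤ n := by positivity
    have h3 : (n : ℝ) ≤ |((k' : ℝ) - k) * n| := by
      rw [abs_mul, abs_of_nonneg hnR]
      nlinarith
    have h5 : |((k':ℝ) - k) * n| ≤ |p - q + k' * (n:ℝ)| + |p - q + k * (n:ℝ)| := by
      have e : ((k':ℝ) - k) * n = (p - q + k' * n) - (p - q + k * n) := by ring
      rw [e, sub_eq_add_neg]
      exact (abs_add_le _ _).trans (by rw [abs_neg])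
    linarith

lemma exists_cdist_rep (n : ℕ) (hn : 0 < n) (p q : ℝ) :
    ∃ k : ℤ, |p - q + k * (n : ℝ)| ≤ (n : ℝ) / 2 ∧ cdist n p q = |p - q + k * (n : ℝ)| := by
  have hnR : (0 : ℝ) < n := by exact_mod_cast hn
  set r : ℤ := ⌊(p - q) / n + 1 / 2⌋ with hr
  have h1 : (r : ℝ) ≤ (p - q) / n + 1 / 2 := Int.floor_le _
  have h2 : (p - q) / n + 1 / 2 < r + 1 := Int.lt_floor_add_one _
  have e : ((p - q) / n) * n = p - q := div_mul_cancel₀ _ hnR.ne'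
  have H1 : (r : ℝ) * n ≤ (p - q) + n / 2 := by nlinarith
  have H2 : (p - q) + n / 2 < (r : ℝ) * n + n := by nlinarith
  have habs : |p - q + (-r : ℤ) * (n : ℝ)| ≤ (n : ℝ) / 2 := by
    push_cast
    rw [abs_le]
    constructor <;> nlinarith
  exact ⟨-r, habs, cdist_eq_of_le_half hn habs⟩

lemma cdist_le_half {n : ℕ} (hn : 0 < n) (p q : ℝ) : cdist n p q ≤ (n : ℝ) / 2 := by
  obtain ⟨k, hk, he⟩ := exists_cdist_rep n hn p q
  rw [he]; exact hk

lemma cdist_symm (n : ℕ) (p q : ℝ) : cdist n p q = cdist n q p := by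
  have key : ∀ p q : ℝ, cdist n p q ≤ cdist n q p := by
    intro p q
    refine le_ciInf fun k => ?_
    have h : |q - p + k * (n : ℝ)| = |p - q + (-k) * (n : ℝ)| := by
      rw [← abs_neg]; ring_nf
    calc cdist n p q ≤ |p - q + (-k : ℤ) * (n : ℝ)| := cdist_le n p q (-k)
      _ = |q - p + k * (n : ℝ)| := by rw [h]; push_cast; ring_nf
  exact le_antisymm (key p q) (key q p)

lemma cdist_triangle {n : ℕ} (hn : 0 < n) (p q r : ℝ) :
    cdist n p r ≤ cdist n p q + cdist n q r := by
  obtain ⟨k₁, _, h₁⟩ := exists_cdist_rep n hn p q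
  obtain ⟨k₂, _, h₂⟩ := exists_cdist_rep n hn q r
  rw [h₁, h₂]
  calc cdist n p r ≤ |p - r + (k₁ + k₂ : ℤ) * (n : ℝ)| := cdist_le n p r (k₁ + k₂)
    _ ≤ |p - q + k₁ * (n : ℝ)| + |q - r + k₂ * (n : ℝ)| := by
        have e : p - r + ((k₁ + k₂ : ℤ) : ℝ) * (n : ℝ)
            = (p - q + k₁ * n) + (q - r + k₂ * n) := by push_cast; ring
        rw [e]; exact abs_add_le _ _

lemma cdist_congr {n : ℕ} {p q p' q' : ℝ} (m : ℤ) (h : p - q = p' - q' + m * (n : ℝ)) :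
    cdist n p q = cdist n p' q' := by
  have key : ∀ (p q p' q' : ℝ) (m : ℤ), p - q = p' - q' + m * (n : ℝ) →
      cdist n p q ≤ cdist n p' q' := by
    intro p q p' q' m h
    refine le_ciInf fun k => ?_
    have e : |p' - q' + k * (n : ℝ)| = |p - q + ((k - m : ℤ) : ℝ) * (n : ℝ)| := by
      push_cast; rw [h]; ring_nf
    rw [e]; exact cdist_le n p q (k - m)
  exact le_antisymm (key _ _ _ _ m h) (key _ _ _ _ (-m) (by push_cast at h ⊢; linarith))

lemma cdist_antipode {n : ℕ} (hn : 0 < n) (p q : ℝ) :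
    cdist n p (q + (n : ℝ) / 2) = (n : ℝ) / 2 - cdist n p q := by
  obtain ⟨k, hk, he⟩ := exists_cdist_rep n hn p q
  rcases le_or_gt 0 (p - q + k * (n : ℝ)) with h0 | h0
  · have h1 : p - (q + (n : ℝ) / 2) + k * (n : ℝ) = (p - q + k * n) - n / 2 := by ring
    have h2 : |p - (q + (n : ℝ) / 2) + k * (n : ℝ)| = (n : ℝ) / 2 - (p - q + k * n) := by
      rw [h1, abs_of_nonpos (by rw [abs_of_nonneg h0] at hk; linarith)]; ring
    rw [cdist_eq_of_le_half hn (k := k) (by rw [h2]; linarith),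
      h2, he, abs_of_nonneg h0]
  · have h1 : p - (q + (n : ℝ) / 2) + (k + 1) * (n : ℝ) = (p - q + k * n) + n / 2 := by ring
    have h2 : |p - (q + (n : ℝ) / 2) + ((k + 1 : ℤ) : ℝ) * (n : ℝ)|
        = (n : ℝ) / 2 + (p - q + k * n) := by
      push_cast
      rw [h1, abs_of_nonneg (by rw [abs_of_neg h0] at hk; linarith)]; ring
    rw [cdist_eq_of_le_half hn (k := k + 1) (by rw [h2]; linarith),
      h2, he, abs_of_neg h0]
    ring

end CdistLemmas
section CycleZ

variable {V : Type*} {G : SimpleGraph V}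

/-- ℤ-indexed, `n`-periodic cycles. -/
def IsCycleZ (G : SimpleGraph V) (n : ℕ) (F : ℤ → V) : Prop :=
  (∀ i : ℤ, F (i + n) = F i) ∧ ∀ i : ℤ, G.Adj (F i) (F (i + 1))

lemma periodZ_mul {n : ℕ} {F : ℤ → V} (hper : ∀ i : ℤ, F (i + n) = F i) (i : ℤ) :
    ∀ m : ℤ, F (i + m * n) = F i := by
  intro m
  induction m using Int.induction_on with
  | zero => simp
  | succ m ih =>
      have e : i + (m + 1) * n = (i + m * n) + n := by ring
      rw [e, hper, ih]
  | pred m ih =>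
      have e : i + (-m - 1) * n = (i + (-m) * n - n) := by ring
      have e2 : (i + (-m) * n - n) + n = i + (-m) * n := by ring
      have := hper (i + (-m) * n - n)
      rw [e2] at this
      rw [e, ← this] at *
      rw [this, ih]

lemma distZ_le_of_nat (hconn : G.Connected) {F : ℤ → V}
    (hadj : ∀ i : ℤ, G.Adj (F i) (F (i + 1))) (a : ℤ) :
    ∀ m : ℕ, G.dist (F a) (F (a + m)) ≤ m := by
  intro m
  induction m with
  | zero => simp
  | succ m ih =>
      have h1 : G.dist (F (a + m)) (F (a + m + 1)) = 1 :=
        SimpleGraph.dist_eq_one_iff_adj.mpr (hadj (a + m))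
      have e : a + ((m : ℤ) + 1) = a + m + 1 := by ring
      calc G.dist (F a) (F (a + (m + 1 : ℕ)))
          ≤ G.dist (F a) (F (a + m)) + G.dist (F (a + m)) (F (a + (m + 1 : ℕ))) :=
            hconn.dist_triangle
        _ ≤ m + 1 := by
            push_cast
            rw [e, h1]
            exact Nat.add_le_add_right ih 1

lemma distZ_le_abs (hconn : G.Connected) {n : ℕ} {F : ℤ → V} (hc : IsCycleZ G n F)
    (a b k : ℤ) : (G.dist (F a) (F b) : ℝ) ≤ |(a : ℝ) - b + k * n| := by
  obtain ⟨hper, hadj⟩ := hc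
  rcases le_or_gt 0 (a - b + k * n) with h0 | h0
  · set m : ℕ := (a - b + k * n).toNat with hm
    have hmz : (m : ℤ) = a - b + k * n := Int.toNat_of_nonneg h0
    have hcast : ((a - b + k * (n : ℤ) : ℤ) : ℝ) = (a : ℝ) - b + k * n := by push_cast; ring
    have hFa : F (b + m) = F a := by
      have e : b + (m : ℤ) = a + k * n := by rw [hmz]; ring
      rw [e, periodZ_mul hper]
    have hd := distZ_le_of_nat hconn hadj b m
    rw [hFa, SimpleGraph.dist_comm] at hd
    have h2 : |(a : ℝ) - b + k * n| = (m : ℝ) := by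
      rw [abs_of_nonneg (by rw [← hcast]; exact_mod_cast h0), ← hcast]
      exact_mod_cast congrArg (fun z : ℤ => (z : ℝ)) hmz.symm
    rw [h2]
    exact_mod_cast hd
  · set m : ℕ := (b - a - k * n).toNat with hm
    have hmz : (m : ℤ) = b - a - k * n := Int.toNat_of_nonneg (by linarith)
    have hcast : ((a - b + k * (n : ℤ) : ℤ) : ℝ) = (a : ℝ) - b + k * n := by push_cast; ring
    have hFb : F (a + m) = F b := by
      have e : a + (m : ℤ) = b + (-k) * n := by rw [hmz]; ring
      rw [e, periodZ_mul hper]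
    have hd := distZ_le_of_nat hconn hadj a m
    rw [hFb] at hd
    have h2 : |(a : ℝ) - b + k * n| = (m : ℝ) := by
      rw [abs_of_neg (by rw [← hcast]; exact_mod_cast h0)]
      have : ((m : ℤ) : ℝ) = -((a - b + k * (n : ℤ) : ℤ) : ℝ) := by
        rw [hmz]; push_cast; ring
      rw [← hcast]
      push_cast at this ⊢
      linarith
    rw [h2]
    exact_mod_cast hd

lemma distZ_le_cdist (hconn : G.Connected) {n : ℕ} (hn : 0 < n) {F : ℤ → V}
    (hc : IsCycleZ G n F) (a b : ℤ) :
    (G.dist (F a) (F b) : ℝ) ≤ cdist n a b := by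
  obtain ⟨k, _, he⟩ := exists_cdist_rep n hn a b
  rw [he]
  exact distZ_le_abs hconn hc a b k

end CycleZ
section Bridge

variable {V : Type*} {G : SimpleGraph V}

/-- The corner `c ⌊p⌋` used by `rdist`. -/
def corner (n : ℕ) (c : ZMod n → V) (p : ℝ) : V := c ((⌊p⌋ : ℤ) : ZMod n)

/-- The corner `c (⌊p⌋ + 1)` used by `rdist`. -/
def corner' (n : ℕ) (c : ZMod n → V) (p : ℝ) : V := c (((⌊p⌋ : ℤ) : ZMod n) + 1)

lemma rdist_def (G : SimpleGraph V) (n : ℕ) (c : ZMod n → V) (p q : ℝ) :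
    rdist G n c p q =
      min (min (min (Int.fract p + (G.dist (corner n c p) (corner n c q) : ℝ) + Int.fract q)
                    (Int.fract p + (G.dist (corner n c p) (corner' n c q) : ℝ)
                      + (1 - Int.fract q)))
               (min ((1 - Int.fract p) + (G.dist (corner' n c p) (corner n c q) : ℝ)
                      + Int.fract q)
                    ((1 - Int.fract p) + (G.dist (corner' n c p) (corner' n c q) : ℝ)
                      + (1 - Int.fract q))))
          (min (if corner n c p = corner n c q ∧ corner' n c p = corner' n c q then
                  |Int.fract p - Int.fract q| else
                  min (min (Int.fract p + (G.dist (corner n c p) (corner n c q) : ℝ)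
                      + Int.fract q)
                    (Int.fract p + (G.dist (corner n c p) (corner' n c q) : ℝ)
                      + (1 - Int.fract q)))
               (min ((1 - Int.fract p) + (G.dist (corner' n c p) (corner n c q) : ℝ)
                      + Int.fract q)
                    ((1 - Int.fract p) + (G.dist (corner' n c p) (corner' n c q) : ℝ)
                      + (1 - Int.fract q))))
               (if corner n c p = corner' n c q ∧ corner' n c p = corner n c q then
                  |Int.fract p + Int.fract q - 1| else
                  min (min (Int.fract p + (G.dist (corner n c p) (corner n c q) : ℝ)
                      + Int.fract q)
                    (Int.fract p + (G.dist (corner n c p) (corner' n c q) : ℝ)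
                      + (1 - Int.fract q)))
               (min ((1 - Int.fract p) + (G.dist (corner' n c p) (corner n c q) : ℝ)
                      + Int.fract q)
                    ((1 - Int.fract p) + (G.dist (corner' n c p) (corner' n c q) : ℝ)
                      + (1 - Int.fract q))))) := rfl

lemma rdist_le₁ (G : SimpleGraph V) (n : ℕ) (c : ZMod n → V) (p q : ℝ) :
    rdist G n c p q
      ≤ Int.fract p + (G.dist (corner n c p) (corner n c q) : ℝ) + Int.fract q := by
  rw [rdist_def]
  exact le_trans (min_le_left _ _) (le_trans (min_le_left _ _) (min_le_left _ _)) |>.trans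
    (le_refl _)

lemma rdist_le₂ (G : SimpleGraph V) (n : ℕ) (c : ZMod n → V) (p q : ℝ) :
    rdist G n c p q
      ≤ Int.fract p + (G.dist (corner n c p) (corner' n c q) : ℝ) + (1 - Int.fract q) := by
  rw [rdist_def]
  exact le_trans (min_le_left _ _) (le_trans (min_le_left _ _) (min_le_right _ _))

lemma rdist_le₃ (G : SimpleGraph V) (n : ℕ) (c : ZMod n → V) (p q : ℝ) :
    rdist G n c p q
      ≤ (1 - Int.fract p) + (G.dist (corner' n c p) (corner n c q) : ℝ) + Int.fract q := by
  rw [rdist_def]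
  exact le_trans (min_le_left _ _) (le_trans (min_le_right _ _) (min_le_left _ _))

lemma rdist_le₄ (G : SimpleGraph V) (n : ℕ) (c : ZMod n → V) (p q : ℝ) :
    rdist G n c p q
      ≤ (1 - Int.fract p) + (G.dist (corner' n c p) (corner' n c q) : ℝ)
          + (1 - Int.fract q) := by
  rw [rdist_def]
  exact le_trans (min_le_left _ _) (le_trans (min_le_right _ _) (min_le_right _ _))

lemma rdist_le_if₁ (G : SimpleGraph V) (n : ℕ) (c : ZMod n → V) (p q : ℝ)
    (h : corner n c p = corner n c q ∧ corner' n c p = corner' n c q) :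
    rdist G n c p q ≤ |Int.fract p - Int.fract q| := by
  rw [rdist_def]
  refine le_trans (min_le_right _ _) (le_trans (min_le_left _ _) ?_)
  rw [if_pos h]

lemma le_rdist {G : SimpleGraph V} {n : ℕ} {c : ZMod n → V} {p q : ℝ} {D : ℝ}
    (h₁ : D ≤ Int.fract p + (G.dist (corner n c p) (corner n c q) : ℝ) + Int.fract q)
    (h₂ : D ≤ Int.fract p + (G.dist (corner n c p) (corner' n c q) : ℝ) + (1 - Int.fract q))
    (h₃ : D ≤ (1 - Int.fract p) + (G.dist (corner' n c p) (corner n c q) : ℝ) + Int.fract q)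
    (h₄ : D ≤ (1 - Int.fract p) + (G.dist (corner' n c p) (corner' n c q) : ℝ)
            + (1 - Int.fract q))
    (h₅ : corner n c p = corner n c q → corner' n c p = corner' n c q →
            D ≤ |Int.fract p - Int.fract q|)
    (h₆ : corner n c p = corner' n c q → corner' n c p = corner n c q →
            D ≤ |Int.fract p + Int.fract q - 1|) :
    D ≤ rdist G n c p q := by
  rw [rdist_def]
  have hroute : D ≤ min (min (Int.fract p + (G.dist (corner n c p) (corner n c q) : ℝ)
        + Int.fract q)
      (Int.fract p + (G.dist (corner n c p) (corner' n c q) : ℝ) + (1 - Int.fract q)))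
      (min ((1 - Int.fract p) + (G.dist (corner' n c p) (corner n c q) : ℝ) + Int.fract q)
      ((1 - Int.fract p) + (G.dist (corner' n c p) (corner' n c q) : ℝ)
        + (1 - Int.fract q))) :=
    le_min (le_min h₁ h₂) (le_min h₃ h₄)
  refine le_min hroute (le_min ?_ ?_)
  · split_ifs with h
    · exact h₅ h.1 h.2
    · exact hroute
  · split_ifs with h
    · exact h₆ h.1 h.2
    · exact hroute

end Bridge
section Bridge2

variable {V : Type*} {G : SimpleGraph V}

/-- Fold an `n`-periodic `ℤ`-indexed cycle into a `ZMod n`-indexed cycle. -/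
def toCycle (F : ℤ → V) (n : ℕ) : ZMod n → V := fun z => F z.val

lemma toCycle_intCast {F : ℤ → V} {n : ℕ} (hn : 0 < n) (hper : ∀ i : ℤ, F (i + n) = F i)
    (a : ℤ) : toCycle F n ((a : ZMod n)) = F a := by
  haveI : NeZero n := ⟨hn.ne'⟩
  show F ((a : ZMod n).val : ℕ) = F a
  have h1 : (((a : ZMod n).val : ℕ) : ℤ) = a % n := ZMod.val_intCast a
  rw [h1]
  have h2 : a % n + (a / n) * n = a := by
    have := Int.emod_add_mul_ediv a n
    linarith
  calc F (a % n) = F (a % n + (a / n) * n) := (periodZ_mul hper _ _).symm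
    _ = F a := by rw [h2]

lemma corner_toCycle {F : ℤ → V} {n : ℕ} (hn : 0 < n) (hper : ∀ i : ℤ, F (i + n) = F i)
    (p : ℝ) : corner n (toCycle F n) p = F ⌊p⌋ := toCycle_intCast hn hper _

lemma corner'_toCycle {F : ℤ → V} {n : ℕ} (hn : 0 < n) (hper : ∀ i : ℤ, F (i + n) = F i)
    (p : ℝ) : corner' n (toCycle F n) p = F (⌊p⌋ + 1) := by
  have : (((⌊p⌋ : ℤ) : ZMod n) + 1) = (((⌊p⌋ + 1 : ℤ)) : ZMod n) := by push_cast; ring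
  rw [corner', this, toCycle_intCast hn hper]

lemma toCycle_isCycle {F : ℤ → V} {n : ℕ} (hn : 0 < n) (hc : IsCycleZ G n F) :
    IsCycle G n (toCycle F n) := by
  haveI : NeZero n := ⟨hn.ne'⟩
  intro z
  have h1 : toCycle F n z = F z.val := rfl
  have hz : ((z.val : ℤ) : ZMod n) = z := by
    push_cast
    simp [ZMod.natCast_val, ZMod.cast_id]
  have h2 : toCycle F n (z + 1) = F ((z.val : ℤ) + 1) := by
    rw [← toCycle_intCast hn hc.1 ((z.val : ℤ) + 1)]
    congr 1
    push_cast [hz]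
    ring
  rw [h1, h2]
  exact hc.2 z.val

lemma ofCycle {n : ℕ} (hn : 0 < n) (c : ZMod n → V) (hc : IsCycle G n c) :
    IsCycleZ G n (fun a : ℤ => c a) ∧ toCycle (fun a : ℤ => c a) n = c := by
  haveI : NeZero n := ⟨hn.ne'⟩
  refine ⟨⟨fun i => by push_cast; simp, fun i => by
    have := hc (i : ZMod n)
    push_cast at this ⊢
    exact this⟩, funext fun z => ?_⟩
  show c ((z.val : ℤ) : ZMod n) = c z
  congr 1
  push_cast
  simp [ZMod.natCast_val, ZMod.cast_id]

lemma rdist_shift {n : ℕ} (c : ZMod n → V) (p q : ℝ) (k l : ℤ) :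
    rdist G n c (p + k * n) (q + l * n) = rdist G n c p q := by
  have hfloor : ∀ (r : ℝ) (m : ℤ), ((⌊r + m * (n : ℝ)⌋ : ℤ) : ZMod n) = ((⌊r⌋ : ℤ) : ZMod n) := by
    intro r m
    have : r + m * (n : ℝ) = r + ((m * n : ℤ) : ℝ) := by push_cast; ring
    rw [this, Int.floor_add_intCast]
    push_cast
    simp
  have hfr : ∀ (r : ℝ) (m : ℤ), Int.fract (r + m * (n : ℝ)) = Int.fract r := by
    intro r m
    have : r + m * (n : ℝ) = r + ((m * n : ℤ) : ℝ) := by push_cast; ring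
    rw [this, Int.fract_add_intCast]
  rw [rdist_def, rdist_def]
  unfold corner corner'
  rw [hfloor p k, hfloor q l, hfr p k, hfr q l]

lemma rdist_symm (G : SimpleGraph V) (n : ℕ) (c : ZMod n → V) (p q : ℝ) :
    rdist G n c p q = rdist G n c q p := by
  have key : ∀ p q : ℝ, rdist G n c q p ≤ rdist G n c p q := by
    intro p q
    refine le_rdist ?_ ?_ ?_ ?_ ?_ ?_
    · calc rdist G n c q p
          ≤ Int.fract q + (G.dist (corner n c q) (corner n c p) : ℝ) + Int.fract p :=
            rdist_le₁ G n c q p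
        _ = Int.fract p + (G.dist (corner n c p) (corner n c q) : ℝ) + Int.fract q := by
            rw [SimpleGraph.dist_comm]; ring
    · calc rdist G n c q p
          ≤ (1 - Int.fract q) + (G.dist (corner' n c q) (corner n c p) : ℝ) + Int.fract p :=
            rdist_le₃ G n c q p
        _ = Int.fract p + (G.dist (corner n c p) (corner' n c q) : ℝ) + (1 - Int.fract q) := by
            rw [SimpleGraph.dist_comm]; ring
    · calc rdist G n c q p
          ≤ Int.fract q + (G.dist (corner n c q) (corner' n c p) : ℝ) + (1 - Int.fract p) :=
            rdist_le₂ G n c q p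
        _ = (1 - Int.fract p) + (G.dist (corner' n c p) (corner n c q) : ℝ) + Int.fract q := by
            rw [SimpleGraph.dist_comm]; ring
    · calc rdist G n c q p
          ≤ (1 - Int.fract q) + (G.dist (corner' n c q) (corner' n c p) : ℝ)
              + (1 - Int.fract p) := rdist_le₄ G n c q p
        _ = (1 - Int.fract p) + (G.dist (corner' n c p) (corner' n c q) : ℝ)
              + (1 - Int.fract q) := by rw [SimpleGraph.dist_comm]; ring
    · intro h1 h2
      calc rdist G n c q p ≤ |Int.fract q - Int.fract p| :=
            rdist_le_if₁ G n c q p ⟨h1.symm, h2.symm⟩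
        _ = |Int.fract p - Int.fract q| := abs_sub_comm _ _
    · intro h1 h2
      have : rdist G n c q p ≤ |Int.fract q + Int.fract p - 1| := by
        rw [rdist_def]
        refine le_trans (min_le_right _ _) (le_trans (min_le_right _ _) ?_)
        rw [if_pos ⟨h2.symm, h1.symm⟩]
      calc rdist G n c q p ≤ |Int.fract q + Int.fract p - 1| := this
        _ = |Int.fract p + Int.fract q - 1| := by rw [add_comm]
  exact le_antisymm (key q p) (key p q)

lemma rdist_le_if₂ (G : SimpleGraph V) (n : ℕ) (c : ZMod n → V) (p q : ℝ)
    (h : corner n c p = corner' n c q ∧ corner' n c p = corner n c q) :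
    rdist G n c p q ≤ |Int.fract p + Int.fract q - 1| := by
  rw [rdist_def]
  refine le_trans (min_le_right _ _) (le_trans (min_le_right _ _) ?_)
  rw [if_pos h]

end Bridge2
section Iso

variable {V : Type*} {G : SimpleGraph V}

/-- Vertex-level isometric cycle. -/
def VertexIso (G : SimpleGraph V) (n : ℕ) (F : ℤ → V) : Prop :=
  ∀ a b : ℤ, (G.dist (F a) (F b) : ℝ) = cdist n (a : ℝ) (b : ℝ)

lemma cdist_point_floor (n : ℕ) (p : ℝ) : cdist n p (⌊p⌋ : ℝ) ≤ Int.fract p := by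
  have h := cdist_le n p (⌊p⌋ : ℝ) 0
  have e : p - (⌊p⌋ : ℝ) + ((0 : ℤ) : ℝ) * (n : ℝ) = Int.fract p := by
    rw [Int.fract]; push_cast; ring
  rw [e, abs_of_nonneg (Int.fract_nonneg p)] at h
  exact h

lemma cdist_point_ceil (n : ℕ) (p : ℝ) : cdist n p ((⌊p⌋ : ℝ) + 1) ≤ 1 - Int.fract p := by
  have h := cdist_le n p ((⌊p⌋ : ℝ) + 1) 0
  have e : |p - ((⌊p⌋ : ℝ) + 1) + (0 : ℤ) * (n : ℝ)| = 1 - Int.fract p := by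
    push_cast
    rw [abs_of_nonpos (by have := Int.fract_lt_one p; rw [Int.fract] at this; linarith)]
    rw [Int.fract]; ring
  rw [e] at h; exact h

lemma cdist_eq_zero_dvd {n : ℕ} (hn : 0 < n) {a b : ℤ}
    (h : cdist n (a : ℝ) (b : ℝ) = 0) : ∃ k : ℤ, a - b + k * n = 0 := by
  obtain ⟨k, hk, he⟩ := exists_cdist_rep n hn a b
  refine ⟨k, ?_⟩
  rw [h] at he
  have : ((a - b + k * n : ℤ) : ℝ) = 0 := by
    push_cast
    rw [← abs_eq_zero]
    exact he.symm
  exact_mod_cast this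

/-- A vertex-isometric cycle is isometric on the geometric realization. -/
lemma isometric_of_vertexIso (hconn : G.Connected) {n : ℕ} (hn3 : 3 ≤ n) {F : ℤ → V}
    (hc : IsCycleZ G n F) (hiso : VertexIso G n F) :
    IsIsometricCycle G n (toCycle F n) := by
  intro p q
  have hn : 0 < n := by omega
  have hnR : (0 : ℝ) < n := by exact_mod_cast hn
  obtain ⟨hper, hadj⟩ := hc
  have hco : ∀ r : ℝ, corner n (toCycle F n) r = F ⌊r⌋ := corner_toCycle hn hper
  have hco' : ∀ r : ℝ, corner' n (toCycle F n) r = F (⌊r⌋ + 1) := corner'_toCycle hn hper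
  have hfl : ∀ r : ℝ, (⌊r⌋ : ℝ) + Int.fract r = r := fun r => by
    rw [Int.fract]; ring
  refine le_antisymm ?_ ?_
  · -- rdist ≤ cdist
    obtain ⟨k, hk, he⟩ := exists_cdist_rep n hn p q
    set q' : ℝ := q - k * n with hq'
    have hsh : rdist G n (toCycle F n) p q = rdist G n (toCycle F n) p q' := by
      have : q = q' + k * n := by rw [hq']; ring
      have e2 : p + ((0 : ℤ) : ℝ) * (n : ℝ) = p := by push_cast; ring
      calc rdist G n (toCycle F n) p q
          = rdist G n (toCycle F n) (p + ((0 : ℤ) : ℝ) * (n : ℝ)) (q' + k * n) := by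
            rw [e2, ← this]
        _ = rdist G n (toCycle F n) p q' := rdist_shift (toCycle F n) p q' 0 k
    have hval : cdist n p q = |p - q'| := by rw [he, hq']; ring_nf
    rw [hsh, hval]
    rcases lt_trichotomy ⌊p⌋ ⌊q'⌋ with hlt | heq | hgt
    · -- p below q'
      have h1 : rdist G n (toCycle F n) p q'
          ≤ (1 - Int.fract p) + (G.dist (corner' n (toCycle F n) p)
              (corner n (toCycle F n) q') : ℝ) + Int.fract q' := rdist_le₃ G n _ p q'
      have h2 : (G.dist (F (⌊p⌋ + 1)) (F ⌊q'⌋) : ℝ) ≤ (⌊q'⌋ : ℝ) - (⌊p⌋ + 1) := by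
        rw [hiso]
        have := cdist_le n ((⌊p⌋ + 1 : ℤ) : ℝ) ((⌊q'⌋ : ℤ) : ℝ) 0
        have habs : |((⌊p⌋ + 1 : ℤ) : ℝ) - ((⌊q'⌋ : ℤ) : ℝ) + (0 : ℤ) * (n : ℝ)|
            = (⌊q'⌋ : ℝ) - (⌊p⌋ + 1) := by
          push_cast
          rw [abs_of_nonpos (by push_cast; have : (⌊p⌋ : ℝ) + 1 ≤ ⌊q'⌋ := by exact_mod_cast hlt
                                linarith)]
          ring
        rw [habs] at this
        push_cast at this ⊢
        linarith
      rw [hco', hco] at h1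
      have hple : p ≤ q' := by
        have h3 := hfl p; have h4 := hfl q'
        have h5 : (⌊p⌋ : ℝ) + 1 ≤ ⌊q'⌋ := by exact_mod_cast hlt
        have := Int.fract_lt_one p; have := Int.fract_nonneg q'
        linarith
      rw [abs_of_nonpos (by linarith)]
      have h3 := hfl p; have h4 := hfl q'
      calc rdist G n (toCycle F n) p q' ≤ _ := h1
        _ ≤ -(p - q') := by push_cast at h2 ⊢; linarith
    · -- same edge
      have hcc : corner n (toCycle F n) p = corner n (toCycle F n) q' ∧
          corner' n (toCycle F n) p = corner' n (toCycle F n) q' := by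
        rw [hco, hco, hco', hco', heq]; exact ⟨rfl, rfl⟩
      have h1 := rdist_le_if₁ G n (toCycle F n) p q' hcc
      have h2 : Int.fract p - Int.fract q' = p - q' := by
        have h3 := hfl p; have h4 := hfl q'
        have h5 : (⌊p⌋ : ℝ) = (⌊q'⌋ : ℝ) := by exact_mod_cast heq
        rw [Int.fract, Int.fract]
        linarith
      rw [h2] at h1
      exact h1
    · -- p above q'
      have h1 : rdist G n (toCycle F n) p q'
          ≤ Int.fract p + (G.dist (corner n (toCycle F n) p)
              (corner' n (toCycle F n) q') : ℝ) + (1 - Int.fract q') := rdist_le₂ G n _ p q'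
      have h2 : (G.dist (F ⌊p⌋) (F (⌊q'⌋ + 1)) : ℝ) ≤ (⌊p⌋ : ℝ) - (⌊q'⌋ + 1) := by
        rw [hiso]
        have := cdist_le n ((⌊p⌋ : ℤ) : ℝ) ((⌊q'⌋ + 1 : ℤ) : ℝ) 0
        have habs : |((⌊p⌋ : ℤ) : ℝ) - ((⌊q'⌋ + 1 : ℤ) : ℝ) + (0 : ℤ) * (n : ℝ)|
            = (⌊p⌋ : ℝ) - (⌊q'⌋ + 1) := by
          push_cast
          rw [abs_of_nonneg (by push_cast; have : (⌊q'⌋ : ℝ) + 1 ≤ ⌊p⌋ := by exact_mod_cast hgt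
                                linarith)]
          ring
        rw [habs] at this
        push_cast at this ⊢
        linarith
      rw [hco, hco'] at h1
      have hple : q' ≤ p := by
        have h3 := hfl p; have h4 := hfl q'
        have h5 : (⌊q'⌋ : ℝ) + 1 ≤ ⌊p⌋ := by exact_mod_cast hgt
        have := Int.fract_lt_one q'; have := Int.fract_nonneg p
        linarith
      rw [abs_of_nonneg (by linarith)]
      have h3 := hfl p; have h4 := hfl q'
      calc rdist G n (toCycle F n) p q' ≤ _ := h1
        _ ≤ p - q' := by push_cast at h2 ⊢; linarith
  · -- cdist ≤ rdist
    have hs0 := Int.fract_nonneg p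
    have ht0 := Int.fract_nonneg q
    have hs1 := Int.fract_lt_one p
    have ht1 := Int.fract_lt_one q
    refine le_rdist ?_ ?_ ?_ ?_ ?_ ?_
    · rw [hco, hco, hiso]
      calc cdist n p q ≤ cdist n p (⌊p⌋ : ℝ) + cdist n (⌊p⌋ : ℝ) q := cdist_triangle hn _ _ _
        _ ≤ cdist n p (⌊p⌋ : ℝ) + (cdist n (⌊p⌋ : ℝ) (⌊q⌋ : ℝ) + cdist n (⌊q⌋ : ℝ) q) := by
            have := cdist_triangle hn ((⌊p⌋ : ℤ) : ℝ) ((⌊q⌋ : ℤ) : ℝ) q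
            linarith
        _ ≤ Int.fract p + cdist n (⌊p⌋ : ℝ) (⌊q⌋ : ℝ) + Int.fract q := by
            have h1 := cdist_point_floor n p
            have h2 := cdist_point_floor n q
            have h3 : cdist n (⌊q⌋ : ℝ) q = cdist n q (⌊q⌋ : ℝ) := cdist_symm n _ _
            linarith
    · rw [hco, hco', hiso]
      have hstep : cdist n p q ≤ Int.fract p + cdist n (⌊p⌋ : ℝ) ((⌊q⌋ : ℝ) + 1)
          + (1 - Int.fract q) := by
        have t1 := cdist_triangle hn p ((⌊p⌋ : ℤ) : ℝ) q
        have t2 := cdist_triangle hn ((⌊p⌋ : ℤ) : ℝ) ((⌊q⌋ : ℝ) + 1) q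
        have h1 := cdist_point_floor n p
        have h2 := cdist_point_ceil n q
        have h3 : cdist n ((⌊q⌋ : ℝ) + 1) q = cdist n q ((⌊q⌋ : ℝ) + 1) := cdist_symm n _ _
        linarith
      have e : ((⌊q⌋ + 1 : ℤ) : ℝ) = (⌊q⌋ : ℝ) + 1 := by push_cast; ring
      rw [e]
      exact hstep
    · rw [hco', hco, hiso]
      have hstep : cdist n p q ≤ (1 - Int.fract p) + cdist n ((⌊p⌋ : ℝ) + 1) (⌊q⌋ : ℝ)
          + Int.fract q := by
        have t1 := cdist_triangle hn p ((⌊p⌋ : ℝ) + 1) q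
        have t2 := cdist_triangle hn ((⌊p⌋ : ℝ) + 1) ((⌊q⌋ : ℤ) : ℝ) q
        have h1 := cdist_point_ceil n p
        have h2 := cdist_point_floor n q
        have h3 : cdist n (⌊q⌋ : ℝ) q = cdist n q (⌊q⌋ : ℝ) := cdist_symm n _ _
        linarith
      have e : ((⌊p⌋ + 1 : ℤ) : ℝ) = (⌊p⌋ : ℝ) + 1 := by push_cast; ring
      rw [e]
      exact hstep
    · rw [hco', hco', hiso]
      have hstep : cdist n p q ≤ (1 - Int.fract p) + cdist n ((⌊p⌋ : ℝ) + 1) ((⌊q⌋ : ℝ) + 1)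
          + (1 - Int.fract q) := by
        have t1 := cdist_triangle hn p ((⌊p⌋ : ℝ) + 1) q
        have t2 := cdist_triangle hn ((⌊p⌋ : ℝ) + 1) ((⌊q⌋ : ℝ) + 1) q
        have h1 := cdist_point_ceil n p
        have h2 := cdist_point_ceil n q
        have h3 : cdist n ((⌊q⌋ : ℝ) + 1) q = cdist n q ((⌊q⌋ : ℝ) + 1) := cdist_symm n _ _
        linarith
      have e : ((⌊p⌋ + 1 : ℤ) : ℝ) = (⌊p⌋ : ℝ) + 1 := by push_cast; ring
      have e' : ((⌊q⌋ + 1 : ℤ) : ℝ) = (⌊q⌋ : ℝ) + 1 := by push_cast; ring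
      rw [e, e']
      exact hstep
    · intro h1 _
      rw [hco, hco] at h1
      have hz : cdist n ((⌊p⌋ : ℤ) : ℝ) ((⌊q⌋ : ℤ) : ℝ) = 0 := by
        rw [← hiso, h1]
        simp
      obtain ⟨k, hk⟩ := cdist_eq_zero_dvd hn hz
      have : cdist n p q ≤ |p - q + k * n| := cdist_le n p q k
      have e : p - q + k * (n : ℝ) = Int.fract p - Int.fract q := by
        have h3 := hfl p; have h4 := hfl q
        have : ((⌊p⌋ - ⌊q⌋ + k * n : ℤ) : ℝ) = 0 := by exact_mod_cast hk
        push_cast at this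
        linarith
      rw [e] at this
      exact this
    · intro h1 h2
      rw [hco, hco'] at h1
      rw [hco', hco] at h2
      have hz1 : cdist n ((⌊p⌋ : ℤ) : ℝ) ((⌊q⌋ + 1 : ℤ) : ℝ) = 0 := by
        rw [← hiso]
        rw [h1]
        simp
      have hz2 : cdist n ((⌊p⌋ + 1 : ℤ) : ℝ) ((⌊q⌋ : ℤ) : ℝ) = 0 := by
        rw [← hiso]
        rw [h2]
        simp
      obtain ⟨k1, hk1⟩ := cdist_eq_zero_dvd hn hz1
      obtain ⟨k2, hk2⟩ := cdist_eq_zero_dvd hn hz2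
      -- ⌊p⌋ - ⌊q⌋ - 1 + k1 n = 0 and ⌊p⌋ - ⌊q⌋ + 1 + k2 n = 0 ⟹ (k2 - k1) n = 2
      exfalso
      have : (k1 - k2) * (n : ℤ) = 2 := by linarith [hk1, hk2]
      have hdvd : (n : ℤ) ∣ 2 := Dvd.intro_left _ this
      have := Int.le_of_dvd (by norm_num) hdvd
      omega

/-- Easy direction: a realization-isometric cycle is vertex-isometric. -/
lemma vertexIso_of_isometric (hconn : G.Connected) {n : ℕ} (hn : 0 < n) {F : ℤ → V}
    (hc : IsCycleZ G n F) (hiso : IsIsometricCycle G n (toCycle F n)) :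
    VertexIso G n F := by
  intro a b
  obtain ⟨hper, hadj⟩ := hc
  have hco : ∀ r : ℝ, corner n (toCycle F n) r = F ⌊r⌋ := corner_toCycle hn hper
  have hco' : ∀ r : ℝ, corner' n (toCycle F n) r = F (⌊r⌋ + 1) := corner'_toCycle hn hper
  have hfa : (⌊(a : ℝ)⌋ : ℤ) = a := Int.floor_intCast a
  have hfb : (⌊(b : ℝ)⌋ : ℤ) = b := Int.floor_intCast b
  have hsa : Int.fract (a : ℝ) = 0 := Int.fract_intCast a
  have hsb : Int.fract (b : ℝ) = 0 := Int.fract_intCast b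
  have key : rdist G n (toCycle F n) (a : ℝ) (b : ℝ) = (G.dist (F a) (F b) : ℝ) := by
    refine le_antisymm ?_ ?_
    · have h := rdist_le₁ G n (toCycle F n) (a : ℝ) (b : ℝ)
      rw [hco, hco, hfa, hfb, hsa, hsb] at h
      linarith
    · have hd1 : (G.dist (F a) (F b) : ℝ) ≤ (G.dist (F a) (F (b + 1)) : ℝ) + 1 := by
        have ht := hconn.dist_triangle (u := F a) (v := F (b + 1)) (w := F b)
        have h1 : G.dist (F (b + 1)) (F b) = 1 := by
          rw [SimpleGraph.dist_comm]
          exact SimpleGraph.dist_eq_one_iff_adj.mpr (hadj b)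
        rw [h1] at ht
        exact_mod_cast ht
      have hd2 : (G.dist (F a) (F b) : ℝ) ≤ (G.dist (F (a + 1)) (F b) : ℝ) + 1 := by
        have ht := hconn.dist_triangle (u := F a) (v := F (a + 1)) (w := F b)
        have h1 : G.dist (F a) (F (a + 1)) = 1 :=
          SimpleGraph.dist_eq_one_iff_adj.mpr (hadj a)
        rw [h1] at ht
        have : G.dist (F a) (F b) ≤ 1 + G.dist (F (a + 1)) (F b) := ht
        push_cast
        exact_mod_cast by linarith [this]
      have hd4 : (G.dist (F a) (F b) : ℝ) ≤ (G.dist (F (a + 1)) (F (b + 1)) : ℝ) + 2 := by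
        have ht := hconn.dist_triangle (u := F a) (v := F (a + 1)) (w := F b)
        have ht2 := hconn.dist_triangle (u := F (a + 1)) (v := F (b + 1)) (w := F b)
        have h1 : G.dist (F a) (F (a + 1)) = 1 :=
          SimpleGraph.dist_eq_one_iff_adj.mpr (hadj a)
        have h2 : G.dist (F (b + 1)) (F b) = 1 := by
          rw [SimpleGraph.dist_comm]
          exact SimpleGraph.dist_eq_one_iff_adj.mpr (hadj b)
        rw [h1] at ht; rw [h2] at ht2
        push_cast
        have := le_trans ht (by linarith [ht2] : 1 + G.dist (F (a+1)) (F b)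
            ≤ 1 + (G.dist (F (a+1)) (F (b+1)) + 1))
        exact_mod_cast by linarith [this]
      refine le_rdist ?_ ?_ ?_ ?_ ?_ ?_
      · rw [hco, hco, hfa, hfb, hsa, hsb]; linarith
      · rw [hco, hco', hfa, hfb, hsa, hsb]; linarith
      · rw [hco', hco, hfa, hfb, hsa, hsb]; linarith
      · rw [hco', hco', hfa, hfb, hsa, hsb]; linarith
      · intro h1 _
        rw [hco, hco, hfa, hfb] at h1
        rw [hsa, hsb, h1]
        simp
      · intro h1 h2
        rw [hco, hco', hfa, hfb] at h1
        rw [hco', hco, hfa, hfb] at h2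
        rw [hsa, hsb]
        have : (G.dist (F a) (F b) : ℝ) ≤ 1 := by
          rw [h1]
          have h3 : G.dist (F (b + 1)) (F b) = 1 := by
            rw [SimpleGraph.dist_comm]
            exact SimpleGraph.dist_eq_one_iff_adj.mpr (hadj b)
          exact_mod_cast h3.le
        calc (G.dist (F a) (F b) : ℝ) ≤ 1 := this
          _ = |(0 : ℝ) + 0 - 1| := by norm_num
  rw [← key, hiso]

/-- `rdist` is bounded below by corner distance minus 2. -/
lemma rdist_ge_corner (hconn : G.Connected) {n : ℕ} {c : ZMod n → V}
    (hc : IsCycle G n c) (p q : ℝ) :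
    (G.dist (corner n c p) (corner n c q) : ℝ) - 2 ≤ rdist G n c p q := by
  have hs0 := Int.fract_nonneg p
  have ht0 := Int.fract_nonneg q
  have hs1 := Int.fract_lt_one p
  have ht1 := Int.fract_lt_one q
  have hadjp : G.Adj (corner n c p) (corner' n c p) := hc _
  have hadjq : G.Adj (corner n c q) (corner' n c q) := hc _
  have e1p : G.dist (corner n c p) (corner' n c p) = 1 :=
    SimpleGraph.dist_eq_one_iff_adj.mpr hadjp
  have e1q : G.dist (corner n c q) (corner' n c q) = 1 :=
    SimpleGraph.dist_eq_one_iff_adj.mpr hadjq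
  have h2 : G.dist (corner n c p) (corner n c q)
      ≤ G.dist (corner n c p) (corner' n c q) + 1 := by
    have ht := hconn.dist_triangle (u := corner n c p) (v := corner' n c q) (w := corner n c q)
    have h1 : G.dist (corner' n c q) (corner n c q) = 1 := by
      rw [SimpleGraph.dist_comm]; exact e1q
    omega
  have h3 : G.dist (corner n c p) (corner n c q)
      ≤ G.dist (corner' n c p) (corner n c q) + 1 := by
    have ht := hconn.dist_triangle (u := corner n c p) (v := corner' n c p) (w := corner n c q)
    omega
  have h4 : G.dist (corner n c p) (corner n c q)
      ≤ G.dist (corner' n c p) (corner' n c q) + 2 := by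
    have ht := hconn.dist_triangle (u := corner n c p) (v := corner' n c p) (w := corner n c q)
    have ht2 := hconn.dist_triangle (u := corner' n c p) (v := corner' n c q)
      (w := corner n c q)
    have h1 : G.dist (corner' n c q) (corner n c q) = 1 := by
      rw [SimpleGraph.dist_comm]; exact e1q
    omega
  refine le_rdist ?_ ?_ ?_ ?_ ?_ ?_
  · linarith
  · have : (G.dist (corner n c p) (corner n c q) : ℝ)
        ≤ (G.dist (corner n c p) (corner' n c q) : ℝ) + 1 := by exact_mod_cast h2
    linarith
  · have : (G.dist (corner n c p) (corner n c q) : ℝ)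
        ≤ (G.dist (corner' n c p) (corner n c q) : ℝ) + 1 := by exact_mod_cast h3
    linarith
  · have : (G.dist (corner n c p) (corner n c q) : ℝ)
        ≤ (G.dist (corner' n c p) (corner' n c q) : ℝ) + 2 := by exact_mod_cast h4
    linarith
  · intro h1 _
    rw [h1, SimpleGraph.dist_self]
    have := abs_nonneg (Int.fract p - Int.fract q)
    push_cast
    linarith
  · intro h1 _
    have hD1 : (G.dist (corner n c p) (corner n c q) : ℝ) ≤ 1 := by
      rw [h1, SimpleGraph.dist_comm]
      exact_mod_cast e1q.le
    have := abs_nonneg (Int.fract p + Int.fract q - 1)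
    linarith

end Iso
section BoxProdDist

variable {V W : Type*} {G : SimpleGraph V} {H : SimpleGraph W}

lemma boxProd_dist_le_walk (hG : G.Connected) (hH : H.Connected) :
    ∀ {x y : V × W} (w : (G.boxProd H).Walk x y),
      G.dist x.1 y.1 + H.dist x.2 y.2 ≤ w.length := by
  intro x y w
  induction w with
  | nil => simp
  | @cons x z y h w ih =>
      rw [SimpleGraph.Walk.length_cons]
      rcases SimpleGraph.boxProd_adj.mp h with ⟨h1, h2⟩ | ⟨h1, h2⟩
      · have d1 : G.dist x.1 y.1 ≤ 1 + G.dist z.1 y.1 := by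
          have ht := hG.dist_triangle (u := x.1) (v := z.1) (w := y.1)
          have := SimpleGraph.dist_eq_one_iff_adj.mpr h1
          omega
        have d2 : H.dist x.2 y.2 = H.dist z.2 y.2 := by rw [h2]
        omega
      · have d1 : G.dist x.1 y.1 = G.dist z.1 y.1 := by rw [h2]
        have d2 : H.dist x.2 y.2 ≤ 1 + H.dist z.2 y.2 := by
          have ht := hH.dist_triangle (u := x.2) (v := z.2) (w := y.2)
          have := SimpleGraph.dist_eq_one_iff_adj.mpr h1
          omega
        omega

lemma boxProd_dist (hG : G.Connected) (hH : H.Connected) (x y : V × W) :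
    (G.boxProd H).dist x y = G.dist x.1 y.1 + H.dist x.2 y.2 := by
  refine le_antisymm ?_ ?_
  · obtain ⟨w1, hw1⟩ := hG.exists_walk_length_eq_dist x.1 y.1
    obtain ⟨w2, hw2⟩ := hH.exists_walk_length_eq_dist x.2 y.2
    have hlen : ((w1.boxProdLeft H x.2).append
        (SimpleGraph.Walk.boxProdRight G y.1 w2)).length = w1.length + w2.length := by
      rw [SimpleGraph.Walk.length_append]
      congr 1
      · exact SimpleGraph.Walk.length_map _ _
      · exact SimpleGraph.Walk.length_map _ _
    calc (G.boxProd H).dist x y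
        ≤ ((w1.boxProdLeft H x.2).append (SimpleGraph.Walk.boxProdRight G y.1 w2)).length :=
          SimpleGraph.dist_le _
      _ = G.dist x.1 y.1 + H.dist x.2 y.2 := by rw [hlen, hw1, hw2]
  · obtain ⟨w, hw⟩ := (hG.boxProd hH).exists_walk_length_eq_dist x y
    rw [← hw]
    exact boxProd_dist_le_walk hG hH w

end BoxProdDist
section Condense

variable {U : Type*} {Q : SimpleGraph U}

/-- Number of non-lazy steps of `f` among the first `m` steps. -/
def nmoves (f : ℕ → U) (m : ℕ) : ℕ :=
  ((Finset.range m).filter fun j => f (j + 1) ≠ f j).card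

lemma nmoves_zero (f : ℕ → U) : nmoves f 0 = 0 := by simp [nmoves]

lemma nmoves_succ (f : ℕ → U) (m : ℕ) :
    nmoves f (m + 1) = nmoves f m + (if f (m + 1) ≠ f m then 1 else 0) := by
  unfold nmoves
  rw [Finset.range_add_one, Finset.filter_insert]
  split_ifs with h
  · rw [Finset.card_insert_of_notMem (by simp)]
  · simp

lemma nmoves_mono (f : ℕ → U) {a b : ℕ} (h : a ≤ b) : nmoves f a ≤ nmoves f b :=
  Finset.card_le_card (Finset.filter_subset_filter _ (Finset.range_subset_range.mpr h))

lemma nmoves_le_add (f : ℕ → U) (a t : ℕ) : nmoves f (a + t) ≤ nmoves f a + t := by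
  induction t with
  | zero => simp
  | succ t ih =>
      rw [show a + (t + 1) = (a + t) + 1 from rfl, nmoves_succ]
      split_ifs <;> omega

lemma nmoves_block (f : ℕ → U) {a b : ℕ} (hab : a ≤ b) (h : nmoves f b = nmoves f a) :
    f b = f a := by
  obtain ⟨t, rfl⟩ := Nat.exists_eq_add_of_le hab
  induction t with
  | zero => rfl
  | succ t ih =>
      have h1 : nmoves f (a + t) = nmoves f a := by
        have m1 := nmoves_mono f (show a ≤ a + t by omega)
        have m2 := nmoves_mono f (show a + t ≤ a + (t + 1) by omega)
        omega
      have h2 : f (a + t + 1) = f (a + t) := by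
        by_contra hne
        have := nmoves_succ f (a + t)
        rw [if_pos hne] at this
        have : nmoves f (a + (t + 1)) = nmoves f (a + t) + 1 := this
        omega
      rw [show a + (t + 1) = a + t + 1 from rfl, h2]
      exact ih (by omega) h1

lemma nmoves_period {n : ℕ} {f : ℕ → U} (hper : ∀ m : ℕ, f (m + n) = f m) (m : ℕ) :
    nmoves f (m + n) = nmoves f m + nmoves f n := by
  induction m with
  | zero => simp [nmoves_zero]
  | succ m ih =>
      have e : m + 1 + n = (m + n) + 1 := by omega
      rw [e, nmoves_succ, ih, nmoves_succ]
      have e1 : f (m + n + 1) = f (m + 1) := by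
        have := hper (m + 1)
        rw [show m + 1 + n = m + n + 1 by omega] at this
        exact this
      rw [e1, hper m]
      ring

lemma nmoves_mul {n : ℕ} {f : ℕ → U} (hper : ∀ m : ℕ, f (m + n) = f m) (k : ℕ) :
    nmoves f (k * n) = k * nmoves f n := by
  induction k with
  | zero => simp [nmoves_zero]
  | succ k ih =>
      have e : (k + 1) * n = k * n + n := by ring
      rw [e, nmoves_period hper, ih]
      ring

lemma dist_le_nmoves (hconn : Q.Connected) {f : ℕ → U}
    (hlazy : ∀ j : ℕ, f (j + 1) = f j ∨ Q.Adj (f j) (f (j + 1))) (a t : ℕ) :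
    Q.dist (f a) (f (a + t)) + nmoves f a ≤ nmoves f (a + t) := by
  induction t with
  | zero => simp
  | succ t ih =>
      have e : a + (t + 1) = (a + t) + 1 := rfl
      rw [e, nmoves_succ]
      rcases hlazy (a + t) with hl | hl
      · rw [hl, if_neg (by simp [hl])]
        simpa using ih
      · have hne : f (a + t + 1) ≠ f (a + t) := hl.ne'
        rw [if_pos hne]
        have ht := hconn.dist_triangle (u := f a) (v := f (a + t)) (w := f (a + t + 1))
        have h1 : Q.dist (f (a + t)) (f (a + t + 1)) = 1 :=
          SimpleGraph.dist_eq_one_iff_adj.mpr hl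
        omega

section Iota

variable {n : ℕ} {f : ℕ → U}

lemma nmoves_unbounded (hper : ∀ m : ℕ, f (m + n) = f m) (hn1 : 0 < nmoves f n) (k : ℕ) :
    ∃ m : ℕ, k ≤ nmoves f m :=
  ⟨k * n, by rw [nmoves_mul hper]; exact Nat.le_mul_of_pos_right k hn1⟩

/-- The first time at which `k` moves have been made. -/
def iota (hper : ∀ m : ℕ, f (m + n) = f m) (hn1 : 0 < nmoves f n) (k : ℕ) : ℕ :=
  Nat.find (nmoves_unbounded hper hn1 k)

lemma iota_spec (hper : ∀ m : ℕ, f (m + n) = f m) (hn1 : 0 < nmoves f n) (k : ℕ) :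
    nmoves f (iota hper hn1 k) = k := by
  have h1 : k ≤ nmoves f (iota hper hn1 k) := Nat.find_spec (nmoves_unbounded hper hn1 k)
  rcases Nat.eq_zero_or_pos (iota hper hn1 k) with h0 | h0
  · rw [h0] at h1 ⊢
    rw [nmoves_zero] at h1 ⊢
    omega
  · have h2 : ¬ k ≤ nmoves f (iota hper hn1 k - 1) :=
      Nat.find_min (nmoves_unbounded hper hn1 k) (Nat.sub_lt h0 one_pos)
    have h3 := nmoves_le_add f (iota hper hn1 k - 1) 1
    rw [show iota hper hn1 k - 1 + 1 = iota hper hn1 k by omega] at h3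
    omega

lemma iota_le (hper : ∀ m : ℕ, f (m + n) = f m) (hn1 : 0 < nmoves f n) {k m : ℕ}
    (h : k ≤ nmoves f m) : iota hper hn1 k ≤ m :=
  Nat.find_min' (nmoves_unbounded hper hn1 k) h

/-- The condensed walk. -/
def cond (hper : ∀ m : ℕ, f (m + n) = f m) (hn1 : 0 < nmoves f n) (k : ℕ) : U :=
  f (iota hper hn1 k)

lemma cond_eq (hper : ∀ m : ℕ, f (m + n) = f m) (hn1 : 0 < nmoves f n) (m : ℕ) :
    cond hper hn1 (nmoves f m) = f m := by
  have h1 : iota hper hn1 (nmoves f m) ≤ m := iota_le hper hn1 (le_refl _)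
  exact (nmoves_block f h1 (by rw [iota_spec])).symm

lemma cond_adj (hlazy : ∀ j : ℕ, f (j + 1) = f j ∨ Q.Adj (f j) (f (j + 1)))
    (hper : ∀ m : ℕ, f (m + n) = f m) (hn1 : 0 < nmoves f n) (k : ℕ) :
    Q.Adj (cond hper hn1 k) (cond hper hn1 (k + 1)) := by
  have hm1 : nmoves f (iota hper hn1 (k + 1)) = k + 1 := iota_spec hper hn1 (k + 1)
  have hmpos : 0 < iota hper hn1 (k + 1) := by
    rcases Nat.eq_zero_or_pos (iota hper hn1 (k + 1)) with h0 | h0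
    · rw [h0, nmoves_zero] at hm1; omega
    · exact h0
  obtain ⟨m', heq⟩ : ∃ m', iota hper hn1 (k + 1) = m' + 1 :=
    ⟨iota hper hn1 (k + 1) - 1, by omega⟩
  rw [heq] at hm1
  have h2 : ¬ (k + 1) ≤ nmoves f m' :=
    Nat.find_min (nmoves_unbounded hper hn1 (k + 1))
      (show m' < iota hper hn1 (k + 1) by omega)
  have h3 := nmoves_le_add f m' 1
  have hm' : nmoves f m' = k := by
    rw [nmoves_succ] at hm1
    split_ifs at hm1 <;> omega
  have hmove : f (m' + 1) ≠ f m' := by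
    rw [nmoves_succ] at hm1
    by_contra hc
    rw [if_neg (by simpa using hc)] at hm1
    omega
  have hadj : Q.Adj (f m') (f (m' + 1)) := (hlazy m').resolve_left hmove
  have hck : cond hper hn1 k = f m' := by
    have h4 : iota hper hn1 k ≤ m' := iota_le hper hn1 (by omega)
    exact (nmoves_block f h4 (by rw [iota_spec, hm'])).symm
  have hck1 : cond hper hn1 (k + 1) = f (m' + 1) := by
    show f (iota hper hn1 (k + 1)) = f (m' + 1)
    rw [heq]
  rw [hck, hck1]
  exact hadj

lemma cond_add_mul (hper : ∀ m : ℕ, f (m + n) = f m) (hn1 : 0 < nmoves f n) (k t : ℕ) :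
    cond hper hn1 (k + t * nmoves f n) = cond hper hn1 k := by
  induction t with
  | zero => simp
  | succ t ih =>
      have key : ∀ k, cond hper hn1 (k + nmoves f n) = cond hper hn1 k := by
        intro k
        have h1 : nmoves f (iota hper hn1 k + n) = k + nmoves f n := by
          rw [nmoves_period hper, iota_spec]
        calc cond hper hn1 (k + nmoves f n) = cond hper hn1 (nmoves f (iota hper hn1 k + n)) := by
              rw [h1]
          _ = f (iota hper hn1 k + n) := cond_eq hper hn1 _
          _ = f (iota hper hn1 k) := hper _
          _ = cond hper hn1 k := rfl
      have e : k + (t + 1) * nmoves f n = (k + t * nmoves f n) + nmoves f n := by ring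
      rw [e, key, ih]

/-- The condensed walk as a `ℤ`-indexed periodic cycle. -/
def condZ (hper : ∀ m : ℕ, f (m + n) = f m) (hn1 : 0 < nmoves f n) (a : ℤ) : U :=
  cond hper hn1 (a % (nmoves f n : ℤ)).toNat

lemma condZ_nat (hper : ∀ m : ℕ, f (m + n) = f m) (hn1 : 0 < nmoves f n) (m : ℕ) :
    condZ hper hn1 (m : ℤ) = cond hper hn1 m := by
  unfold condZ
  have h1 : ((m : ℤ) % (nmoves f n : ℤ)).toNat = m % nmoves f n := by
    rw [← Int.natCast_mod, Int.toNat_natCast]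
  rw [h1]
  conv_rhs => rw [show m = m % nmoves f n + (m / nmoves f n) * nmoves f n by
    rw [Nat.mod_add_div']]
  rw [cond_add_mul]

lemma condZ_isCycleZ (hlazy : ∀ j : ℕ, f (j + 1) = f j ∨ Q.Adj (f j) (f (j + 1)))
    (hper : ∀ m : ℕ, f (m + n) = f m) (hn1 : 0 < nmoves f n) :
    IsCycleZ Q (nmoves f n) (condZ hper hn1) := by
  constructor
  · intro i
    unfold condZ
    congr 1
    have e : i + ((nmoves f n : ℕ) : ℤ) = i + ((nmoves f n : ℕ) : ℤ) * 1 := by ring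
    rw [e, Int.add_mul_emod_self_left]
  · intro a
    have hpos : (0 : ℤ) < ((nmoves f n : ℕ) : ℤ) := by exact_mod_cast hn1
    have h0 : 0 ≤ a % ((nmoves f n : ℕ) : ℤ) := Int.emod_nonneg a hpos.ne'
    have h1 : a % ((nmoves f n : ℕ) : ℤ) < ((nmoves f n : ℕ) : ℤ) := Int.emod_lt_of_pos a hpos
    have hmm : (a % ((nmoves f n : ℕ) : ℤ) + 1) % ((nmoves f n : ℕ) : ℤ)
        = (a + 1) % ((nmoves f n : ℕ) : ℤ) := Int.emod_add_emod a _ 1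
    have hca : condZ hper hn1 a = cond hper hn1 (a % ((nmoves f n : ℕ) : ℤ)).toNat := rfl
    rcases lt_or_eq_of_le (by omega : a % ((nmoves f n : ℕ) : ℤ) + 1 ≤ ((nmoves f n : ℕ) : ℤ))
      with hlt | hge
    · have h2 : (a + 1) % ((nmoves f n : ℕ) : ℤ) = a % ((nmoves f n : ℕ) : ℤ) + 1 := by
        rw [← hmm, Int.emod_eq_of_lt (by omega) hlt]
      have hca1 : condZ hper hn1 (a + 1)
          = cond hper hn1 ((a % ((nmoves f n : ℕ) : ℤ)).toNat + 1) := by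
        unfold condZ
        rw [h2]
        congr 1
        omega
      rw [hca, hca1]
      exact cond_adj hlazy hper hn1 _
    · have h2 : (a + 1) % ((nmoves f n : ℕ) : ℤ) = 0 := by
        rw [← hmm, hge, Int.emod_self]
      have hca1 : condZ hper hn1 (a + 1) = cond hper hn1 0 := by
        unfold condZ
        rw [h2]
        rfl
      have hcp : cond hper hn1 ((a % ((nmoves f n : ℕ) : ℤ)).toNat + 1) = cond hper hn1 0 := by
        have e : (a % ((nmoves f n : ℕ) : ℤ)).toNat + 1 = 0 + 1 * nmoves f n := by omega
        rw [e, cond_add_mul]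
      rw [hca, hca1, ← hcp]
      exact cond_adj hlazy hper hn1 _

end Iota

end Condense
section ProductProj

variable {V W : Type*} {G : SimpleGraph V} {H : SimpleGraph W}

/-- First-coordinate projection of a product cycle. -/
def f₁ (F : ℤ → V × W) : ℕ → V := fun m => (F m).1

/-- Second-coordinate projection of a product cycle. -/
def f₂ (F : ℤ → V × W) : ℕ → W := fun m => (F m).2

lemma lazy₁ {n : ℕ} {F : ℤ → V × W} (hF : IsCycleZ (G.boxProd H) n F) (j : ℕ) :
    f₁ F (j + 1) = f₁ F j ∨ G.Adj (f₁ F j) (f₁ F (j + 1)) := by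
  have h := hF.2 (j : ℤ)
  have e : ((j : ℤ) + 1) = ((j + 1 : ℕ) : ℤ) := by push_cast; ring
  rw [e] at h
  rcases SimpleGraph.boxProd_adj.mp h with ⟨h1, _⟩ | ⟨_, h2⟩
  · exact Or.inr h1
  · exact Or.inl h2.symm

lemma lazy₂ {n : ℕ} {F : ℤ → V × W} (hF : IsCycleZ (G.boxProd H) n F) (j : ℕ) :
    f₂ F (j + 1) = f₂ F j ∨ H.Adj (f₂ F j) (f₂ F (j + 1)) := by
  have h := hF.2 (j : ℤ)
  have e : ((j : ℤ) + 1) = ((j + 1 : ℕ) : ℤ) := by push_cast; ring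
  rw [e] at h
  rcases SimpleGraph.boxProd_adj.mp h with ⟨_, h2⟩ | ⟨h1, _⟩
  · exact Or.inl h2.symm
  · exact Or.inr h1

lemma per₁ {n : ℕ} {F : ℤ → V × W} (hF : IsCycleZ (G.boxProd H) n F) (m : ℕ) :
    f₁ F (m + n) = f₁ F m := by
  have h := hF.1 (m : ℤ)
  have e : ((m : ℤ) + (n : ℤ)) = ((m + n : ℕ) : ℤ) := by push_cast; ring
  rw [e] at h
  exact congrArg Prod.fst h

lemma per₂ {n : ℕ} {F : ℤ → V × W} (hF : IsCycleZ (G.boxProd H) n F) (m : ℕ) :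
    f₂ F (m + n) = f₂ F m := by
  have h := hF.1 (m : ℤ)
  have e : ((m : ℤ) + (n : ℤ)) = ((m + n : ℕ) : ℤ) := by push_cast; ring
  rw [e] at h
  exact congrArg Prod.snd h

lemma nmoves_sum {n : ℕ} {F : ℤ → V × W} (hF : IsCycleZ (G.boxProd H) n F) (m : ℕ) :
    nmoves (f₁ F) m + nmoves (f₂ F) m = m := by
  have key : ∀ j, (f₂ F (j + 1) ≠ f₂ F j) ↔ ¬ (f₁ F (j + 1) ≠ f₁ F j) := by
    intro j
    have h := hF.2 (j : ℤ)
    have e : ((j : ℤ) + 1) = ((j + 1 : ℕ) : ℤ) := by push_cast; ring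
    rw [e] at h
    rcases SimpleGraph.boxProd_adj.mp h with ⟨h1, h2⟩ | ⟨h1, h2⟩
    · constructor
      · intro hc; exact absurd h2.symm hc
      · intro hc; exact absurd h1.ne' (by exact hc)
    · constructor
      · intro _ hc; exact hc h2.symm
      · intro _; exact h1.ne'
  have e1 : nmoves (f₂ F) m
      = ((Finset.range m).filter fun j => ¬ (f₁ F (j + 1) ≠ f₁ F j)).card := by
    unfold nmoves
    congr 1
    apply Finset.filter_congr
    intro j _
    simpa using key j
  rw [e1]
  exact Finset.card_filter_add_card_filter_not (fun j => f₁ F (j + 1) ≠ f₁ F j)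
    |>.trans (Finset.card_range m)

/-- Reduce `VertexIso` to a fundamental domain. -/
lemma vertexIso_reduce {U : Type*} {Q : SimpleGraph U} {n : ℕ} (hn : 0 < n) {E : ℤ → U}
    (hper : ∀ i : ℤ, E (i + n) = E i)
    (h : ∀ a δ : ℕ, a < n → δ ≤ n →
      (Q.dist (E (a : ℤ)) (E ((a + δ : ℕ) : ℤ)) : ℝ) = cdist n (a : ℝ) ((a + δ : ℕ) : ℝ)) :
    VertexIso Q n E := by
  intro a b
  have hnz : ((n : ℕ) : ℤ) ≠ 0 := by exact_mod_cast hn.ne'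
  have hnp : (0 : ℤ) < n := by exact_mod_cast hn
  set δ : ℤ := (b - a) % n with hδ
  have hδ0 : 0 ≤ δ := Int.emod_nonneg _ hnz
  have hδn : δ < n := Int.emod_lt_of_pos _ hnp
  set a0 : ℤ := a % n with ha0
  have ha00 : 0 ≤ a0 := Int.emod_nonneg _ hnz
  have ha0n : a0 < n := Int.emod_lt_of_pos _ hnp
  have hEb : E b = E (a0 + δ) := by
    have e1 : b = (a + δ) + ((b - a) / n) * n := by
      have := Int.emod_add_mul_ediv (b - a) n
      rw [hδ]
      linarith [this]
    have e2 : a + δ = (a0 + δ) + (a / n) * n := by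
      have := Int.emod_add_mul_ediv a n
      rw [ha0]
      linarith [this]
    rw [e1, periodZ_mul hper, e2, periodZ_mul hper]
  have hEa : E a = E a0 := by
    have e2 : a = a0 + (a / n) * n := by
      have := Int.emod_add_mul_ediv a n
      rw [ha0]
      linarith [this]
    rw [e2, periodZ_mul hper]
  have hcd : cdist n (a : ℝ) (b : ℝ) = cdist n (a0 : ℝ) ((a0 + δ : ℤ) : ℝ) := by
    apply cdist_congr (m := -((b - a) / n))
    have e1 : b - a = δ + ((b - a) / n) * n := by
      have := Int.emod_add_mul_ediv (b - a) n
      rw [hδ]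
      linarith [this]
    have : ((b - a : ℤ) : ℝ) = ((δ : ℤ) : ℝ) + ((((b - a) / n : ℤ)) : ℝ) * (n : ℝ) := by
      exact_mod_cast congrArg (fun z : ℤ => (z : ℝ)) e1
    push_cast at this ⊢
    linarith
  rw [hEa, hEb, hcd]
  have hfund := h a0.toNat δ.toNat (by omega) (by omega)
  have e3 : ((a0.toNat : ℕ) : ℤ) = a0 := Int.toNat_of_nonneg ha00
  have e4 : ((a0.toNat + δ.toNat : ℕ) : ℤ) = a0 + δ := by
    push_cast
    rw [Int.toNat_of_nonneg ha00, Int.toNat_of_nonneg hδ0]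
  rw [e3, e4] at hfund
  have e5 : ((a0.toNat : ℕ) : ℝ) = (a0 : ℝ) := by exact_mod_cast congrArg (fun z : ℤ => (z : ℝ)) e3
  have e6 : ((a0.toNat + δ.toNat : ℕ) : ℝ) = ((a0 + δ : ℤ) : ℝ) := by
    exact_mod_cast congrArg (fun z : ℤ => (z : ℝ)) e4
  rw [e5, e6] at hfund
  exact hfund

end ProductProj
section KeyExact

variable {V W : Type*} {G : SimpleGraph V} {H : SimpleGraph W}

lemma cond_vertexIso (hG : G.Connected) (hH : H.Connected) {n : ℕ}
    {F : ℤ → V × W} (hF : IsCycleZ (G.boxProd H) n F)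
    (hiso : VertexIso (G.boxProd H) n F)
    (hn1 : 0 < nmoves (f₁ F) n) :
    VertexIso G (nmoves (f₁ F) n) (condZ (per₁ hF) hn1) := by
  have hn : 0 < n := by
    by_contra hc
    have h0 : n = 0 := by omega
    rw [h0, nmoves_zero] at hn1
    omega
  apply vertexIso_reduce hn1 (condZ_isCycleZ (lazy₁ hF) (per₁ hF) hn1).1
  intro α δ hα hδ
  set n₁ := nmoves (f₁ F) n with hn₁def
  set i := iota (per₁ hF) hn1 α with hidef
  set j := iota (per₁ hF) hn1 (α + δ) with hjdef
  have hi : nmoves (f₁ F) i = α := iota_spec _ _ _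
  have hj : nmoves (f₁ F) j = α + δ := iota_spec _ _ _
  have hij : i ≤ j := iota_le (per₁ hF) hn1 (by rw [hj]; omega)
  have hjin : j ≤ i + n := iota_le (per₁ hF) hn1
    (by rw [nmoves_period (per₁ hF), hi]; omega)
  have hδji : δ ≤ j - i := by
    have h := nmoves_le_add (f₁ F) i (j - i)
    rw [show i + (j - i) = j by omega] at h
    omega
  have hn₁δarc : n₁ - δ ≤ i + n - j := by
    have h := nmoves_le_add (f₁ F) j (i + n - j)
    rw [show j + (i + n - j) = i + n by omega, nmoves_period (per₁ hF), hi, hj] at h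
    omega
  have dG1 : G.dist (f₁ F i) (f₁ F j) ≤ δ := by
    have h := dist_le_nmoves hG (lazy₁ hF) i (j - i)
    rw [show i + (j - i) = j by omega] at h
    omega
  have dH1 : H.dist (f₂ F i) (f₂ F j) ≤ (j - i) - δ := by
    have h := dist_le_nmoves hH (lazy₂ hF) i (j - i)
    rw [show i + (j - i) = j by omega] at h
    have s_i := nmoves_sum hF i
    have s_j := nmoves_sum hF j
    omega
  have hin : nmoves (f₁ F) (i + n) = α + n₁ := by rw [nmoves_period (per₁ hF), hi]
  have dG2 : G.dist (f₁ F j) (f₁ F (i + n)) ≤ n₁ - δ := by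
    have h := dist_le_nmoves hG (lazy₁ hF) j (i + n - j)
    rw [show j + (i + n - j) = i + n by omega] at h
    omega
  have dH2 : H.dist (f₂ F j) (f₂ F (i + n)) ≤ (i + n - j) - (n₁ - δ) := by
    have h := dist_le_nmoves hH (lazy₂ hF) j (i + n - j)
    rw [show j + (i + n - j) = i + n by omega] at h
    have s_j := nmoves_sum hF j
    have s_in := nmoves_sum hF (i + n)
    omega
  have hfij : f₁ F (i + n) = f₁ F i := per₁ hF i
  have hc1 : condZ (per₁ hF) hn1 ((α : ℕ) : ℤ) = f₁ F i := by rw [condZ_nat]; rfl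
  have hc2 : condZ (per₁ hF) hn1 (((α + δ : ℕ) : ℕ) : ℤ) = f₁ F j := by rw [condZ_nat]; rfl
  rw [hc1, hc2]
  have hcastαδ : ((α + δ : ℕ) : ℝ) = (α : ℝ) + δ := by push_cast; ring
  rcases le_or_gt (2 * (j - i)) n with hcase | hcase
  · -- geodesic along the near arc
    have hprod := hiso ((i : ℕ) : ℤ) ((j : ℕ) : ℤ)
    push_cast at hprod
    have hcd : cdist n ((i : ℕ) : ℝ) ((j : ℕ) : ℝ) = ((j - i : ℕ) : ℝ) := by
      have habs : |((i : ℕ) : ℝ) - ((j : ℕ) : ℝ) + ((0 : ℤ) : ℝ) * (n : ℝ)|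
          = ((j - i : ℕ) : ℝ) := by
        rw [Nat.cast_sub hij]
        push_cast
        rw [abs_of_nonpos (by
          have : (i : ℝ) ≤ (j : ℝ) := by exact_mod_cast hij
          linarith)]
        ring
      rw [cdist_eq_of_le_half hn (k := 0) (by
        rw [habs, Nat.cast_sub hij]
        have h2 : ((2 * (j - i) : ℕ) : ℝ) ≤ (n : ℝ) := by exact_mod_cast hcase
        rw [Nat.cast_mul, Nat.cast_sub hij] at h2
        push_cast at h2 ⊢
        linarith), habs]
    rw [hcd] at hprod
    have hsum : G.dist (f₁ F i) (f₁ F j) + H.dist (f₂ F i) (f₂ F j) = j - i := by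
      have hbp := boxProd_dist hG hH (F ((i : ℕ) : ℤ)) (F ((j : ℕ) : ℤ))
      have : ((G.boxProd H).dist (F ((i : ℕ) : ℤ)) (F ((j : ℕ) : ℤ))) = j - i := by
        exact_mod_cast hprod
      rw [hbp] at this
      exact this
    have hdG : G.dist (f₁ F i) (f₁ F j) = δ := by omega
    rw [hfij, SimpleGraph.dist_comm] at dG2
    have h2δ : 2 * δ ≤ n₁ := by omega
    have hcd1 : cdist n₁ (α : ℝ) ((α + δ : ℕ) : ℝ) = (δ : ℝ) := by
      have habs : |(α : ℝ) - ((α + δ : ℕ) : ℝ) + ((0 : ℤ) : ℝ) * (n₁ : ℝ)| = (δ : ℝ) := by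
        rw [hcastαδ]
        rw [show (α : ℝ) - ((α : ℝ) + δ) + ((0 : ℤ) : ℝ) * (n₁ : ℝ) = -(δ : ℝ) by
          push_cast; ring, abs_neg, abs_of_nonneg (by positivity)]
      rw [cdist_eq_of_le_half hn1 (k := 0) (by
        rw [habs]
        have h2 : ((2 * δ : ℕ) : ℝ) ≤ (n₁ : ℝ) := by exact_mod_cast h2δ
        push_cast at h2
        linarith), habs]
    rw [hcd1]
    exact_mod_cast hdG
  · -- geodesic along the far arc
    have hL : 2 * (i + n - j) ≤ n := by omega
    have hprod := hiso ((j : ℕ) : ℤ) (((i + n : ℕ)) : ℤ)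
    push_cast at hprod
    have hcd : cdist n ((j : ℕ) : ℝ) ((i : ℝ) + (n : ℝ)) = ((i + n - j : ℕ) : ℝ) := by
      have ecast : ((i + n : ℕ) : ℝ) = (i : ℝ) + (n : ℝ) := by push_cast; ring
      rw [← ecast]
      have habs : |((j : ℕ) : ℝ) - ((i + n : ℕ) : ℝ) + ((0 : ℤ) : ℝ) * (n : ℝ)|
          = ((i + n - j : ℕ) : ℝ) := by
        rw [Nat.cast_sub hjin]
        push_cast
        rw [abs_of_nonpos (by
          have : (j : ℝ) ≤ ((i : ℝ) + n) := by exact_mod_cast hjin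
          linarith)]
        ring
      rw [cdist_eq_of_le_half hn (k := 0) (by
        rw [habs, Nat.cast_sub hjin]
        have h2 : ((2 * (i + n - j) : ℕ) : ℝ) ≤ (n : ℝ) := by exact_mod_cast hL
        rw [Nat.cast_mul, Nat.cast_sub hjin] at h2
        push_cast at h2 ⊢
        linarith), habs]
    rw [hcd] at hprod
    have hsum : G.dist (f₁ F j) (f₁ F (i + n)) + H.dist (f₂ F j) (f₂ F (i + n))
        = i + n - j := by
      have hbp := boxProd_dist hG hH (F ((j : ℕ) : ℤ)) (F ((i + n : ℕ) : ℤ))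
      have h2 : ((G.boxProd H).dist (F ((j : ℕ) : ℤ)) (F ((i + n : ℕ) : ℤ))) = i + n - j := by
        exact_mod_cast hprod
      rw [hbp] at h2
      exact h2
    have hdG' : G.dist (f₁ F j) (f₁ F (i + n)) = n₁ - δ := by omega
    have hdG : G.dist (f₁ F i) (f₁ F j) = n₁ - δ := by
      rw [SimpleGraph.dist_comm, ← hfij]
      exact hdG'
    have hle : n₁ - δ ≤ δ := by omega
    have hcd1 : cdist n₁ (α : ℝ) ((α + δ : ℕ) : ℝ) = ((n₁ - δ : ℕ) : ℝ) := by
      have habs : |(α : ℝ) - ((α + δ : ℕ) : ℝ) + ((1 : ℤ) : ℝ) * (n₁ : ℝ)|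
          = ((n₁ - δ : ℕ) : ℝ) := by
        rw [hcastαδ, Nat.cast_sub hδ]
        push_cast
        rw [abs_of_nonneg (by
          have : (δ : ℝ) ≤ (n₁ : ℝ) := by exact_mod_cast hδ
          linarith)]
        ring
      rw [cdist_eq_of_le_half hn1 (k := 1) (by
        rw [habs, Nat.cast_sub hδ]
        have h2 : ((2 * (n₁ - δ) : ℕ) : ℝ) ≤ (n₁ : ℝ) := by exact_mod_cast (by omega :
          2 * (n₁ - δ) ≤ n₁)
        rw [Nat.cast_mul, Nat.cast_sub hδ] at h2
        push_cast at h2 ⊢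
        linarith), habs]
    rw [hcd1]
    exact_mod_cast hdG

end KeyExact
section KeyStrong

variable {V W : Type*} {G : SimpleGraph V} {H : SimpleGraph W}

lemma floor_half_nat (n : ℕ) : ⌊(n : ℝ) / 2⌋ = ((n / 2 : ℕ) : ℤ) := by
  have hmod := Nat.div_add_mod n 2
  have hcast : 2 * ((n / 2 : ℕ) : ℝ) + ((n % 2 : ℕ) : ℝ) = (n : ℝ) := by exact_mod_cast hmod
  have hr : ((n % 2 : ℕ) : ℝ) ≤ 1 := by
    have : n % 2 ≤ 1 := by omega
    exact_mod_cast this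
  have hr0 : (0 : ℝ) ≤ ((n % 2 : ℕ) : ℝ) := by positivity
  have g0 : (((n / 2 : ℕ) : ℤ) : ℝ) = ((n / 2 : ℕ) : ℝ) := by norm_cast
  rw [Int.floor_eq_iff]
  constructor
  · rw [g0]; linarith
  · rw [g0]; linarith

/-- Key estimate: for an almost isometric cycle in a product, the condensed majority
projection is almost isometric. -/
lemma cond_almost (hG : G.Connected) (hH : H.Connected) {n : ℕ} (hn : 0 < n)
    {F : ℤ → V × W} (hF : IsCycleZ (G.boxProd H) n F) {ξ : ℝ}
    (hai : IsAlmostIsometricCycle (G.boxProd H) n (toCycle F n) ξ)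
    (hn1 : 0 < nmoves (f₁ F) n) :
    ∀ x y : ℝ, Antipodal (nmoves (f₁ F) n) x y →
      ((nmoves (f₁ F) n : ℕ) : ℝ) / 2 - (1 - ξ) * (n : ℝ) - 8
        ≤ rdist G (nmoves (f₁ F) n) (toCycle (condZ (per₁ hF) hn1) (nmoves (f₁ F) n)) x y := by
  set n₁ := nmoves (f₁ F) n with hn₁def
  set n₂ := nmoves (f₂ F) n with hn₂def
  set E := condZ (per₁ hF) hn1 with hEdef
  set c₁ := toCycle E n₁ with hc₁def
  have hEcyc : IsCycleZ G n₁ E := condZ_isCycleZ (lazy₁ hF) (per₁ hF) hn1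
  have hc₁cyc : IsCycle G n₁ c₁ := toCycle_isCycle hn1 hEcyc
  have hn₁R : (0 : ℝ) < (n₁ : ℝ) := by exact_mod_cast hn1
  have hnR : (0 : ℝ) < (n : ℝ) := by exact_mod_cast hn
  have hsum : n₁ + n₂ = n := nmoves_sum hF n
  -- Main estimate for the normalized antipodal pair (z, z + n₁/2), z ∈ [0, n₁).
  have main : ∀ z : ℝ, 0 ≤ z → z < n₁ →
      ((n₁ : ℕ) : ℝ) / 2 - (1 - ξ) * (n : ℝ) - 8
        ≤ rdist G n₁ c₁ z (z + (n₁ : ℝ) / 2) := by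
    intro z hz0 hz1
    have hiz0 : 0 ≤ ⌊z⌋ := Int.floor_nonneg.mpr hz0
    set i : ℕ := ⌊z⌋.toNat with hidef
    have hiz : ((i : ℕ) : ℤ) = ⌊z⌋ := Int.toNat_of_nonneg hiz0
    set p : ℕ := iota (per₁ hF) hn1 i with hpdef
    have hp : nmoves (f₁ F) p = i := iota_spec _ _ _
    set m : ℕ := p + n / 2 with hmdef
    -- the antipodal pair (p, p + n/2) in the original cycle
    have hant : Antipodal n ((p : ℕ) : ℝ) (((p : ℕ) : ℝ) + (n : ℝ) / 2) := by
      unfold Antipodal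
      have habs : |((p : ℕ) : ℝ) - (((p : ℕ) : ℝ) + (n : ℝ) / 2) + ((0 : ℤ) : ℝ) * (n : ℝ)|
          = (n : ℝ) / 2 := by
        push_cast
        rw [show ((p : ℕ) : ℝ) - (((p : ℕ) : ℝ) + (n : ℝ) / 2) + 0 * (n : ℝ) = -((n : ℝ) / 2)
          by ring, abs_neg, abs_of_nonneg (by positivity)]
      rw [cdist_eq_of_le_half hn (k := 0) (by rw [habs]), habs]
    have hA := hai _ _ hant
    -- upper bound for the product rdist via the corner route
    have hfloorq : ⌊((p : ℕ) : ℝ) + (n : ℝ) / 2⌋ = ((m : ℕ) : ℤ) := by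
      have h1 : ((p : ℕ) : ℝ) = (((p : ℕ) : ℤ) : ℝ) := by push_cast; rfl
      rw [h1, Int.floor_intCast_add, floor_half_nat, hmdef, Nat.cast_add]
    have hcornerp : corner n (toCycle F n) ((p : ℕ) : ℝ) = F ((p : ℕ) : ℤ) := by
      rw [corner_toCycle hn hF.1, Int.floor_natCast]
    have hcornerq : corner n (toCycle F n) (((p : ℕ) : ℝ) + (n : ℝ) / 2) = F ((m : ℕ) : ℤ) := by
      rw [corner_toCycle hn hF.1, hfloorq]
    have hub := rdist_le₁ (G.boxProd H) n (toCycle F n) ((p : ℕ) : ℝ)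
      (((p : ℕ) : ℝ) + (n : ℝ) / 2)
    rw [hcornerp, hcornerq, Int.fract_natCast] at hub
    have hfr1 : Int.fract (((p : ℕ) : ℝ) + (n : ℝ) / 2) ≤ 1 := (Int.fract_lt_one _).le
    have hfr0 : 0 ≤ Int.fract (((p : ℕ) : ℝ) + (n : ℝ) / 2) := Int.fract_nonneg _
    -- d_H is at most n₂ / 2
    have hdH : 2 * H.dist (f₂ F p) (f₂ F m) ≤ n₂ := by
      have harc1 := dist_le_nmoves hH (lazy₂ hF) p (n / 2)
      have harc2 := dist_le_nmoves hH (lazy₂ hF) m (p + n - m)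
      rw [show m + (p + n - m) = p + n by omega] at harc2
      have hper2 : nmoves (f₂ F) (p + n) = nmoves (f₂ F) p + n₂ := nmoves_period (per₂ hF) p
      have hfp : f₂ F (p + n) = f₂ F p := per₂ hF p
      rw [hfp] at harc2
      have hcomm : H.dist (f₂ F m) (f₂ F p) = H.dist (f₂ F p) (f₂ F m) :=
        SimpleGraph.dist_comm
      rw [hcomm] at harc2
      rw [← hmdef] at harc1
      omega
    -- lower bound for d_G
    have hdist : ((G.boxProd H).dist (F ((p : ℕ) : ℤ)) (F ((m : ℕ) : ℤ)) : ℝ)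
        = (G.dist (f₁ F p) (f₁ F m) : ℝ) + (H.dist (f₂ F p) (f₂ F m) : ℝ) := by
      rw [boxProd_dist hG hH]
      push_cast
      rfl
    have hdG : ((n₁ : ℕ) : ℝ) / 2 - (1 - ξ) * (n : ℝ) / 2 - 1
        ≤ (G.dist (f₁ F p) (f₁ F m) : ℝ) := by
      have h1 : ξ * ((n : ℝ) / 2)
          ≤ ((G.boxProd H).dist (F ((p : ℕ) : ℤ)) (F ((m : ℕ) : ℤ)) : ℝ) + 1 := by
        calc ξ * ((n : ℝ) / 2) ≤ _ := hA
          _ ≤ 0 + ((G.boxProd H).dist (F ((p : ℕ) : ℤ)) (F ((m : ℕ) : ℤ)) : ℝ)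
              + Int.fract (((p : ℕ) : ℝ) + (n : ℝ) / 2) := hub
          _ ≤ _ := by linarith
      have h2 : (H.dist (f₂ F p) (f₂ F m) : ℝ) ≤ (n₂ : ℝ) / 2 := by
        have : ((2 * H.dist (f₂ F p) (f₂ F m) : ℕ) : ℝ) ≤ ((n₂ : ℕ) : ℝ) := by
          exact_mod_cast hdH
        push_cast at this
        linarith
      have h3 : ((n₁ : ℕ) : ℝ) + ((n₂ : ℕ) : ℝ) = (n : ℝ) := by exact_mod_cast hsum
      rw [hdist] at h1
      nlinarith [h1, h2, h3]
    -- move to the condensed cycle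
    set j' : ℕ := nmoves (f₁ F) m with hj'def
    have hvalp : E ((i : ℕ) : ℤ) = f₁ F p := by
      rw [hEdef, condZ_nat]
      show cond (per₁ hF) hn1 i = f₁ F p
      rw [← hp]
      exact cond_eq _ _ _
    have hvalm : E ((j' : ℕ) : ℤ) = f₁ F m := by
      rw [hEdef, condZ_nat]
      exact cond_eq _ _ _
    have hDG : ((n₁ : ℕ) : ℝ) / 2 - (1 - ξ) * (n : ℝ) / 2 - 1
        ≤ (G.dist (E ((i : ℕ) : ℤ)) (E ((j' : ℕ) : ℤ)) : ℝ) := by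
      rw [hvalp, hvalm]; exact hdG
    have hcd_ij : ((n₁ : ℕ) : ℝ) / 2 - (1 - ξ) * (n : ℝ) / 2 - 1
        ≤ cdist n₁ ((i : ℕ) : ℝ) ((j' : ℕ) : ℝ) := by
      calc ((n₁ : ℕ) : ℝ) / 2 - (1 - ξ) * (n : ℝ) / 2 - 1
          ≤ (G.dist (E ((i : ℕ) : ℤ)) (E ((j' : ℕ) : ℤ)) : ℝ) := hDG
        _ ≤ cdist n₁ ((i : ℕ) : ℝ) ((j' : ℕ) : ℝ) := by
            have := distZ_le_cdist hG hn1 hEcyc ((i : ℕ) : ℤ) ((j' : ℕ) : ℤ)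
            push_cast at this ⊢
            exact this
    -- j' is nearly antipodal to i in the condensed circle
    have hnear : cdist n₁ ((j' : ℕ) : ℝ) (((i : ℕ) : ℝ) + (n₁ : ℝ) / 2)
        ≤ (1 - ξ) * (n : ℝ) / 2 + 1 := by
      have hanti := cdist_antipode hn1 ((j' : ℕ) : ℝ) ((i : ℕ) : ℝ)
      have hsymm : cdist n₁ ((j' : ℕ) : ℝ) ((i : ℕ) : ℝ)
          = cdist n₁ ((i : ℕ) : ℝ) ((j' : ℕ) : ℝ) := cdist_symm _ _ _
      rw [hanti, hsymm]
      linarith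
    -- corners of the target pair
    have hcor1 : corner n₁ c₁ z = E ((i : ℕ) : ℤ) := by
      rw [hc₁def, corner_toCycle hn1 hEcyc.1, ← hiz]
    set Mz : ℤ := ⌊z + (n₁ : ℝ) / 2⌋ with hMzdef
    have hcor2 : corner n₁ c₁ (z + (n₁ : ℝ) / 2) = E Mz := by
      rw [hc₁def, corner_toCycle hn1 hEcyc.1]
    have hbase := rdist_ge_corner hG hc₁cyc z (z + (n₁ : ℝ) / 2)
    rw [hcor1, hcor2] at hbase
    -- distance from j' to Mz on the condensed circle
    have hjM : (G.dist (E ((j' : ℕ) : ℤ)) (E Mz) : ℝ)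
        ≤ (1 - ξ) * (n : ℝ) / 2 + 3 := by
      have h1 : (G.dist (E ((j' : ℕ) : ℤ)) (E Mz) : ℝ)
          ≤ cdist n₁ ((j' : ℕ) : ℝ) ((Mz : ℤ) : ℝ) := by
        have := distZ_le_cdist hG hn1 hEcyc ((j' : ℕ) : ℤ) Mz
        push_cast at this ⊢
        exact this
      have h2 : cdist n₁ ((Mz : ℤ) : ℝ) (((i : ℕ) : ℝ) + (n₁ : ℝ) / 2) ≤ 2 := by
        have hMz1 : ((Mz : ℤ) : ℝ) ≤ z + (n₁ : ℝ) / 2 := Int.floor_le _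
        have hMz2 : z + (n₁ : ℝ) / 2 < ((Mz : ℤ) : ℝ) + 1 := Int.lt_floor_add_one _
        have hi1 : ((i : ℕ) : ℝ) ≤ z := by
          have := Int.floor_le z
          rw [← hiz] at this
          exact_mod_cast this
        have hi2 : z < ((i : ℕ) : ℝ) + 1 := by
          have := Int.lt_floor_add_one z
          rw [← hiz] at this
          exact_mod_cast this
        calc cdist n₁ ((Mz : ℤ) : ℝ) (((i : ℕ) : ℝ) + (n₁ : ℝ) / 2)
            ≤ |((Mz : ℤ) : ℝ) - (((i : ℕ) : ℝ) + (n₁ : ℝ) / 2) + ((0 : ℤ) : ℝ) * (n₁ : ℝ)| :=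
              cdist_le _ _ _ 0
          _ ≤ 2 := by
              push_cast
              rw [abs_le]
              constructor <;> linarith
      calc (G.dist (E ((j' : ℕ) : ℤ)) (E Mz) : ℝ)
          ≤ cdist n₁ ((j' : ℕ) : ℝ) ((Mz : ℤ) : ℝ) := h1
        _ ≤ cdist n₁ ((j' : ℕ) : ℝ) (((i : ℕ) : ℝ) + (n₁ : ℝ) / 2)
            + cdist n₁ (((i : ℕ) : ℝ) + (n₁ : ℝ) / 2) ((Mz : ℤ) : ℝ) := by
              have := cdist_triangle hn1 ((j' : ℕ) : ℝ) (((i : ℕ) : ℝ) + (n₁ : ℝ) / 2)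
                ((Mz : ℤ) : ℝ)
              linarith
        _ ≤ ((1 - ξ) * (n : ℝ) / 2 + 1) + 2 := by
              have hsym := cdist_symm n₁ (((i : ℕ) : ℝ) + (n₁ : ℝ) / 2) ((Mz : ℤ) : ℝ)
              rw [hsym]
              linarith [hnear, h2]
        _ = (1 - ξ) * (n : ℝ) / 2 + 3 := by ring
    -- graph triangle inequality
    have htri : (G.dist (E ((i : ℕ) : ℤ)) (E ((j' : ℕ) : ℤ)) : ℝ)
        ≤ (G.dist (E ((i : ℕ) : ℤ)) (E Mz) : ℝ) + (G.dist (E ((j' : ℕ) : ℤ)) (E Mz) : ℝ) := by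
      have h := hG.dist_triangle (u := E ((i : ℕ) : ℤ)) (v := E Mz) (w := E ((j' : ℕ) : ℤ))
      have hcomm : G.dist (E Mz) (E ((j' : ℕ) : ℤ)) = G.dist (E ((j' : ℕ) : ℤ)) (E Mz) :=
        SimpleGraph.dist_comm
      rw [hcomm] at h
      exact_mod_cast h
    calc ((n₁ : ℕ) : ℝ) / 2 - (1 - ξ) * (n : ℝ) - 8
        ≤ (((n₁ : ℕ) : ℝ) / 2 - (1 - ξ) * (n : ℝ) / 2 - 1)
          - ((1 - ξ) * (n : ℝ) / 2 + 3) - 2 - 2 := by ring_nf; linarith [le_refl (0:ℝ)]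
      _ ≤ (G.dist (E ((i : ℕ) : ℤ)) (E ((j' : ℕ) : ℤ)) : ℝ)
          - (G.dist (E ((j' : ℕ) : ℤ)) (E Mz) : ℝ) - 2 - 2 := by linarith [hDG, hjM]
      _ ≤ (G.dist (E ((i : ℕ) : ℤ)) (E Mz) : ℝ) - 2 - 2 := by linarith [htri]
      _ ≤ rdist G n₁ c₁ z (z + (n₁ : ℝ) / 2) - 2 := by linarith [hbase]
      _ ≤ rdist G n₁ c₁ z (z + (n₁ : ℝ) / 2) := by linarith
  -- Reduce an arbitrary antipodal pair to the normalized form.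
  intro x y hxy
  have hshift : ∀ w : ℝ, ∃ (z : ℝ) (k : ℤ), (0 ≤ z ∧ z < (n₁ : ℝ)) ∧ w = z + (k : ℝ) * (n₁ : ℝ) := by
    intro w
    refine ⟨w - ⌊w / n₁⌋ * n₁, ⌊w / n₁⌋, ⟨?_, ?_⟩, by ring⟩
    · have h1 : ((⌊w / n₁⌋ : ℤ) : ℝ) ≤ w / n₁ := Int.floor_le _
      have := mul_le_mul_of_nonneg_right h1 hn₁R.le
      rw [div_mul_cancel₀ _ hn₁R.ne'] at this
      linarith
    · have h2 : w / n₁ < ((⌊w / n₁⌋ : ℤ) : ℝ) + 1 := Int.lt_floor_add_one _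
      have := mul_lt_mul_of_pos_right h2 hn₁R
      rw [div_mul_cancel₀ _ hn₁R.ne'] at this
      linarith
  obtain ⟨k₀, hk₀, he₀⟩ := exists_cdist_rep n₁ hn1 x y
  rw [hxy] at he₀
  have habs : x - y + k₀ * (n₁ : ℝ) = (n₁ : ℝ) / 2 ∨ x - y + k₀ * (n₁ : ℝ) = -((n₁ : ℝ) / 2) := by
    rcases abs_eq (by positivity : (0:ℝ) ≤ (n₁ : ℝ)/2) |>.mp he₀.symm with h | h
    · exact Or.inl h
    · exact Or.inr h
  rcases habs with hcase | hcase
  · -- x = y + n₁/2 (mod n₁) : swap roles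
    obtain ⟨z, k, ⟨hz0, hz1⟩, hzw⟩ := hshift y
    have hx : x = (z + (n₁ : ℝ) / 2) + ((k - k₀ : ℤ) : ℝ) * (n₁ : ℝ) := by
      push_cast at hcase ⊢
      linarith
    have heq : rdist G n₁ c₁ x y = rdist G n₁ c₁ (z + (n₁ : ℝ) / 2) z := by
      conv_lhs => rw [hx, hzw]
      exact rdist_shift c₁ (z + (n₁ : ℝ) / 2) z (k - k₀) k
    rw [heq, ← rdist_symm]
    exact main z hz0 hz1
  · obtain ⟨z, k, ⟨hz0, hz1⟩, hzw⟩ := hshift x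
    have hy : y = (z + (n₁ : ℝ) / 2) + ((k + k₀ : ℤ) : ℝ) * (n₁ : ℝ) := by
      push_cast at hcase ⊢
      linarith
    have heq : rdist G n₁ c₁ x y = rdist G n₁ c₁ z (z + (n₁ : ℝ) / 2) := by
      conv_lhs => rw [hy, hzw]
      exact rdist_shift c₁ z (z + (n₁ : ℝ) / 2) k (k + k₀)
    rw [heq]
    exact main z hz0 hz1

end KeyStrong
section Swap

variable {V W : Type*} {G : SimpleGraph V} {H : SimpleGraph W}

lemma swap_cycleZ {n : ℕ} {F : ℤ → V × W} (hF : IsCycleZ (G.boxProd H) n F) :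
    IsCycleZ (H.boxProd G) n (fun a => Prod.swap (F a)) := by
  constructor
  · intro i; simp only; rw [hF.1]
  · intro i
    rcases SimpleGraph.boxProd_adj.mp (hF.2 i) with ⟨h1, h2⟩ | ⟨h1, h2⟩
    · exact SimpleGraph.boxProd_adj.mpr (Or.inr ⟨h1, h2⟩)
    · exact SimpleGraph.boxProd_adj.mpr (Or.inl ⟨h1, h2⟩)

lemma dist_swap (hG : G.Connected) (hH : H.Connected) (u v : V × W) :
    (H.boxProd G).dist (Prod.swap u) (Prod.swap v) = (G.boxProd H).dist u v := by
  rw [boxProd_dist hH hG, boxProd_dist hG hH]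
  exact Nat.add_comm _ _

lemma vertexIso_swap (hG : G.Connected) (hH : H.Connected) {n : ℕ} {F : ℤ → V × W}
    (hvi : VertexIso (G.boxProd H) n F) :
    VertexIso (H.boxProd G) n (fun a => Prod.swap (F a)) := fun a b => by
  simp only
  rw [dist_swap hG hH]
  exact hvi a b

lemma rdist_swap (hG : G.Connected) (hH : H.Connected) (n : ℕ) (c : ZMod n → V × W)
    (p q : ℝ) :
    rdist (H.boxProd G) n (fun z => Prod.swap (c z)) p q = rdist (G.boxProd H) n c p q := by
  rw [rdist_def, rdist_def]
  have hc : ∀ r : ℝ, corner n (fun z => Prod.swap (c z)) r = Prod.swap (corner n c r) :=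
    fun _ => rfl
  have hc' : ∀ r : ℝ, corner' n (fun z => Prod.swap (c z)) r = Prod.swap (corner' n c r) :=
    fun _ => rfl
  rw [hc p, hc q, hc' p, hc' q, dist_swap hG hH, dist_swap hG hH, dist_swap hG hH,
    dist_swap hG hH, Prod.swap_inj, Prod.swap_inj, Prod.swap_inj, Prod.swap_inj]

lemma almostIso_swap (hG : G.Connected) (hH : H.Connected) {n : ℕ} {ξ : ℝ}
    {c : ZMod n → V × W} (h : IsAlmostIsometricCycle (G.boxProd H) n c ξ) :
    IsAlmostIsometricCycle (H.boxProd G) n (fun z => Prod.swap (c z)) ξ := fun p q hpq => by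
  rw [rdist_swap hG hH]
  exact h p q hpq

end Swap

/-- Theorem `prod`.  Let `Γ₁` and `Γ₂` be connected simplicial graphs.  If
`Γ₁` and `Γ₂` are shortcut, then the product graph `Γ₁ × Γ₂` (the 1-skeleton of the CW
product, i.e. the box product) is shortcut.  If `Γ₁` and `Γ₂` are strongly shortcut, then
`Γ₁ × Γ₂` is strongly shortcut. -/
theorem thm_prod {V W : Type*} (G : SimpleGraph V) (H : SimpleGraph W)
    (hG : G.Connected) (hH : H.Connected) :
    (Shortcut G → Shortcut H → Shortcut (G.boxProd H)) ∧
    (StronglyShortcut G → StronglyShortcut H → StronglyShortcut (G.boxProd H)) := by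
  constructor
  · -- shortcut case
    rintro ⟨θ₁, hθ₁⟩ ⟨θ₂, hθ₂⟩
    refine ⟨2 * θ₁ + 2 * θ₂ + 12, ?_⟩
    intro n c hn hcyc hiso
    by_contra hgt
    push_neg at hgt
    obtain ⟨hFcyc, hFc⟩ := ofCycle hn c hcyc
    set F := (fun a : ℤ => c ((a : ℤ) : ZMod n)) with hFdef
    have hvi : VertexIso (G.boxProd H) n F :=
      vertexIso_of_isometric (hG.boxProd hH) hn hFcyc (by rw [hFc]; exact hiso)
    have hsum := nmoves_sum hFcyc n
    rcases le_or_gt n (2 * nmoves (f₁ F) n) with hhalf | hhalf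
    · have hn1 : 0 < nmoves (f₁ F) n := by omega
      have hvi1 := cond_vertexIso hG hH hFcyc hvi hn1
      have hge3 : 3 ≤ nmoves (f₁ F) n := by omega
      have hiso1 := isometric_of_vertexIso hG hge3
        (condZ_isCycleZ (lazy₁ hFcyc) (per₁ hFcyc) hn1) hvi1
      have hbound := hθ₁ _ _ hn1
        (toCycle_isCycle hn1 (condZ_isCycleZ (lazy₁ hFcyc) (per₁ hFcyc) hn1)) hiso1
      omega
    · set F' := (fun a : ℤ => Prod.swap (F a)) with hF'def
      have hF'cyc : IsCycleZ (H.boxProd G) n F' := swap_cycleZ hFcyc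
      have hvi' : VertexIso (H.boxProd G) n F' := vertexIso_swap hG hH hvi
      have hf₁ : nmoves (f₁ F') n = nmoves (f₂ F) n := rfl
      have hn1 : 0 < nmoves (f₁ F') n := by omega
      have hvi1 := cond_vertexIso hH hG hF'cyc hvi' hn1
      have hge3 : 3 ≤ nmoves (f₁ F') n := by omega
      have hiso1 := isometric_of_vertexIso hH hge3
        (condZ_isCycleZ (lazy₁ hF'cyc) (per₁ hF'cyc) hn1) hvi1
      have hbound := hθ₂ _ _ hn1
        (toCycle_isCycle hn1 (condZ_isCycleZ (lazy₁ hF'cyc) (per₁ hF'cyc) hn1)) hiso1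
      omega
  · -- strongly shortcut case
    rintro ⟨θ₁, ξ₁, hξ₁0, hξ₁1, hθ₁⟩ ⟨θ₂, ξ₂, hξ₂0, hξ₂1, hθ₂⟩
    set ξm := max ξ₁ ξ₂ with hξmdef
    have hξm1 : ξm < 1 := max_lt hξ₁1 hξ₂1
    have hξm0 : 0 < ξm := lt_max_of_lt_left hξ₁0
    set ε := (1 - ξm) / 8 with hεdef
    have hε0 : 0 < ε := by rw [hεdef]; linarith
    have hε18 : ε ≤ 1 / 8 := by rw [hεdef]; linarith
    set N₀ := ⌈(32 : ℝ) / (1 - ξm)⌉₊ with hN₀def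
    refine ⟨2 * θ₁ + 2 * θ₂ + 2 * N₀ + 12, 1 - ε, by linarith, by linarith, ?_⟩
    intro n c hn hcyc hai
    by_contra hgt
    push_neg at hgt
    obtain ⟨hFcyc, hFc⟩ := ofCycle hn c hcyc
    set F := (fun a : ℤ => c ((a : ℤ) : ZMod n)) with hFdef
    have hai' : IsAlmostIsometricCycle (G.boxProd H) n (toCycle F n) (1 - ε) := by
      rw [hFc]; exact hai
    have hsum := nmoves_sum hFcyc n
    -- common arithmetic
    have harith : ∀ (n₁ : ℕ) (ξ : ℝ), ξ ≤ ξm → 0 < n₁ → n ≤ 2 * n₁ → N₀ ≤ n₁ →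
        ∀ D : ℝ, (n₁ : ℝ) / 2 - (1 - (1 - ε)) * (n : ℝ) - 8 ≤ D → ξ * ((n₁ : ℝ) / 2) ≤ D := by
      intro n₁ ξ hξ hn₁pos hhalf hN₀ D hD
      have h1 : (n : ℝ) ≤ 2 * (n₁ : ℝ) := by exact_mod_cast hhalf
      have h2 : (32 : ℝ) / (1 - ξm) ≤ (N₀ : ℝ) := Nat.le_ceil _
      have h3 : ((N₀ : ℕ) : ℝ) ≤ (n₁ : ℝ) := by exact_mod_cast hN₀
      have h4 : (32 : ℝ) ≤ (1 - ξm) * (n₁ : ℝ) := by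
        rw [div_le_iff₀ (by linarith)] at h2
        nlinarith
      have h5 : ε * (n : ℝ) ≤ (1 - ξm) * (n₁ : ℝ) / 4 := by
        rw [hεdef]
        have hn₁0 : (0 : ℝ) ≤ (n₁ : ℝ) := by positivity
        nlinarith
      have h6 : ξ * ((n₁ : ℝ) / 2) ≤ ξm * ((n₁ : ℝ) / 2) := by
        have hn₁0 : (0 : ℝ) ≤ (n₁ : ℝ) / 2 := by positivity
        nlinarith
      have h7 : (1 - (1 - ε)) * (n : ℝ) = ε * (n : ℝ) := by ring
      rw [h7] at hD
      nlinarith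
    rcases le_or_gt n (2 * nmoves (f₁ F) n) with hhalf | hhalf
    · have hn1 : 0 < nmoves (f₁ F) n := by omega
      have hkey := cond_almost hG hH hn hFcyc hai' hn1
      have hai₁ : IsAlmostIsometricCycle G (nmoves (f₁ F) n)
          (toCycle (condZ (per₁ hFcyc) hn1) (nmoves (f₁ F) n)) ξ₁ := by
        intro x y hxy
        exact harith _ ξ₁ (le_max_left _ _) hn1 hhalf (by omega) _ (hkey x y hxy)
      have hbound := hθ₁ _ _ hn1
        (toCycle_isCycle hn1 (condZ_isCycleZ (lazy₁ hFcyc) (per₁ hFcyc) hn1)) hai₁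
      omega
    · set F' := (fun a : ℤ => Prod.swap (F a)) with hF'def
      have hF'cyc : IsCycleZ (H.boxProd G) n F' := swap_cycleZ hFcyc
      have hai'' : IsAlmostIsometricCycle (H.boxProd G) n (toCycle F' n) (1 - ε) := by
        have he : toCycle F' n = fun z => Prod.swap (toCycle F n z) := rfl
        rw [he]
        exact almostIso_swap hG hH hai'
      have hf₁ : nmoves (f₁ F') n = nmoves (f₂ F) n := rfl
      have hn1 : 0 < nmoves (f₁ F') n := by omega
      have hhalf' : n ≤ 2 * nmoves (f₁ F') n := by omega
      have hkey := cond_almost hH hG hn hF'cyc hai'' hn1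
      have hai₂ : IsAlmostIsometricCycle H (nmoves (f₁ F') n)
          (toCycle (condZ (per₁ hF'cyc) hn1) (nmoves (f₁ F') n)) ξ₂ := by
        intro x y hxy
        exact harith _ ξ₂ (le_max_right _ _) hn1 hhalf' (by omega) _ (hkey x y hxy)
      have hbound := hθ₂ _ _ hn1
        (toCycle_isCycle hn1 (condZ_isCycleZ (lazy₁ hF'cyc) (per₁ hF'cyc) hn1)) hai₂
      omega

end ShortcutGraphs
end
end

section
/- Let (C, α) be a wall cycle with wall set W and suppose that, for some ξ ∈ (0,1), the wall crossing distance satisfies d_α(u,v) ≥ ξ·|C|/2 for every antipodal pair of vertices u, v of C. Let W' = {w ∈ W : exactly 2 edges of C are colored w}. Then |W \ W'| ≤ ((1 − ξ)/ξ)·|W|. -/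
open scoped Classical

noncomputable section

namespace ShortcutGraphs

variable {W : Type*}

/-- The number of edges of the cycle graph with `n` edges (edge `i` joins vertex `i` to
vertex `i + 1`) which the coloring `α` colors by the wall `w`. -/
def colorCount (n : ℕ) [NeZero n] (α : ZMod n → W) (w : W) : ℕ :=
  (Finset.univ.filter fun i : ZMod n => α i = w).card

/-- `(C, α)` is a wall cycle: the edge coloring `α` of the cycle with `n` edges is surjective
onto the set `W` of walls and each wall colors an even number of edges. -/
def IsWallCycle (n : ℕ) [NeZero n] (α : ZMod n → W) : Prop :=
  Function.Surjective α ∧ ∀ w : W, Even (colorCount n α w)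

/-- The segment of the cycle consisting of the `m` consecutive edges
`i, i+1, …, i+m-1` crosses the wall `w`: it has an odd number of edges colored `w`. -/
def SegCrosses (n : ℕ) (α : ZMod n → W) (i : ZMod n) (m : ℕ) (w : W) : Prop :=
  Odd ((Finset.range m).filter fun k => α (i + (k : ZMod n)) = w).card

/-- The wall crossing distance between the vertices `u` and `v`: the number of walls crossed
by a segment of the cycle from `u` to `v`. -/
def wdist (n : ℕ) [NeZero n] (α : ZMod n → W) (u v : ZMod n) : ℕ :=
  {w : W | SegCrosses n α u ((v - u).val) w}.ncard

/-- Two distinct walls cross: some segment of the cycle begins and ends with one of the two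
walls and crosses the other. -/
def Crosses (n : ℕ) (α : ZMod n → W) (w₁ w₂ : W) : Prop :=
  w₁ ≠ w₂ ∧ ∃ (i : ZMod n) (m : ℕ), 1 ≤ m ∧ m ≤ n - 1 ∧
    ((α i = w₁ ∧ α (i + ((m - 1 : ℕ) : ZMod n)) = w₁ ∧ SegCrosses n α i m w₂) ∨
     (α i = w₂ ∧ α (i + ((m - 1 : ℕ) : ZMod n)) = w₂ ∧ SegCrosses n α i m w₁))

/-- The diameter, as a metric subspace of the cycle, of the set `X_w` of midpoints of edges
colored `w`: the distance in the cycle between the midpoints of edges `i` and `j` is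
`min((j-i) mod n, (i-j) mod n)`. -/
def diamX (n : ℕ) [NeZero n] (α : ZMod n → W) (w : W) : ℕ :=
  (Finset.univ.filter fun p : ZMod n × ZMod n => α p.1 = w ∧ α p.2 = w).sup
    fun p => min ((p.2 - p.1).val) ((p.1 - p.2).val)

/-- Lemma `fewappear`.  Let `(C, α)` be a wall cycle with wall set `W` and
suppose that, for some `ξ ∈ (0,1)`, the wall crossing distance satisfies
`d_α(u,v) ≥ ξ·|C|/2` for every antipodal pair of vertices `u, v` of `C` (the antipode of the
vertex `u` is `u + n/2`; `n` is even since `(C, α)` is a wall cycle).  Let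
`W' = {w ∈ W : exactly 2 edges of C are colored w}`.  Then `|W \ W'| ≤ ((1 − ξ)/ξ)·|W|`. -/
theorem lem_fewappear {W : Type*} [Fintype W] (n : ℕ) [NeZero n] (α : ZMod n → W)
    (hα : IsWallCycle n α) (ξ : ℝ) (hξ0 : 0 < ξ) (hξ1 : ξ < 1)
    (hd : ∀ u : ZMod n,
      ξ * ((n : ℝ) / 2) ≤ (wdist n α u (u + ((n / 2 : ℕ) : ZMod n)) : ℝ)) :
    ((Finset.univ.filter fun w : W => colorCount n α w ≠ 2).card : ℝ) ≤
      (1 - ξ) / ξ * (Fintype.card W : ℝ) := by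
  classical
  obtain ⟨hsurj, heven⟩ := hα
  set B := Finset.univ.filter fun w : W => colorCount n α w ≠ 2 with hB
  -- each wall appears at least twice
  have hge2 : ∀ w : W, 2 ≤ colorCount n α w := by
    intro w
    obtain ⟨i, hi⟩ := hsurj w
    have h1 : 0 < colorCount n α w := by
      apply Finset.card_pos.2
      exact ⟨i, by simp [hi]⟩
    obtain ⟨k, hk⟩ := heven w
    omega
  have hge4 : ∀ w ∈ B, 4 ≤ colorCount n α w := by
    intro w hw
    rw [hB, Finset.mem_filter] at hw
    obtain ⟨k, hk⟩ := heven w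
    have := hge2 w
    omega
  -- total count is n
  have hsum : ∑ w : W, colorCount n α w = n := by
    have := Finset.card_eq_sum_card_fiberwise
      (fun i (_ : i ∈ (Finset.univ : Finset (ZMod n))) => Finset.mem_univ (α i))
    rw [Finset.card_univ, ZMod.card] at this
    exact this.symm
  -- n ≥ 2 |W| + 2 |B|
  have hsplit : ∑ w : W, colorCount n α w =
      ∑ w ∈ B, colorCount n α w + ∑ w ∈ Bᶜ, colorCount n α w :=
    (Finset.sum_add_sum_compl B _).symm
  have h4B : 4 * B.card ≤ ∑ w ∈ B, colorCount n α w := by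
    calc 4 * B.card = ∑ _w ∈ B, 4 := by rw [Finset.sum_const]; ring
    _ ≤ _ := Finset.sum_le_sum hge4
  have h2C : 2 * Bᶜ.card ≤ ∑ w ∈ Bᶜ, colorCount n α w := by
    calc 2 * Bᶜ.card = ∑ _w ∈ Bᶜ, 2 := by rw [Finset.sum_const]; ring
    _ ≤ _ := Finset.sum_le_sum fun w _ => hge2 w
  have hcards : B.card + Bᶜ.card = Fintype.card W := by
    rw [Finset.card_add_card_compl]
  have hn : 2 * Fintype.card W + 2 * B.card ≤ n := by omega
  -- wdist is at most |W|
  have hwle : (wdist n α 0 (0 + ((n / 2 : ℕ) : ZMod n)) : ℝ) ≤ (Fintype.card W : ℝ) := by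
    have : wdist n α 0 (0 + ((n / 2 : ℕ) : ZMod n)) ≤ Fintype.card W := by
      unfold wdist
      calc _ ≤ (Set.univ : Set W).ncard :=
            Set.ncard_le_ncard (Set.subset_univ _) Set.finite_univ
        _ = Fintype.card W := by rw [Set.ncard_univ, Nat.card_eq_fintype_card]
    exact_mod_cast this
  have hξn : ξ * ((n : ℝ) / 2) ≤ (Fintype.card W : ℝ) := le_trans (hd 0) hwle
  have hnR : (2 * Fintype.card W + 2 * B.card : ℝ) ≤ (n : ℝ) := by exact_mod_cast hn
  rw [div_mul_eq_mul_div, le_div_iff₀ hξ0]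
  nlinarith [hξn, hnR, (by positivity : (0:ℝ) ≤ (B.card:ℝ))]

end ShortcutGraphs
end
end

section
/- Let (C, α) be a wall cycle and suppose that, for some ξ ∈ (0,1), the wall crossing distance satisfies d_α(u,v) ≥ ξ·|C|/2 for every antipodal pair of vertices u, v of C. Then every wall w crosses at least diam X_w − 1 − (1 − ξ)·|C|/2 other walls, where X_w is the set of midpoints of edges of C colored w and diam X_w is its diameter as a metric subspace of C. -/
open scoped Classical

noncomputable section

namespace ShortcutGraphs

variable {W : Type*}

lemma count_split (m₁ m₂ : ℕ) (h : m₁ ≤ m₂) (p : ℕ → Prop) [DecidablePred p] :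
    ((Finset.range m₂).filter p).card
      = ((Finset.range m₁).filter p).card + ((Finset.Ico m₁ m₂).filter p).card := by
  rw [Finset.range_eq_Ico,
    ← Finset.Ico_union_Ico_eq_Ico (Nat.zero_le m₁) h, Finset.filter_union,
    Finset.card_union_of_disjoint ((Finset.Ico_disjoint_Ico_consecutive 0 m₁ m₂).mono
      (Finset.filter_subset _ _) (Finset.filter_subset _ _)), ← Finset.range_eq_Ico]

lemma segCrosses_iff (n : ℕ) [NeZero n] (α : ZMod n → W) (i : ZMod n) (m : ℕ) (hm : m ≤ n)
    (w : W) : SegCrosses n α i m w ↔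
      Odd (((Finset.range m)).filter (fun k : ℕ => α (i + (k : ZMod n)) = w)).card := by
  rw [SegCrosses]
  have h1 : (do let a ← Finset.range m; pure ((a : ZMod n)))
      = (Finset.range m).image (fun a : ℕ => (a : ZMod n)) := by
    ext x
    simp [Bind.bind]
  rw [h1, Finset.filter_image]
  have h2 : ((Finset.range m).filter
      (fun a : ℕ => α (i + (a : ZMod n)) = w)).card
      = (((Finset.range m).filter (fun a : ℕ => α (i + (a : ZMod n)) = w)).image
          (fun a : ℕ => (a : ZMod n))).card := by
    rw [Finset.card_image_of_injOn]
    intro a ha b hb hab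
    simp only [Finset.coe_filter, Set.mem_setOf_eq, Finset.mem_range] at ha hb
    have : (a : ZMod n).val = (b : ZMod n).val := congrArg ZMod.val hab
    rwa [ZMod.val_natCast, ZMod.val_natCast, Nat.mod_eq_of_lt (lt_of_lt_of_le ha.1 hm),
      Nat.mod_eq_of_lt (lt_of_lt_of_le hb.1 hm)] at this
  rw [← h2]

/-- Lemma `diamints`.  Let `(C, α)` be a wall cycle and suppose that, for
some `ξ ∈ (0,1)`, the wall crossing distance satisfies `d_α(u,v) ≥ ξ·|C|/2` for every
antipodal pair of vertices `u, v` of `C`.  Then every wall `w` crosses at least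
`diam X_w − 1 − (1 − ξ)·|C|/2` other walls, where `X_w` is the set of midpoints of edges of
`C` colored `w`. -/
theorem lem_diamints {W : Type*} [Fintype W] (n : ℕ) [NeZero n] (α : ZMod n → W)
    (hα : IsWallCycle n α) (ξ : ℝ) (hξ0 : 0 < ξ) (hξ1 : ξ < 1)
    (hd : ∀ u : ZMod n,
      ξ * ((n : ℝ) / 2) ≤ (wdist n α u (u + ((n / 2 : ℕ) : ZMod n)) : ℝ)) :
    ∀ w : W, (diamX n α w : ℝ) - 1 - (1 - ξ) * ((n : ℝ) / 2) ≤
      ({w' : W | Crosses n α w w'}.ncard : ℝ) := by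
  intro w
  set D := diamX n α w with hDdef
  have hn : 0 < n := Nat.pos_of_ne_zero (NeZero.ne n)
  by_cases h0 : (D : ℝ) - 1 - (1 - ξ) * ((n : ℝ) / 2) ≤ 0
  · exact h0.trans (Nat.cast_nonneg _)
  push_neg at h0
  have hn2 : (0 : ℝ) < (n : ℝ) / 2 := by positivity
  have hD1 : (1 : ℝ) < (D : ℝ) := by nlinarith
  have hD2 : 2 ≤ D := by
    have : 1 < D := by exact_mod_cast hD1
    omega
  -- extremal pair
  set s := Finset.univ.filter (fun p : ZMod n × ZMod n => α p.1 = w ∧ α p.2 = w) with hs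
  have hne : s.Nonempty := by
    by_contra hemp
    rw [Finset.not_nonempty_iff_eq_empty] at hemp
    have hD0 : D = 0 := by
      rw [hDdef, diamX, ← hs, hemp, Finset.sup_empty]; rfl
    omega
  obtain ⟨p, hp, hsup⟩ := Finset.exists_mem_eq_sup s hne
    (fun p => min ((p.2 - p.1).val) ((p.1 - p.2).val))
  rw [hs, Finset.mem_filter] at hp
  obtain ⟨-, hp1, hp2⟩ := hp
  have hDsup : D = min ((p.2 - p.1).val) ((p.1 - p.2).val) := hsup
  obtain ⟨i, j, hi, hj, hij, hle⟩ :
      ∃ i j : ZMod n, α i = w ∧ α j = w ∧ (j - i).val = D ∧ (j - i).val ≤ (i - j).val := by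
    rcases le_total ((p.2 - p.1).val) ((p.1 - p.2).val) with hle | hle
    · exact ⟨p.1, p.2, hp1, hp2, by rw [hDsup, min_eq_left hle], hle⟩
    · exact ⟨p.2, p.1, hp2, hp1, by rw [hDsup, min_eq_right hle], hle⟩
  have hjine : j - i ≠ 0 := by
    intro h
    rw [h, ZMod.val_zero] at hij
    omega
  have hsum : (j - i).val + (i - j).val = n := by
    have hneg : i - j = -(j - i) := by ring
    rw [hneg, ZMod.neg_val, if_neg hjine]
    have := (j - i).val_lt
    omega
  have hDhalf : D ≤ n / 2 := by omega
  set h2 := n / 2 with hh2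
  have hn4 : 4 ≤ n := by omega
  set T := Finset.univ.filter (fun w' : W => SegCrosses n α i h2 w') with hT
  have hval : ((i + ((h2 : ℕ) : ZMod n)) - i).val = h2 := by
    have h1 : (i + ((h2 : ℕ) : ZMod n)) - i = ((h2 : ℕ) : ZMod n) := by ring
    rw [h1, ZMod.val_natCast, Nat.mod_eq_of_lt (by omega)]
  have hwd : (wdist n α i (i + ((h2 : ℕ) : ZMod n)) : ℕ) = T.card := by
    rw [wdist]
    simp only [hval]
    rw [Set.ncard_eq_toFinset_card', Set.toFinset_setOf]
  have hdT : ξ * ((n : ℝ) / 2) ≤ (T.card : ℝ) := by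
    have := hd i
    rw [hh2] at hwd
    rw [hwd] at this
    exact this
  set S := Finset.univ.filter (fun w' : W => Crosses n α w w') with hS
  have hNS : {w' : W | Crosses n α w w'}.ncard = S.card := by
    rw [Set.ncard_eq_toFinset_card', Set.toFinset_setOf]
  rw [hNS]
  have hjd : j = i + ((D : ℕ) : ZMod n) := by
    have h1 : ((D : ℕ) : ZMod n) = j - i := by
      rw [← hij, ZMod.natCast_val, ZMod.cast_id]
    rw [h1]; ring
  have hedgeD : α (i + ((D : ℕ) : ZMod n)) = w := by rw [← hjd]; exact hj
  have hh2n : (h2 : ℝ) ≤ (n : ℝ) / 2 := by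
    have : h2 * 2 ≤ n := by omega
    have := (Nat.cast_le (α := ℝ)).2 this
    push_cast at this
    linarith
  rcases eq_or_lt_of_le hDhalf with hcase | hcase
  · -- D = n/2
    have hsub : T ⊆ insert w S := by
      intro w' hw'
      rw [hT, Finset.mem_filter] at hw'
      rw [Finset.mem_insert]
      by_cases hww : w' = w
      · exact Or.inl hww
      right
      rw [hS, Finset.mem_filter]
      have hedge : α (i + ((h2 : ℕ) : ZMod n)) = w := by rw [← hcase]; exact hedgeD
      have hseg : SegCrosses n α i (h2 + 1) w' := by
        rw [segCrosses_iff n α i (h2 + 1) (by omega) w']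
        have heq : ((Finset.range (h2 + 1)).filter fun k : ℕ => α (i + (k : ZMod n)) = w').card
            = ((Finset.range h2).filter fun k : ℕ => α (i + (k : ZMod n)) = w').card := by
          rw [Finset.range_add_one, Finset.filter_insert, if_neg]
          intro hc
          exact hww (by rw [← hc, hedge])
        rw [heq]
        exact (segCrosses_iff n α i h2 (by omega) w').1 hw'.2
      refine ⟨Finset.mem_univ _, fun h => hww h.symm, i, h2 + 1, by omega, by omega,
        Or.inl ⟨hi, by simpa using hedge, hseg⟩⟩
    have hcard : T.card ≤ S.card + 1 := le_trans (Finset.card_le_card hsub)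
      (Finset.card_insert_le _ _)
    have hDr : (D : ℝ) ≤ (n : ℝ) / 2 := by rw [hcase]; exact_mod_cast hh2n
    have : (T.card : ℝ) ≤ (S.card : ℝ) + 1 := by exact_mod_cast hcard
    linarith
  · -- D < n/2
    set B := (Finset.Ico (D + 1) h2).image (fun k : ℕ => α (i + (k : ZMod n))) with hB
    have hsub : T ⊆ insert w (S ∪ B) := by
      intro w' hw'
      rw [hT, Finset.mem_filter] at hw'
      by_cases hww : w' = w
      · simp [hww]
      by_cases hBmem : w' ∈ B
      · simp [hBmem]
      refine Finset.mem_insert.2 (Or.inr (Finset.mem_union_left _ ?_))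
      rw [hS, Finset.mem_filter]
      have htail : ((Finset.Ico (D + 1) h2).filter fun k : ℕ => α (i + (k : ZMod n)) = w').card
          = 0 := by
        rw [Finset.card_eq_zero, Finset.filter_eq_empty_iff]
        intro k hk hc
        exact hBmem (Finset.mem_image.2 ⟨k, hk, hc⟩)
      have hseg : SegCrosses n α i (D + 1) w' := by
        have hodd := (segCrosses_iff n α i h2 (by omega) w').1 hw'.2
        rw [count_split (D + 1) h2 (by omega) (fun k : ℕ => α (i + (k : ZMod n)) = w'), htail,
          Nat.add_zero] at hodd
        exact (segCrosses_iff n α i (D + 1) (by omega) w').2 hodd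
      refine ⟨Finset.mem_univ _, fun h => hww h.symm, i, D + 1, by omega, by omega,
        Or.inl ⟨hi, by simpa using hedgeD, hseg⟩⟩
    have hcard : T.card ≤ S.card + B.card + 1 := by
      calc T.card ≤ (S ∪ B).card + 1 := le_trans (Finset.card_le_card hsub)
            (Finset.card_insert_le _ _)
        _ ≤ S.card + B.card + 1 := by
            have := Finset.card_union_le S B
            omega
    have hBcard : B.card ≤ h2 - (D + 1) := by
      rw [hB]
      exact le_trans Finset.card_image_le (by rw [Nat.card_Ico])
    have hfin : T.card ≤ S.card + (h2 - (D + 1)) + 1 := by omega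
    have hfinR : (T.card : ℝ) ≤ (S.card : ℝ) + ((h2 : ℝ) - (D : ℝ) - 1) + 1 := by
      have hc : ((h2 - (D + 1) : ℕ) : ℝ) = (h2 : ℝ) - (D : ℝ) - 1 := by
        have : D + 1 ≤ h2 := by omega
        push_cast [Nat.cast_sub this]
        ring
      have := (Nat.cast_le (α := ℝ)).2 hfin
      push_cast at this ⊢
      rw [hc] at this
      linarith
    linarith

end ShortcutGraphs
end
end

section
/- Let (C, α) be a d-dimensional wall cycle. If the wall crossing distance satisfies d_α(u,v) ≥ ((5d − 1)/(5d))·|C|/2 for every antipodal pair of vertices u, v of C, then |C| ≤ 50d²/(5d − 1). -/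
open scoped Classical

noncomputable section

namespace ShortcutGraphs

variable {W : Type*}

section Aux

variable (n : ℕ) [NeZero n] (α : ZMod n → W)

/-- side parity of vertex `v` w.r.t. wall `w`: parity of `w`-edges among edges `0..v-1`. -/
def sp (w : W) (v : ZMod n) : ZMod 2 :=
  (((Finset.range v.val).filter fun i : ℕ => α (i : ZMod n) = w).card : ZMod 2)

lemma zmod2_add_one_ne (x : ZMod 2) : x + 1 ≠ x := by revert x; decide

lemma zmod2_sub_eq_one_iff (x y : ZMod 2) : x - y = 1 ↔ x ≠ y := by revert x y; decide

lemma zmod2_xor (a b c : ZMod 2) : (a ≠ b) ↔ ¬ ((a ≠ c) ↔ (b ≠ c)) := by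
  revert a b c; decide

lemma zmod2_ne_ne (a b c : ZMod 2) (h1 : a ≠ c) (h2 : b ≠ c) : a = b := by
  revert a b c; decide

lemma cast_odd_iff (c : ℕ) : (c : ZMod 2) = 1 ↔ Odd c := by
  rw [Nat.odd_iff]
  rcases Nat.mod_two_eq_zero_or_one c with h | h <;>
    rw [← ZMod.natCast_mod, h] <;> simp

lemma cnt_range_n (w : W) :
    ((Finset.range n).filter fun i : ℕ => α (i : ZMod n) = w).card = colorCount n α w := by
  classical
  unfold colorCount
  refine Finset.card_bij (fun i _ => ((i : ZMod n))) ?_ ?_ ?_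
  · intro a ha
    simp only [Finset.mem_filter, Finset.mem_range] at ha ⊢
    exact ⟨Finset.mem_univ _, ha.2⟩
  · intro a ha b hb hab
    simp only [Finset.mem_filter, Finset.mem_range] at ha hb
    have := congrArg ZMod.val hab
    rwa [ZMod.val_cast_of_lt ha.1, ZMod.val_cast_of_lt hb.1] at this
  · intro b hb
    simp only [Finset.mem_filter, Finset.mem_range] at hb ⊢
    exact ⟨b.val, ⟨b.val_lt, by rw [ZMod.natCast_zmod_val]; exact hb.2⟩, ZMod.natCast_zmod_val b⟩

lemma sp_step (hn : 2 ≤ n) (hE : ∀ w, Even (colorCount n α w)) (w : W) (v : ZMod n) :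
    sp n α w (v + 1) = sp n α w v + (if α v = w then 1 else 0) := by
  classical
  have hv1 : (1 : ZMod n).val = 1 := by
    rw [ZMod.val_one_eq_one_mod, Nat.mod_eq_of_lt hn]
  have hval : (v + 1).val = (v.val + 1) % n := by rw [ZMod.val_add, hv1]
  have hcast : ((v.val : ℕ) : ZMod n) = v := ZMod.natCast_zmod_val v
  by_cases hlt : v.val + 1 < n
  · have h1 : (v + 1).val = v.val + 1 := by rw [hval, Nat.mod_eq_of_lt hlt]
    unfold sp
    rw [h1, Finset.range_add_one, Finset.filter_insert]
    by_cases hc : α ((v.val : ℕ) : ZMod n) = w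
    · rw [if_pos hc, Finset.card_insert_of_notMem (by simp), if_pos (hcast ▸ hc)]
      push_cast; ring
    · rw [if_neg hc, if_neg (by rwa [hcast] at hc)]
      simp
  · have hn0 : v.val + 1 = n := by have := v.val_lt; omega
    have h0 : v + 1 = 0 := by
      have h01 : ((v.val + 1 : ℕ) : ZMod n) = 0 := by rw [hn0, ZMod.natCast_self]
      rwa [Nat.cast_add, Nat.cast_one, hcast] at h01
    have hxx : ∀ x : ZMod 2, x + x = 0 := by decide
    have hfull : ((Finset.range (v.val + 1)).filter fun i : ℕ => α (i : ZMod n) = w).card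
        = colorCount n α w := by rw [hn0, cnt_range_n]
    have heven2 : ((((Finset.range (v.val + 1)).filter
        fun i : ℕ => α (i : ZMod n) = w).card : ℕ) : ZMod 2) = 0 := by
      rw [hfull]
      obtain ⟨r, hr⟩ := hE w
      rw [hr]; push_cast; exact hxx r
    unfold sp
    rw [h0, ZMod.val_zero]
    by_cases hc : α v = w
    · rw [if_pos hc]
      rw [Finset.range_add_one, Finset.filter_insert, if_pos (show α ((v.val:ℕ):ZMod n) = w by rw [hcast]; exact hc),
        Finset.card_insert_of_notMem (by simp)] at heven2
      push_cast at heven2 ⊢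
      simp only [Finset.range_zero, Finset.filter_empty, Finset.card_empty, Nat.cast_zero]
      exact heven2.symm
    · rw [if_neg hc]
      rw [Finset.range_add_one, Finset.filter_insert, if_neg (by rwa [hcast])] at heven2
      simp only [Finset.range_zero, Finset.filter_empty, Finset.card_empty, Nat.cast_zero,
        add_zero]
      exact heven2.symm

lemma segCount_parity (hn : 2 ≤ n) (hE : ∀ w, Even (colorCount n α w)) (w : W) (i : ZMod n) :
    ∀ m : ℕ, ((((Finset.range m).filter fun k : ℕ => α (i + (k : ZMod n)) = w).card : ℕ) : ZMod 2)
      = sp n α w (i + (m : ZMod n)) - sp n α w i := by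
  intro m
  induction m with
  | zero => simp
  | succ m ih =>
      have hpt : i + ((m + 1 : ℕ) : ZMod n) = (i + (m : ZMod n)) + 1 := by push_cast; ring
      have hstep := sp_step n α hn hE w (i + (m : ZMod n))
      rw [Finset.range_add_one, Finset.filter_insert]
      by_cases hc : α (i + (m : ZMod n)) = w
      · rw [if_pos hc, Finset.card_insert_of_notMem (by simp)]
        rw [if_pos hc] at hstep
        push_cast
        rw [ih, ← add_assoc, hstep]; ring
      · rw [if_neg hc, ih]
        rw [if_neg hc, add_zero] at hstep
        rw [hpt, hstep]

lemma segCrosses_iff_s12 (hn : 2 ≤ n) (hE : ∀ w, Even (colorCount n α w)) (w : W) (i : ZMod n)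
    (m : ℕ) (hm : m ≤ n) :
    SegCrosses n α i m w ↔ sp n α w (i + (m : ZMod n)) ≠ sp n α w i := by
  letI : DecidableEq (ZMod n) := fun a b => Classical.propDecidable _
  unfold SegCrosses
  have hset : ((Finset.range m) >>= fun a : ℕ => (pure ((a : ZMod n)) : Finset (ZMod n)))
      = (Finset.range m).image (fun a : ℕ => (a : ZMod n)) := by
    exact Finset.sup_singleton_apply (Finset.range m) (fun a : ℕ => (a : ZMod n))
  rw [hset, Finset.filter_image]
  have hinj : Set.InjOn (fun a : ℕ => (a : ZMod n)) (Finset.range m) := by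
    intro a ha b hb hab
    simp only [Finset.coe_range, Set.mem_Iio] at ha hb
    have := congrArg ZMod.val hab
    rwa [ZMod.val_cast_of_lt (lt_of_lt_of_le ha hm),
      ZMod.val_cast_of_lt (lt_of_lt_of_le hb hm)] at this
  rw [Finset.card_image_of_injOn (hinj.mono (Finset.coe_subset.2 (Finset.filter_subset _ _)))]
  rw [← cast_odd_iff, segCount_parity n α hn hE w i m, zmod2_sub_eq_one_iff]

lemma crosses_symm {n : ℕ} {α : ZMod n → W} {w₁ w₂ : W} (h : Crosses n α w₁ w₂) :
    Crosses n α w₂ w₁ := by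
  obtain ⟨hne, i, m, h1, h2, h3⟩ := h
  exact ⟨hne.symm, i, m, h1, h2, h3.symm⟩

lemma boundary_const (hn : 2 ≤ n) (hE : ∀ w, Even (colorCount n α w))
    (hsurj : Function.Surjective α) {w₁ w₂ : W}
    (hne : w₁ ≠ w₂) (hcr : ¬ Crosses n α w₁ w₂) {e e' : ZMod n}
    (he : α e = w₁) (he' : α e' = w₁) : sp n α w₂ e = sp n α w₂ e' := by
  have hstep2 : ∀ x : ZMod n, α x ≠ w₂ → sp n α w₂ (x + 1) = sp n α w₂ x := by
    intro x hx
    rw [sp_step n α hn hE w₂ x, if_neg hx, add_zero]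
  have key : ∀ f f' : ZMod n, α f = w₁ → α f' = w₁ → (f' - f).val ≤ n - 2 →
      sp n α w₂ f = sp n α w₂ f' := by
    intro f f' hf hf' hv
    set m := (f' - f).val + 1 with hm
    have h1 : 1 ≤ m := by omega
    have h2 : m ≤ n - 1 := by omega
    have hncr : ¬ SegCrosses n α f m w₂ := by
      intro hsc
      refine hcr ⟨hne, f, m, h1, h2, Or.inl ⟨hf, ?_, hsc⟩⟩
      have hm1 : ((m - 1 : ℕ) : ZMod n) = f' - f := by
        rw [hm, Nat.add_sub_cancel, ZMod.natCast_zmod_val]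
      rw [hm1, show f + (f' - f) = f' by ring]
      exact hf'
    rw [segCrosses_iff_s12 n α hn hE w₂ f m (by omega)] at hncr
    have hfm : f + ((m : ℕ) : ZMod n) = f' + 1 := by
      rw [hm]
      push_cast [ZMod.natCast_zmod_val]
      ring
    rw [hfm] at hncr
    have hh := not_ne_iff.mp hncr
    rw [hstep2 f' (fun h => hne (hf'.symm.trans h))] at hh
    exact hh.symm
  by_cases hee : e = e'
  · rw [hee]
  · by_cases hv1 : (e' - e).val ≤ n - 2
    · exact key e e' he he' hv1
    · have hv1' : (e' - e).val = n - 1 := by have := (e' - e).val_lt; omega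
      by_cases hv2 : (e - e').val ≤ n - 2
      · exact (key e' e he' he hv2).symm
      · have hv2' : (e - e').val = n - 1 := by have := (e - e').val_lt; omega
        have heq : e' - e = e - e' := ZMod.val_injective n (hv1'.trans hv2'.symm)
        have hsum : (e' - e) + (e' - e) = 0 := by nth_rewrite 2 [heq]; ring
        have hcast : (((e' - e).val + (e' - e).val : ℕ) : ZMod n) = 0 := by
          push_cast [ZMod.natCast_zmod_val]
          exact hsum
        rw [ZMod.natCast_eq_zero_iff] at hcast
        rw [hv1'] at hcast
        have hd2 : n ∣ 2 := by
          have harith : n * 2 - ((n - 1) + (n - 1)) = 2 := by omega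
          have := Nat.dvd_sub (Dvd.intro 2 rfl) hcast
          rwa [harith] at this
        have hn2 : n = 2 := by
          have := Nat.le_of_dvd two_pos hd2
          omega
        subst hn2
        obtain ⟨f, hf⟩ := hsurj w₂
        have he'' : e' = e + 1 := by
          have h1' : e' - e = (1 : ZMod 2) := by
            apply ZMod.val_injective
            rw [hv1']
            decide
          have := sub_eq_iff_eq_add.mp h1'
          rw [this]; ring
        have hfe : f = e ∨ f = e + 1 := by
          have hh : ∀ x y : ZMod 2, x = y ∨ x = y + 1 := by decide
          exact hh f e
        rcases hfe with h | h
        · subst h; exact absurd (he.symm.trans hf) hne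
        · rw [← he''] at h; subst h; exact absurd (he'.symm.trans hf) hne

lemma missing_pattern (hn : 2 ≤ n) (hE : ∀ w, Even (colorCount n α w))
    (hsurj : Function.Surjective α) {w₁ w₂ : W} (hne : w₁ ≠ w₂)
    (hcr : ¬ Crosses n α w₁ w₂) :
    ∃ c₁ c₂ : ZMod 2, ∀ v, sp n α w₁ v = c₁ ∨ sp n α w₂ v = c₂ := by
  obtain ⟨e₀, he₀⟩ := hsurj w₁
  obtain ⟨f₀, hf₀⟩ := hsurj w₂
  set c₂ := sp n α w₂ e₀ with hc₂
  set c₁ := sp n α w₁ f₀ with hc₁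
  have key2 : ∀ e, α e = w₁ → sp n α w₂ e = c₂ := fun e he =>
    boundary_const n α hn hE hsurj hne hcr he he₀
  have key1 : ∀ f, α f = w₂ → sp n α w₁ f = c₁ := fun f hf =>
    boundary_const n α hn hE hsurj hne.symm (fun h => hcr (crosses_symm h)) hf hf₀
  refine ⟨c₁, c₂, fun v => ?_⟩
  by_cases hv : sp n α w₂ v = c₂
  · exact Or.inr hv
  left
  -- backward walk to the previous w₂-edge
  have hex : ∃ j : ℕ, α (v - 1 - (j : ZMod n)) = w₂ := by
    refine ⟨(v - 1 - f₀).val, ?_⟩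
    rw [ZMod.natCast_zmod_val]
    rw [show v - 1 - (v - 1 - f₀) = f₀ by ring]
    exact hf₀
  classical
  set j₀ := Nat.find hex with hj₀def
  have hj₀ : α (v - 1 - (j₀ : ZMod n)) = w₂ := Nat.find_spec hex
  have hmin : ∀ j < j₀, ¬ α (v - 1 - (j : ZMod n)) = w₂ := fun j hj => Nat.find_min hex hj
  have claim : ∀ j ≤ j₀, sp n α w₂ (v - (j : ZMod n)) = sp n α w₂ v ∧
      sp n α w₁ (v - (j : ZMod n)) = sp n α w₁ v := by
    intro j
    induction j with
    | zero => intro _; simp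
    | succ j ih =>
        intro hj
        have ihj := ih (by omega)
        have hedge : v - 1 - (j : ZMod n) = v - ((j + 1 : ℕ) : ZMod n) := by
          push_cast; ring
        have hsucc : (v - ((j + 1 : ℕ) : ZMod n)) + 1 = v - (j : ZMod n) := by
          push_cast; ring
        have hne2 : α (v - ((j + 1 : ℕ) : ZMod n)) ≠ w₂ := by
          rw [← hedge]; exact hmin j (by omega)
        have hne1 : α (v - ((j + 1 : ℕ) : ZMod n)) ≠ w₁ := by
          intro h
          have h2 := key2 _ h
          have hstep := sp_step n α hn hE w₂ (v - ((j + 1 : ℕ) : ZMod n))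
          rw [if_neg hne2, add_zero, hsucc] at hstep
          rw [← hstep, ihj.1] at h2
          exact hv h2
        constructor
        · have hstep := sp_step n α hn hE w₂ (v - ((j + 1 : ℕ) : ZMod n))
          rw [if_neg hne2, add_zero, hsucc] at hstep
          rw [← hstep]; exact ihj.1
        · have hstep := sp_step n α hn hE w₁ (v - ((j + 1 : ℕ) : ZMod n))
          rw [if_neg hne1, add_zero, hsucc] at hstep
          rw [← hstep]; exact ihj.2
  have hfinal : sp n α w₁ (v - (j₀ : ZMod n)) = c₁ := by
    have hf' := key1 _ hj₀
    have hstep := sp_step n α hn hE w₁ (v - 1 - (j₀ : ZMod n))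
    rw [if_neg (fun h => hne (h.symm.trans hj₀)), add_zero,
      show (v - 1 - (j₀ : ZMod n)) + 1 = v - (j₀ : ZMod n) by ring] at hstep
    rw [hstep, hf']
  rw [← (claim j₀ le_rfl).2, hfinal]


end Aux

section Aux2

variable (n : ℕ) [NeZero n] (α : ZMod n → W) [Fintype W]

lemma wdist_eq (hn : 2 ≤ n) (hE : ∀ w, Even (colorCount n α w)) (u : ZMod n) :
    wdist n α u (u + ((n / 2 : ℕ) : ZMod n))
      = (Finset.univ.filter fun w : W =>
          sp n α w (u + ((n / 2 : ℕ) : ZMod n)) ≠ sp n α w u).card := by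
  unfold wdist
  rw [add_sub_cancel_left]
  have hval : (((n / 2 : ℕ) : ZMod n)).val = n / 2 :=
    ZMod.val_cast_of_lt (Nat.div_lt_self (by omega) one_lt_two)
  rw [hval]
  have hs : {w : W | SegCrosses n α u (n / 2) w} = ↑(Finset.univ.filter fun w : W =>
      sp n α w (u + ((n / 2 : ℕ) : ZMod n)) ≠ sp n α w u) := by
    ext w
    simp [segCrosses_iff_s12 n α hn hE w u (n / 2) (Nat.div_le_self n 2)]
  rw [hs, Set.ncard_coe_finset]

end Aux2


section Mirsky

variable {β γ : Type*}

lemma mirsky_aux (d : ℕ) (O : β → Finset γ) :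
    ∀ N : ℕ, ∀ T : Finset β,
      T.card ≤ N →
      (∀ x ∈ T, ∀ y ∈ T, O x = O y → x = y) →
      (∀ S ⊆ T, (∀ x ∈ S, ∀ y ∈ S, x ≠ y → ¬ O x ⊆ O y) → S.card ≤ d) →
      ∃ C ⊆ T, (∀ x ∈ C, ∀ y ∈ C, O x ⊆ O y ∨ O y ⊆ O x) ∧ T.card ≤ d * C.card := by
  classical
  intro N
  induction N with
  | zero =>
      intro T hT _ _
      refine ⟨∅, Finset.empty_subset _, ?_, ?_⟩
      · intro x hx; exact absurd hx (Finset.notMem_empty x)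
      · simpa using hT
  | succ N ih =>
      intro T hT hinj hanti
      by_cases hTe : T = ∅
      · subst hTe
        refine ⟨∅, Finset.empty_subset _, ?_, ?_⟩
        · intro x hx; exact absurd hx (Finset.notMem_empty x)
        · simp
      obtain ⟨x₀, hx₀T, hx₀max⟩ :=
        Finset.exists_max_image T (fun x => (O x).card) (Finset.nonempty_of_ne_empty hTe)
      set M := T.filter (fun x => ∀ y ∈ T, ¬ O x ⊂ O y) with hM
      have hx₀M : x₀ ∈ M := by
        rw [hM, Finset.mem_filter]
        exact ⟨hx₀T, fun y hy hss =>
          (Nat.not_lt.mpr (hx₀max y hy)) (Finset.card_lt_card hss)⟩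
      have hMcard : M.card ≤ d := by
        refine hanti M (Finset.filter_subset _ _) ?_
        intro x hx y hy hxy hsub
        rw [hM, Finset.mem_filter] at hx hy
        have hne : O x ≠ O y := fun he => hxy (hinj x hx.1 y hy.1 he)
        exact hx.2 y hy.1 (HasSubset.Subset.ssubset_of_ne hsub hne)
      have hcards : (T \ M).card + M.card = T.card :=
        Finset.card_sdiff_add_card_eq_card (Finset.filter_subset _ _)
      have hTM : (T \ M).card ≤ N := by
        have hlt : (T \ M).card < T.card := by
          refine Finset.card_lt_card ⟨Finset.sdiff_subset, fun hcon => ?_⟩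
          have := hcon hx₀T
          rw [Finset.mem_sdiff] at this
          exact this.2 hx₀M
        omega
      obtain ⟨C', hC'sub, hC'chain, hC'card⟩ :=
        ih (T \ M) hTM
          (fun x hx y hy => hinj x (Finset.sdiff_subset hx) y (Finset.sdiff_subset hy))
          (fun S hS h => hanti S (hS.trans Finset.sdiff_subset) h)
      by_cases hC'e : C' = ∅
      · refine ⟨{x₀}, Finset.singleton_subset_iff.mpr hx₀T, ?_, ?_⟩
        · intro x hx y hy
          rw [Finset.mem_singleton] at hx hy
          rw [hx, hy]
          exact Or.inl subset_rfl
        · subst hC'e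
          simp only [Finset.card_empty, Nat.mul_zero, Nat.le_zero] at hC'card
          rw [Finset.card_singleton, mul_one]
          omega
      obtain ⟨t₀, ht₀C', ht₀max⟩ :=
        Finset.exists_max_image C' (fun x => (O x).card) (Finset.nonempty_of_ne_empty hC'e)
      have htop : ∀ c ∈ C', O c ⊆ O t₀ := by
        intro c hc
        rcases hC'chain c hc t₀ ht₀C' with h | h
        · exact h
        · have heq := Finset.eq_of_subset_of_card_le h (ht₀max c hc)
          rw [heq]
      have ht₀T : t₀ ∈ T \ M := hC'sub ht₀C'
      have hex : ∃ y ∈ T, O t₀ ⊂ O y := by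
        rw [Finset.mem_sdiff, hM, Finset.mem_filter] at ht₀T
        have h2 := ht₀T.2
        push_neg at h2
        exact h2 ht₀T.1
      set U := T.filter (fun y => O t₀ ⊂ O y) with hU
      have hUne : U.Nonempty := by
        obtain ⟨y₁, hy₁T, hy₁⟩ := hex
        exact ⟨y₁, Finset.mem_filter.mpr ⟨hy₁T, hy₁⟩⟩
      obtain ⟨m₀, hm₀U, hm₀max⟩ := Finset.exists_max_image U (fun x => (O x).card) hUne
      have hm₀U' : m₀ ∈ T ∧ O t₀ ⊂ O m₀ := Finset.mem_filter.mp hm₀U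
      have hm₀M : m₀ ∈ M := by
        rw [hM, Finset.mem_filter]
        refine ⟨hm₀U'.1, fun y hy hss => ?_⟩
        have hyU : y ∈ U := Finset.mem_filter.mpr ⟨hy, hm₀U'.2.trans hss⟩
        exact (Nat.not_lt.mpr (hm₀max y hyU)) (Finset.card_lt_card hss)
      have hm₀C' : m₀ ∉ C' := fun hc => hm₀U'.2.not_subset (htop m₀ hc)
      refine ⟨insert m₀ C', ?_, ?_, ?_⟩
      · intro x hx
        rcases Finset.mem_insert.mp hx with h | h
        · rw [h]; exact hm₀U'.1
        · exact Finset.sdiff_subset (hC'sub h)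
      · intro x hx y hy
        rcases Finset.mem_insert.mp hx with h | h <;> rcases Finset.mem_insert.mp hy with h' | h'
        · rw [h, h']; exact Or.inl subset_rfl
        · rw [h]; exact Or.inr ((htop y h').trans hm₀U'.2.subset)
        · rw [h']; exact Or.inl ((htop x h).trans hm₀U'.2.subset)
        · exact hC'chain x h y h'
      · rw [Finset.card_insert_of_notMem hm₀C']
        have hmul : d * (C'.card + 1) = d * C'.card + d := by ring
        omega

lemma mirsky (d : ℕ) (O : β → Finset γ) (T : Finset β)
    (hinj : ∀ x ∈ T, ∀ y ∈ T, O x = O y → x = y)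
    (hanti : ∀ S ⊆ T, (∀ x ∈ S, ∀ y ∈ S, x ≠ y → ¬ O x ⊆ O y) → S.card ≤ d) :
    ∃ C ⊆ T, (∀ x ∈ C, ∀ y ∈ C, O x ⊆ O y ∨ O y ⊆ O x) ∧ T.card ≤ d * C.card :=
  mirsky_aux d O T.card T le_rfl hinj hanti

end Mirsky

/-- Theorem `wallcycle`.  Let `(C, α)` be a `d`-dimensional wall cycle
(`d` is the size of the largest set of pairwise crossing walls, which is at least `1`, so
the dimension `max{1, d}` equals `d`).  If the wall crossing distance satisfies
`d_α(u,v) ≥ ((5d − 1)/(5d))·|C|/2` for every antipodal pair of vertices `u, v` of `C`, then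
`|C| ≤ 50d²/(5d − 1)`. -/
theorem thm_wallcycle {W : Type*} [Fintype W] (n : ℕ) [NeZero n] (α : ZMod n → W)
    (hα : IsWallCycle n α) (d : ℕ)
    (hdim₁ : ∀ S : Finset W, (S : Set W).Pairwise (Crosses n α) → S.card ≤ d)
    (hdim₂ : ∃ S : Finset W, (S : Set W).Pairwise (Crosses n α) ∧ S.card = d)
    (hd : ∀ u : ZMod n,
      (5 * (d : ℝ) - 1) / (5 * (d : ℝ)) * ((n : ℝ) / 2) ≤
        (wdist n α u (u + ((n / 2 : ℕ) : ZMod n)) : ℝ)) :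
    (n : ℝ) ≤ 50 * (d : ℝ) ^ 2 / (5 * (d : ℝ) - 1) := by
  classical
  obtain ⟨hsurj, hE⟩ := hα
  -- `d ≥ 1`
  have hd1 : 1 ≤ d := by
    have h := hdim₁ {α 0} (by rw [Finset.coe_singleton]; exact Set.pairwise_singleton _ _)
    simpa using h
  -- every wall has at least two edges, hence `2 * |W| ≤ n`
  have hsum : ∑ w : W, colorCount n α w = n := by
    have h := Finset.card_eq_sum_card_fiberwise
      (f := α) (s := Finset.univ) (t := Finset.univ) (fun x _ => Finset.mem_univ (α x))
    rw [Finset.card_univ, ZMod.card] at h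
    exact h.symm
  have h2w : ∀ w : W, 2 ≤ colorCount n α w := by
    intro w
    obtain ⟨i, hi⟩ := hsurj w
    have hpos : 0 < colorCount n α w :=
      Finset.card_pos.mpr ⟨i, Finset.mem_filter.mpr ⟨Finset.mem_univ _, hi⟩⟩
    obtain ⟨r, hr⟩ := hE w
    omega
  have hWn : 2 * Fintype.card W ≤ n := by
    calc 2 * Fintype.card W = ∑ _w : W, 2 := by
          rw [Finset.sum_const, Finset.card_univ, smul_eq_mul, mul_comm]
      _ ≤ ∑ w : W, colorCount n α w := Finset.sum_le_sum (fun w _ => h2w w)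
      _ = n := hsum
  have hWpos : 0 < Fintype.card W := Fintype.card_pos_iff.mpr ⟨α 0⟩
  have hn : 2 ≤ n := by omega
  set p : ZMod n := ((n / 2 : ℕ) : ZMod n) with hp
  set sep : ZMod n → Finset W :=
    fun u => Finset.univ.filter (fun w => sp n α w (u + p) ≠ sp n α w u) with hsep
  have hwd : ∀ u : ZMod n,
      (5 * (d : ℝ) - 1) / (5 * (d : ℝ)) * ((n : ℝ) / 2) ≤ ((sep u).card : ℝ) := by
    intro u
    have h := hd u
    rwa [wdist_eq n α hn hE u] at h
  -- the side sets
  set O : W → Finset (ZMod n) :=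
    fun w => Finset.univ.filter (fun v => sp n α w v ≠ sp n α w 0) with hO
  have hOmem : ∀ w v, v ∈ O w ↔ sp n α w v ≠ sp n α w 0 := by
    intro w v; rw [hO]; simp
  -- edges are characterized by the side sets
  have hedge : ∀ (w : W) (v : ZMod n), α v = w ↔ sp n α w (v + 1) ≠ sp n α w v := by
    intro w v
    have hstep := sp_step n α hn hE w v
    constructor
    · intro h; rw [if_pos h] at hstep; rw [hstep]; exact zmod2_add_one_ne _
    · intro h
      by_contra hc
      rw [if_neg hc, add_zero] at hstep
      exact h hstep
  have hinj : ∀ x y : W, O x = O y → x = y := by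
    intro x y hxy
    obtain ⟨e, he⟩ := hsurj x
    have hmm : ∀ v : ZMod n, (v ∈ O x) ↔ (v ∈ O y) := fun v => by rw [hxy]
    have hx : sp n α x (e + 1) ≠ sp n α x e := (hedge x e).mp he
    have hx' : ¬ ((sp n α x (e+1) ≠ sp n α x 0) ↔ (sp n α x e ≠ sp n α x 0)) :=
      (zmod2_xor _ _ _).mp hx
    have hy' : ¬ ((sp n α y (e+1) ≠ sp n α y 0) ↔ (sp n α y e ≠ sp n α y 0)) := by
      intro hiff
      apply hx'
      rw [← hOmem x (e+1), ← hOmem x e, hmm (e+1), hmm e, hOmem y (e+1), hOmem y e]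
      exact hiff
    have hy : sp n α y (e + 1) ≠ sp n α y e := (zmod2_xor _ _ _).mpr hy'
    have := (hedge y e).mpr hy
    rw [he] at this
    exact this
  set W₀ : Finset W := sep 0 with hW₀
  have hmemW₀ : ∀ w, w ∈ W₀ ↔ sp n α w p ≠ sp n α w 0 := by
    intro w; rw [hW₀, hsep]; simp
  -- pairwise non-crossing walls in `W₀` are nested
  have hnested : ∀ x ∈ W₀, ∀ y ∈ W₀, x ≠ y → ¬ Crosses n α x y →
      O x ⊆ O y ∨ O y ⊆ O x := by
    intro x hx y hy hxy hcr
    obtain ⟨c₁, c₂, hpat⟩ := missing_pattern n α hn hE hsurj hxy hcr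
    have hxp : sp n α x p ≠ sp n α x 0 := (hmemW₀ x).mp hx
    have hyp : sp n α y p ≠ sp n α y 0 := (hmemW₀ y).mp hy
    by_cases h1 : c₁ = sp n α x 0 <;> by_cases h2 : c₂ = sp n α y 0
    · exfalso
      rcases hpat p with h | h
      · exact hxp (h.trans h1)
      · exact hyp (h.trans h2)
    · left
      intro v hv
      rw [hOmem] at hv ⊢
      rcases hpat v with h | h
      · exact absurd (h.trans h1) hv
      · intro hc; exact h2 (h ▸ hc.symm).symm
    · right
      intro v hv
      rw [hOmem] at hv ⊢
      rcases hpat v with h | h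
      · intro hc; exact h1 (h ▸ hc.symm).symm
      · exact absurd (h.trans h2) hv
    · exfalso
      rcases hpat 0 with h | h
      · exact h1 h.symm
      · exact h2 h.symm
  -- extract a nested chain via the Mirsky-type lemma
  obtain ⟨C, hCsub, hCchain, hCcard⟩ := mirsky d O W₀
    (fun x _ y _ h => hinj x y h)
    (by
      intro S hS hpair
      apply hdim₁ S
      intro x hx y hy hxy
      by_contra hcr
      rcases hnested x (hS hx) y (hS hy) hxy hcr with h | h
      · exact hpair x hx y hy hxy h
      · exact hpair y hy x hx hxy.symm h)
  set k := C.card with hk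
  have hCW₀ : ∀ w ∈ C, sp n α w p ≠ sp n α w 0 := fun w hw => (hmemW₀ w).mp (hCsub hw)
  -- the chain separation count
  set X : ZMod n → Finset W :=
    fun v => C.filter (fun w => sp n α w v ≠ sp n α w 0) with hX
  have hXcomp : ∀ u u' : ZMod n, X u ⊆ X u' ∨ X u' ⊆ X u := by
    intro u u'
    by_contra hc
    push_neg at hc
    obtain ⟨hc1, hc2⟩ := hc
    obtain ⟨x, hxu, hxu'⟩ := Finset.not_subset.mp hc1
    obtain ⟨y, hyu', hyu⟩ := Finset.not_subset.mp hc2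
    rw [hX] at hxu hxu' hyu hyu'
    simp only [Finset.mem_filter, not_and] at hxu hxu' hyu hyu'
    rcases hCchain x hxu.1 y hyu'.1 with h | h
    · exact (hyu hyu'.1) ((hOmem y u).mp (h ((hOmem x u).mpr hxu.2)))
    · exact (hxu' hxu.1) ((hOmem x u').mp (h ((hOmem y u').mpr hyu'.2)))
  set A : ZMod n → ℤ := fun v => ((X v).card : ℤ) with hA
  have hA0 : A 0 = 0 := by
    rw [hA, hX]
    simp
  have hXp : X p = C := by
    simp only [hX]
    exact Finset.filter_true_of_mem (fun w hw => hCW₀ w hw)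
  have hAp : A p = (k : ℤ) := by
    simp only [hA, hXp, hk]
  -- counting chain walls separating an antipodal pair
  have hff : ∀ u u' : ZMod n, X u ⊆ X u' →
      C.filter (fun w => sp n α w u' ≠ sp n α w u) = X u' \ X u := by
    intro u u' hsub
    ext w
    simp only [Finset.mem_filter, Finset.mem_sdiff, hX, not_and]
    constructor
    · intro ⟨hwC, hne⟩
      have hxor := (zmod2_xor (sp n α w u') (sp n α w u) (sp n α w 0)).mp hne
      by_cases hu : sp n α w u ≠ sp n α w 0
      · exfalso
        have hw' : sp n α w u' ≠ sp n α w 0 := by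
          have hmem := hsub (show w ∈ X u by
            simp only [hX, Finset.mem_filter]; exact ⟨hwC, hu⟩)
          simp only [hX, Finset.mem_filter] at hmem
          exact hmem.2
        exact hxor (iff_of_true hw' hu)
      · refine ⟨⟨hwC, ?_⟩, fun _ => hu⟩
        by_contra h
        exact hxor (iff_of_false (not_ne_iff.mpr h) hu)
    · intro ⟨⟨hwC, hu'⟩, hu⟩
      refine ⟨hwC, (zmod2_xor (sp n α w u') (sp n α w u) (sp n α w 0)).mpr ?_⟩
      intro hiff
      exact (hu hwC) (hiff.mp hu')
  have hsep_chain : ∀ u : ZMod n,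
      ((C.filter (fun w => sp n α w (u + p) ≠ sp n α w u)).card : ℤ)
        = |A (u + p) - A u| := by
    intro u
    rcases hXcomp u (u + p) with hsub | hsub
    · rw [hff u (u + p) hsub, Finset.card_sdiff_of_subset hsub]
      have hle := Finset.card_le_card hsub
      simp only [hA]
      rw [abs_of_nonneg (sub_nonneg.mpr
        (by exact_mod_cast hle : ((X u).card : ℤ) ≤ ((X (u + p)).card : ℤ)))]
      rw [Nat.cast_sub hle]
    · have heq : C.filter (fun w => sp n α w (u + p) ≠ sp n α w u)
          = C.filter (fun w => sp n α w u ≠ sp n α w (u + p)) :=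
        Finset.filter_congr (fun w _ => by rw [ne_comm])
      rw [heq, hff (u + p) u hsub, Finset.card_sdiff_of_subset hsub]
      have hle := Finset.card_le_card hsub
      simp only [hA]
      rw [abs_sub_comm]
      rw [abs_of_nonneg (sub_nonneg.mpr
        (by exact_mod_cast hle : ((X (u + p)).card : ℤ) ≤ ((X u).card : ℤ)))]
      rw [Nat.cast_sub hle]
  -- the step bound for `A`
  have hA_step : ∀ v : ZMod n, |A (v + 1) - A v| ≤ 1 := by
    intro v
    have hs1 : X (v + 1) ⊆ X v ∪ {α v} := by
      intro w hw
      rw [hX, Finset.mem_filter] at hw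
      by_cases hv : sp n α w v ≠ sp n α w 0
      · exact Finset.mem_union_left _ (Finset.mem_filter.mpr ⟨hw.1, hv⟩)
      · have : sp n α w (v + 1) ≠ sp n α w v :=
          (zmod2_xor _ _ _).mpr (fun hiff => hv (hiff.mp hw.2))
        rw [Finset.mem_union, Finset.mem_singleton]
        exact Or.inr ((hedge w v).mpr this).symm
    have hs2 : X v ⊆ X (v + 1) ∪ {α v} := by
      intro w hw
      rw [hX, Finset.mem_filter] at hw
      by_cases hv : sp n α w (v + 1) ≠ sp n α w 0
      · exact Finset.mem_union_left _ (Finset.mem_filter.mpr ⟨hw.1, hv⟩)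
      · have : sp n α w (v + 1) ≠ sp n α w v := by
          intro hh
          exact hv (hh.symm ▸ hw.2)
        rw [Finset.mem_union, Finset.mem_singleton]
        exact Or.inr ((hedge w v).mpr this).symm
    have hb1 : (X (v + 1)).card ≤ (X v).card + 1 :=
      (Finset.card_le_card hs1).trans
        ((Finset.card_union_le _ _).trans (by simp))
    have hb2 : (X v).card ≤ (X (v + 1)).card + 1 :=
      (Finset.card_le_card hs2).trans
        ((Finset.card_union_le _ _).trans (by simp))
    simp only [hA]
    rw [abs_le]
    constructor <;> omega
  -- the averaging identity
  have hsum0 : ∑ v : ZMod n, (A v - A (v + p)) = 0 := by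
    rw [Finset.sum_sub_distrib]
    have h := Fintype.sum_equiv (Equiv.addRight p) (fun v => A (v + p)) A (fun v => rfl)
    rw [h, sub_self]
  have hex_nonneg : ∃ v : ZMod n, 0 ≤ A v - A (v + p) := by
    by_contra hcon
    push_neg at hcon
    have hle : ∑ v : ZMod n, (A v - A (v + p)) ≤ ∑ _v : ZMod n, (-1 : ℤ) :=
      Finset.sum_le_sum (fun v _ => by have := hcon v; omega)
    rw [hsum0, Finset.sum_const, Finset.card_univ, ZMod.card] at hle
    rw [nsmul_eq_mul, mul_neg, mul_one] at hle
    omega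
  -- real-number set-up
  have hDpos : (0 : ℝ) < (d : ℝ) := by exact_mod_cast hd1
  have hD1 : (1 : ℝ) ≤ (d : ℝ) := by exact_mod_cast hd1
  have hbid : 10 * (d : ℝ) * ((5 * (d : ℝ) - 1) / (5 * (d : ℝ)) * ((n : ℝ) / 2))
      = (5 * (d : ℝ) - 1) * (n : ℝ) := by
    field_simp
    ring
  have hgoal : (n : ℝ) * (5 * (d : ℝ) - 1) ≤ 50 * (d : ℝ) ^ 2 → 
      (n : ℝ) ≤ 50 * (d : ℝ) ^ 2 / (5 * (d : ℝ) - 1) := by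
    intro h
    rw [le_div_iff₀ (by linarith [hD1] : (0 : ℝ) < 5 * (d : ℝ) - 1)]
    exact h
  have hW₀k : (W₀.card : ℝ) ≤ (d : ℝ) * (k : ℝ) := by exact_mod_cast hCcard
  have hbW₀ := hwd 0
  have hbk : (5 * (d : ℝ) - 1) / (5 * (d : ℝ)) * ((n : ℝ) / 2) ≤ (d : ℝ) * (k : ℝ) := by
    calc (5 * (d : ℝ) - 1) / (5 * (d : ℝ)) * ((n : ℝ) / 2) ≤ ((sep 0).card : ℝ) := hbW₀
      _ = (W₀.card : ℝ) := by rw [hW₀]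
      _ ≤ (d : ℝ) * (k : ℝ) := hW₀k
  by_cases hk2 : k ≤ 1
  · -- short chain: `b ≤ d`
    apply hgoal
    have hkk : (k : ℝ) ≤ 1 := by exact_mod_cast hk2
    have hb_le : (5 * (d : ℝ) - 1) / (5 * (d : ℝ)) * ((n : ℝ) / 2) ≤ (d : ℝ) := by
      calc (5 * (d : ℝ) - 1) / (5 * (d : ℝ)) * ((n : ℝ) / 2) ≤ (d : ℝ) * (k : ℝ) := hbk
        _ ≤ (d : ℝ) * 1 := by
            exact mul_le_mul_of_nonneg_left hkk (le_of_lt hDpos)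
        _ = (d : ℝ) := mul_one _
    nlinarith [mul_le_mul_of_nonneg_left hb_le (by linarith : (0 : ℝ) ≤ 10 * (d : ℝ)),
      hbid, sq_nonneg ((d : ℝ))]
  · -- long chain: run the walk
    push_neg at hk2
    obtain ⟨v₀, hv₀⟩ := hex_nonneg
    set g : ℕ → ℤ := fun j => A ((j : ZMod n)) - A ((j : ZMod n) + p) with hg
    have hgex : ∃ j : ℕ, 0 ≤ g j := by
      refine ⟨v₀.val, ?_⟩
      rw [hg]
      simp only
      rw [ZMod.natCast_zmod_val]
      exact hv₀
    set j₁ := Nat.find hgex with hj₁def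
    have hj₁ : 0 ≤ g j₁ := Nat.find_spec hgex
    have hminj : ∀ j < j₁, g j < 0 := fun j hj => by
      have := Nat.find_min hgex hj
      omega
    have hg0 : g 0 = -(k : ℤ) := by
      rw [hg]
      simp only [Nat.cast_zero]
      rw [show ((0 : ZMod n)) + p = p from zero_add p, hA0, hAp]
      ring
    have hj₁0 : j₁ ≠ 0 := by
      intro h
      rw [h, hg0] at hj₁
      omega
    obtain ⟨j₀, hj₀⟩ : ∃ j₀, j₁ = j₀ + 1 := ⟨j₁ - 1, by omega⟩
    have hgstep : |g (j₀ + 1) - g j₀| ≤ 2 := by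
      have hc1 : ((j₀ + 1 : ℕ) : ZMod n) = ((j₀ : ℕ) : ZMod n) + 1 := by push_cast; ring
      have h1 := hA_step ((j₀ : ℕ) : ZMod n)
      have h2 := hA_step (((j₀ : ℕ) : ZMod n) + p)
      have hre : g (j₀ + 1) - g j₀
          = (A (((j₀ : ℕ) : ZMod n) + 1) - A ((j₀ : ℕ) : ZMod n))
            - (A ((((j₀ : ℕ) : ZMod n) + p) + 1) - A (((j₀ : ℕ) : ZMod n) + p)) := by
        rw [hg]
        simp only
        rw [hc1, show (((j₀ : ℕ) : ZMod n) + 1) + p = (((j₀ : ℕ) : ZMod n) + p) + 1 by ring]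
        ring
      rw [hre]
      calc |(A (((j₀ : ℕ) : ZMod n) + 1) - A ((j₀ : ℕ) : ZMod n))
            - (A ((((j₀ : ℕ) : ZMod n) + p) + 1) - A (((j₀ : ℕ) : ZMod n) + p))|
          ≤ |A (((j₀ : ℕ) : ZMod n) + 1) - A ((j₀ : ℕ) : ZMod n)|
            + |A ((((j₀ : ℕ) : ZMod n) + p) + 1) - A (((j₀ : ℕ) : ZMod n) + p)| :=
            abs_sub _ _
        _ ≤ 2 := by omega
    have hgj₁small : g j₁ ≤ 1 := by
      have hprev : g j₀ < 0 := hminj j₀ (by omega)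
      rw [hj₀]
      have := abs_le.mp hgstep
      omega
    set u : ZMod n := ((j₁ : ℕ) : ZMod n) with hu
    have hchain_small : ((C.filter (fun w => sp n α w (u + p) ≠ sp n α w u)).card : ℤ) ≤ 1 := by
      rw [hsep_chain u]
      have hAg : A (u + p) - A u = -(g j₁) := by
        simp only [hg, hu]
        ring
      rw [hAg, abs_neg, abs_le]
      omega
    have hchain_small' : (C.filter (fun w => sp n α w (u + p) ≠ sp n α w u)).card ≤ 1 := by
      exact_mod_cast hchain_small
    have hsepu : (sep u).card + k ≤ Fintype.card W + 1 := by
      have hsubu : sep u ⊆ (Finset.univ \ C)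
          ∪ (C.filter (fun w => sp n α w (u + p) ≠ sp n α w u)) := by
        intro w hw
        by_cases hwC : w ∈ C
        · refine Finset.mem_union_right _ (Finset.mem_filter.mpr ⟨hwC, ?_⟩)
          simp only [hsep, Finset.mem_filter] at hw
          exact hw.2
        · exact Finset.mem_union_left _ (Finset.mem_sdiff.mpr ⟨Finset.mem_univ _, hwC⟩)
      have hcards : (Finset.univ \ C).card + C.card = Fintype.card W := by
        rw [← Finset.card_univ]
        exact Finset.card_sdiff_add_card_eq_card (Finset.subset_univ C)
      have h1 := Finset.card_le_card hsubu
      have h2 := Finset.card_union_le (Finset.univ \ C)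
        (C.filter (fun w => sp n α w (u + p) ≠ sp n α w u))
      omega
    apply hgoal
    have hsepr : ((sep u).card : ℝ) + (k : ℝ) ≤ (Fintype.card W : ℝ) + 1 := by
      exact_mod_cast hsepu
    have hWr : (Fintype.card W : ℝ) ≤ (n : ℝ) / 2 := by
      have h2n : (2 : ℝ) * (Fintype.card W : ℝ) ≤ (n : ℝ) := by exact_mod_cast hWn
      linarith
    have hbu := hwd u
    have h2' : (5 * (d : ℝ) - 1) / (5 * (d : ℝ)) * ((n : ℝ) / 2) + (k : ℝ)
        ≤ (n : ℝ) / 2 + 1 := by linarith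
    have m1 := mul_le_mul_of_nonneg_left h2' (by linarith : (0 : ℝ) ≤ 10 * (d : ℝ))
    have hstar : 10 * (d : ℝ) * (k : ℝ) ≤ (n : ℝ) + 10 * (d : ℝ) := by
      linarith only [m1, hbid]
    have m3 := mul_le_mul_of_nonneg_left hstar (le_of_lt hDpos)
    have m2 := mul_le_mul_of_nonneg_left hbk (by linarith : (0 : ℝ) ≤ 10 * (d : ℝ))
    have hfin : (0 : ℝ) ≤ (15 * (d : ℝ) - 4) * (n : ℝ) :=
      mul_nonneg (by linarith) (by positivity)
    have hq : (5 * (d : ℝ) - 1) * (n : ℝ) ≤ 10 * (d : ℝ) * ((d : ℝ) * (k : ℝ)) := by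
      linarith only [m2, hbid]
    linarith only [hq, m3, hfin]

end ShortcutGraphs
end
end

section
/- Let Γ be a graph admitting a continuous (K, M)-quasi-isometric embedding ι : Γ → ℝ², let ξ ∈ (0,1), and let f : C → Γ be a ξ-almost isometric cycle. If the image of ι ∘ f is contained in the N-neighborhood of a line L ⊂ ℝ², then |C| ≤ (2K/ξ)·(M + 2N). Consequently, for every finite generating set S of ℤ, the Cayley graph Cay(ℤ, S) is strongly shortcut. -/
open scoped Classical

noncomputable section

namespace ShortcutGraphs

variable {V : Type*}

/-- The Cayley graph of `ℤ` with respect to the finite (symmetrized) generating set `S`. -/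
def zCayley (S : Finset ℤ) : SimpleGraph ℤ where
  Adj g h := g ≠ h ∧ (h - g ∈ S ∨ g - h ∈ S)
  symm := by
    constructor
    rintro g h ⟨hne, hs⟩
    exact ⟨hne.symm, hs.symm⟩
  loopless := ⟨fun g hg => hg.1 rfl⟩

lemma polygonal_continuous {E : Type*} [NormedAddCommGroup E] [NormedSpace ℝ E] (v : ℤ → E) :
    Continuous fun p : ℝ => v ⌊p⌋ + Int.fract p • (v (⌊p⌋ + 1) - v ⌊p⌋) := by
  rw [continuous_iff_continuousAt]
  intro a
  set f : ℝ → E := fun p => v ⌊p⌋ + Int.fract p • (v (⌊p⌋ + 1) - v ⌊p⌋) with hf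
  have key : ∀ (m : ℤ) (x : ℝ), (m : ℝ) ≤ x → x ≤ (m : ℝ) + 1 →
      f x = v m + (x - (m : ℝ)) • (v (m + 1) - v m) := by
    intro m x h1 h2
    rcases eq_or_lt_of_le h2 with h | h
    · have hx : x = ((m + 1 : ℤ) : ℝ) := by push_cast; linarith
      subst hx
      have h1 : ((m + 1 : ℤ) : ℝ) - (m : ℝ) = 1 := by push_cast; ring
      simp only [hf, Int.floor_intCast, Int.fract_intCast, h1, one_smul, zero_smul, add_zero]
      abel
    · have hfl : ⌊x⌋ = m := by
        rw [Int.floor_eq_iff]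
        exact ⟨h1, by push_cast; linarith⟩
      have hfr : Int.fract x = x - (m : ℝ) := by
        rw [Int.fract, hfl]
      rw [hf]; simp only []; rw [hfl, hfr]
  rw [continuousAt_iff_continuous_left_right]
  constructor
  · -- left: use m = ⌈a⌉ - 1
    set m : ℤ := ⌈a⌉ - 1 with hm
    have h1 : (m : ℝ) < a := by
      rw [hm]
      have := Int.ceil_lt_add_one a
      push_cast
      linarith
    have h2 : a ≤ (m : ℝ) + 1 := by
      rw [hm]
      have := Int.le_ceil a
      push_cast
      linarith
    have hmem : Set.Icc (m : ℝ) ((m : ℝ) + 1) ∈ nhdsWithin a (Set.Iic a) :=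
      Icc_mem_nhdsLE_of_mem ⟨h1, h2⟩
    have heq : f =ᶠ[nhdsWithin a (Set.Iic a)]
        fun x => v m + (x - (m : ℝ)) • (v (m + 1) - v m) :=
      Filter.eventuallyEq_of_mem hmem (fun x hx => key m x hx.1 hx.2)
    have hL : Continuous fun x : ℝ => v m + (x - (m : ℝ)) • (v (m + 1) - v m) := by
      continuity
    exact (hL.continuousWithinAt).congr_of_eventuallyEq heq (key m a h1.le h2)
  · set m : ℤ := ⌊a⌋ with hm
    have h1 : (m : ℝ) ≤ a := Int.floor_le a
    have h2 : a < (m : ℝ) + 1 := Int.lt_floor_add_one a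
    have hmem : Set.Icc (m : ℝ) ((m : ℝ) + 1) ∈ nhdsWithin a (Set.Ici a) :=
      Icc_mem_nhdsGE_of_mem ⟨h1, h2⟩
    have heq : f =ᶠ[nhdsWithin a (Set.Ici a)]
        fun x => v m + (x - (m : ℝ)) • (v (m + 1) - v m) :=
      Filter.eventuallyEq_of_mem hmem (fun x hx => key m x hx.1 hx.2)
    have hL : Continuous fun x : ℝ => v m + (x - (m : ℝ)) • (v (m + 1) - v m) := by
      continuity
    exact (hL.continuousWithinAt).congr_of_eventuallyEq heq (key m a h1 h2.le)

open scoped RealInnerProductSpace in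
lemma near_line_dist {E : Type*} [NormedAddCommGroup E] [InnerProductSpace ℝ E]
    {u x y : E} {N s t : ℝ} (hu : ‖u‖ = 1) (hxy : ⟪x, u⟫ = ⟪y, u⟫)
    (hx : ‖x - s • u‖ ≤ N) (hy : ‖y - t • u‖ ≤ N) : ‖x - y‖ ≤ 2 * N := by
  have key : ∀ (w : E) (r : ℝ), ‖w - ⟪w, u⟫ • u‖ ≤ ‖w - r • u‖ := by
    intro w r
    have hperp : ⟪w - ⟪w, u⟫ • u, (⟪w, u⟫ - r) • u⟫ = 0 := by
      rw [inner_sub_left, real_inner_smul_left, real_inner_smul_right,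
        real_inner_smul_right, real_inner_self_eq_norm_sq, hu]
      ring
    have hdecomp : w - r • u = (w - ⟪w, u⟫ • u) + (⟪w, u⟫ - r) • u := by
      rw [sub_smul]; abel
    have hsq : ‖w - r • u‖ ^ 2 = ‖w - ⟪w, u⟫ • u‖ ^ 2 + ‖(⟪w, u⟫ - r) • u‖ ^ 2 := by
      rw [hdecomp, norm_add_sq_real, hperp]; ring
    nlinarith [norm_nonneg (w - ⟪w, u⟫ • u), norm_nonneg (w - r • u),
      norm_nonneg ((⟪w, u⟫ - r) • u), sq_nonneg (‖(⟪w, u⟫ - r) • u‖)]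
  have h1 : ‖x - ⟪x, u⟫ • u‖ ≤ N := le_trans (key x s) hx
  have h2 : ‖y - ⟪y, u⟫ • u‖ ≤ N := le_trans (key y t) hy
  calc ‖x - y‖ = ‖(x - ⟪x, u⟫ • u) - (y - ⟪y, u⟫ • u)‖ := by rw [hxy, sub_sub_sub_cancel_right]
    _ ≤ ‖x - ⟪x, u⟫ • u‖ + ‖y - ⟪y, u⟫ • u‖ := norm_sub_le _ _
    _ ≤ 2 * N := by linarith

lemma antipodal_add_half {n : ℕ} (hn : 0 < n) (p : ℝ) : Antipodal n p (p + (n : ℝ) / 2) := by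
  have hn' : (0 : ℝ) < n := by exact_mod_cast hn
  unfold Antipodal cdist
  have hbdd : BddBelow (Set.range fun k : ℤ => |p - (p + (n : ℝ) / 2) + k * (n : ℝ)|) := by
    refine ⟨0, ?_⟩
    rintro x ⟨k, rfl⟩
    exact abs_nonneg _
  apply le_antisymm
  · have h := ciInf_le hbdd (1 : ℤ)
    refine le_trans h ?_
    rw [show p - (p + (n : ℝ) / 2) + (1 : ℤ) * (n : ℝ) = (n : ℝ) / 2 by push_cast; ring]
    rw [abs_of_nonneg (by linarith)]
  · apply le_ciInf
    intro k
    have hk : p - (p + (n : ℝ) / 2) + (k : ℝ) * n = (k : ℝ) * n - n / 2 := by ring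
    rw [hk]
    rcases le_or_gt k 0 with h | h
    · have : (k : ℝ) ≤ 0 := by exact_mod_cast h
      have hkn : (k : ℝ) * n ≤ 0 := mul_nonpos_of_nonpos_of_nonneg this hn'.le
      exact le_abs.2 (Or.inr (by linarith))
    · have : (1 : ℝ) ≤ (k : ℝ) := by exact_mod_cast h
      have hkn : (n : ℝ) ≤ (k : ℝ) * n := by nlinarith
      exact le_abs.2 (Or.inl (by linarith))

open scoped RealInnerProductSpace in
lemma useplank : (∀ (V : Type) (G : SimpleGraph V) (n : ℕ) (c : ZMod n → V)
       (K M N ξ : ℝ) (g : ℝ → EuclideanSpace ℝ (Fin 2))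
       (x₀ dir : EuclideanSpace ℝ (Fin 2)),
      0 < n → IsCycle G n c → 1 ≤ K → 0 ≤ M → 0 ≤ N → 0 < ξ → ξ < 1 →
      Continuous g → (∀ p : ℝ, g (p + (n : ℝ)) = g p) →
      (∀ p q : ℝ, (1 / K) * rdist G n c p q - M ≤ dist (g p) (g q) ∧
        dist (g p) (g q) ≤ K * rdist G n c p q + M) →
      dir ≠ 0 →
      (∀ p : ℝ, ∃ s : ℝ, dist (g p) (x₀ + s • dir) ≤ N) →
      IsAlmostIsometricCycle G n c ξ →
      (n : ℝ) ≤ 2 * K / ξ * (M + 2 * N)) := by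
  intro V G n c K M N ξ g x₀ dir hn hcyc hK hM hN hξ hξ1 hg hper hqi hdir hline hai
  have hK0 : (0 : ℝ) < K := lt_of_lt_of_le one_pos hK
  have hn' : (0 : ℝ) < n := by exact_mod_cast hn
  set u : EuclideanSpace ℝ (Fin 2) := ‖dir‖⁻¹ • dir with hu
  have hdn : ‖dir‖ ≠ 0 := norm_ne_zero_iff.2 hdir
  have hnu : ‖u‖ = 1 := by
    rw [hu, norm_smul, norm_inv, norm_norm, inv_mul_cancel₀ hdn]
  -- near-line hypothesis rephrased with u
  have hline' : ∀ p : ℝ, ∃ s : ℝ, ‖(g p - x₀) - s • u‖ ≤ N := by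
    intro p
    obtain ⟨s, hs⟩ := hline p
    refine ⟨s * ‖dir‖, ?_⟩
    have : (s * ‖dir‖) • u = s • dir := by
      rw [hu, smul_smul, mul_assoc, mul_inv_cancel₀ hdn, mul_one]
    rw [this, sub_sub, ← dist_eq_norm]
    exact hs
  set φ : ℝ → ℝ := fun p => ⟪g p - x₀, u⟫ with hφ
  have hφc : Continuous φ := (hg.sub continuous_const).inner continuous_const
  set ψ : ℝ → ℝ := fun p => φ (p + (n : ℝ) / 2) - φ p with hψ
  have hψc : Continuous ψ := ((hφc.comp (continuous_id.add continuous_const)).sub hφc)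
  have hψa : ∀ p, ψ (p + (n : ℝ) / 2) = -ψ p := by
    intro p
    have h1 : p + (n : ℝ) / 2 + (n : ℝ) / 2 = p + (n : ℝ) := by ring
    simp only [hψ, h1, hφ, hper p]
    ring
  -- find a zero of ψ on [0, n/2]
  obtain ⟨p₀, _, hp₀⟩ : ∃ p₀ ∈ Set.Icc (0 : ℝ) ((n : ℝ) / 2), ψ p₀ = 0 := by
    have h0 : ψ ((n : ℝ) / 2) = -ψ 0 := by
      have := hψa 0
      rwa [zero_add] at this
    rcases le_total (ψ 0) 0 with h | h
    · have h02 : (0 : ℝ) ∈ Set.Icc (ψ 0) (ψ ((n : ℝ) / 2)) := ⟨h, by rw [h0]; linarith⟩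
      have := intermediate_value_Icc (by positivity : (0:ℝ) ≤ (n : ℝ) / 2) hψc.continuousOn h02
      obtain ⟨p₀, hp₀m, hp₀⟩ := this
      exact ⟨p₀, hp₀m, hp₀⟩
    · have h02 : (0 : ℝ) ∈ Set.Icc (ψ ((n : ℝ) / 2)) (ψ 0) := ⟨by rw [h0]; linarith, h⟩
      have := intermediate_value_Icc' (by positivity : (0:ℝ) ≤ (n : ℝ) / 2) hψc.continuousOn h02
      obtain ⟨p₀, hp₀m, hp₀⟩ := this
      exact ⟨p₀, hp₀m, hp₀⟩
  set q₀ : ℝ := p₀ + (n : ℝ) / 2 with hq₀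
  have hφeq : ⟪g p₀ - x₀, u⟫ = ⟪g q₀ - x₀, u⟫ := by
    have : φ q₀ - φ p₀ = 0 := hp₀
    have := sub_eq_zero.mp this
    simp only [hφ] at this
    exact this.symm
  obtain ⟨s, hs⟩ := hline' p₀
  obtain ⟨t, ht⟩ := hline' q₀
  have hd2N : dist (g p₀) (g q₀) ≤ 2 * N := by
    have := near_line_dist hnu hφeq hs ht
    rwa [sub_sub_sub_cancel_right, ← dist_eq_norm] at this
  have hanti := antipodal_add_half hn p₀
  have hrd : ξ * ((n : ℝ) / 2) ≤ rdist G n c p₀ q₀ := hai p₀ q₀ hanti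
  have hlow := (hqi p₀ q₀).1
  have hchain : (1 / K) * (ξ * ((n : ℝ) / 2)) - M ≤ 2 * N := by
    have h1 : (1 / K) * (ξ * ((n : ℝ) / 2)) ≤ (1 / K) * rdist G n c p₀ q₀ :=
      mul_le_mul_of_nonneg_left hrd (by positivity)
    linarith
  rw [div_mul_eq_mul_div, le_div_iff₀ hξ]
  have hKmul : ξ * ((n : ℝ) / 2) ≤ (M + 2 * N) * K := by
    rw [one_div_mul_eq_div] at hchain
    have h3 : ξ * ((n : ℝ) / 2) / K ≤ M + 2 * N := by linarith
    rw [div_le_iff₀ hK0] at h3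
    linarith
  linarith
/-- Translation by `t` as a graph homomorphism of `zCayley S`. -/
def zShift (S : Finset ℤ) (t : ℤ) : zCayley S →g zCayley S where
  toFun := fun x => x + t
  map_rel' := by
    intro a b h
    obtain ⟨h1, h2⟩ : a ≠ b ∧ (b - a ∈ S ∨ a - b ∈ S) := h
    show a + t ≠ b + t ∧ ((b + t) - (a + t) ∈ S ∨ (a + t) - (b + t) ∈ S)
    refine ⟨fun hc => h1 (add_right_cancel hc), ?_⟩
    simpa using h2

lemma zCayley_adj_le {S : Finset ℤ} {a b : ℤ} (h : (zCayley S).Adj a b) :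
    |(a : ℝ) - b| ≤ ((S.sup Int.natAbs : ℕ) : ℝ) := by
  have key : (a - b).natAbs ≤ S.sup Int.natAbs := by
    rcases (show a ≠ b ∧ (b - a ∈ S ∨ a - b ∈ S) from h).2 with hs | hs
    · have := Finset.le_sup (f := Int.natAbs) hs
      omega
    · exact Finset.le_sup (f := Int.natAbs) hs
  have h2 : |(a : ℝ) - b| = ((a - b).natAbs : ℝ) := by
    rw [← Int.cast_sub, ← Int.cast_abs, Int.abs_eq_natAbs, Int.cast_natCast]
  rw [h2]
  exact_mod_cast key

lemma zCayley_walk_le {S : Finset ℤ} {a b : ℤ} (w : (zCayley S).Walk a b) :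
    |(a : ℝ) - b| ≤ ((S.sup Int.natAbs : ℕ) : ℝ) * w.length := by
  induction w with
  | nil => simp
  | @cons x y z h w ih =>
    have h1 := zCayley_adj_le h
    have h2 : |(x : ℝ) - z| ≤ |(x : ℝ) - y| + |(y : ℝ) - z| := abs_sub_le _ _ _
    rw [SimpleGraph.Walk.length_cons]
    push_cast
    linarith

lemma zCayley_reachable {S : Finset ℤ} (hS : AddSubgroup.closure (S : Set ℤ) = ⊤)
    (x y : ℤ) : (zCayley S).Reachable x y := by
  have shift : ∀ (t : ℤ) {a b : ℤ}, (zCayley S).Reachable a b →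
      (zCayley S).Reachable (a + t) (b + t) := by
    intro t a b h
    exact h.map (zShift S t)
  have H0 : ∀ z : ℤ, (zCayley S).Reachable 0 z := by
    have hle : AddSubgroup.closure (S : Set ℤ) ≤
        { carrier := {z | (zCayley S).Reachable 0 z}
          zero_mem' := SimpleGraph.Reachable.refl 0
          add_mem' := by
            intro a b ha hb
            have ha' := shift b ha
            rw [zero_add] at ha'
            exact hb.trans ha'
          neg_mem' := by
            intro a ha
            have := shift (-a) ha
            rw [zero_add, add_neg_cancel] at this
            exact this.symm } := by
      rw [AddSubgroup.closure_le]
      intro z hz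
      rcases eq_or_ne z 0 with rfl | hzne
      · exact SimpleGraph.Reachable.refl 0
      · exact SimpleGraph.Adj.reachable (G := zCayley S) (u := 0) (v := z)
          (show (0:ℤ) ≠ z ∧ (z - 0 ∈ S ∨ 0 - z ∈ S) from ⟨hzne.symm, Or.inl (by simpa using hz)⟩)
    intro z
    have : z ∈ AddSubgroup.closure (S : Set ℤ) := by rw [hS]; trivial
    exact hle this
  exact (H0 x).symm.trans (H0 y)





lemma zCayley_connected {S : Finset ℤ} (hS : AddSubgroup.closure (S : Set ℤ) = ⊤) :
    (zCayley S).Connected := ⟨zCayley_reachable hS⟩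

lemma zCayley_dist_step {S : Finset ℤ} (hS : AddSubgroup.closure (S : Set ℤ) = ⊤) (x : ℤ) :
    (zCayley S).dist x (x + 1) ≤ (zCayley S).dist 0 1 := by
  obtain ⟨w, hw⟩ := (zCayley_reachable hS 0 1).exists_walk_length_eq_dist
  have h := SimpleGraph.dist_le (w.map (zShift S x))
  rw [SimpleGraph.Walk.length_map, hw] at h
  have e0 : (zShift S x) 0 = x := zero_add x
  have e1 : (zShift S x) 1 = x + 1 := by show (1 : ℤ) + x = x + 1; omega
  rwa [e0, e1] at h

lemma zCayley_dist_nat {S : Finset ℤ} (hS : AddSubgroup.closure (S : Set ℤ) = ⊤)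
    (a : ℤ) (m : ℕ) :
    (zCayley S).dist a (a + (m : ℤ)) ≤ (zCayley S).dist 0 1 * m := by
  induction m with
  | zero => simp
  | succ k ih =>
    have heq : (a + ((k + 1 : ℕ) : ℤ)) = (a + (k : ℤ)) + 1 := by push_cast; ring
    rw [heq]
    have htri := (zCayley_connected hS).dist_triangle
      (u := a) (v := a + (k : ℤ)) (w := (a + (k : ℤ)) + 1)
    have hstep := zCayley_dist_step hS (a + (k : ℤ))
    calc (zCayley S).dist a ((a + (k : ℤ)) + 1)
        ≤ (zCayley S).dist a (a + (k : ℤ)) + (zCayley S).dist (a + (k : ℤ)) ((a + (k:ℤ)) + 1) :=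
          htri
      _ ≤ (zCayley S).dist 0 1 * k + (zCayley S).dist 0 1 := by
          exact Nat.add_le_add ih hstep
      _ = (zCayley S).dist 0 1 * (k + 1) := by ring

lemma zCayley_dist_le {S : Finset ℤ} (hS : AddSubgroup.closure (S : Set ℤ) = ⊤)
    (x y : ℤ) :
    ((zCayley S).dist x y : ℝ) ≤ ((zCayley S).dist 0 1 : ℝ) * |(x : ℝ) - y| := by
  rcases le_total x y with h | h
  · obtain ⟨k, rfl⟩ : ∃ k : ℕ, y = x + (k : ℤ) := ⟨(y - x).toNat, by omega⟩
    have := zCayley_dist_nat hS x k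
    have habs : |(x : ℝ) - (x + (k : ℤ) : ℤ)| = (k : ℝ) := by
      push_cast
      rw [show (x : ℝ) - (x + k) = -k by ring, abs_neg, abs_of_nonneg (by positivity)]
    rw [habs]
    exact_mod_cast this
  · obtain ⟨k, rfl⟩ : ∃ k : ℕ, x = y + (k : ℤ) := ⟨(x - y).toNat, by omega⟩
    have := zCayley_dist_nat hS y k
    rw [SimpleGraph.dist_comm]
    have habs : |((y + (k : ℤ) : ℤ) : ℝ) - y| = (k : ℝ) := by
      push_cast
      rw [show ((y : ℝ) + k) - y = k by ring, abs_of_nonneg (by positivity)]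
    rw [habs]
    exact_mod_cast this



lemma rdist_nonneg {V : Type*} (G : SimpleGraph V) (n : ℕ) (c : ZMod n → V) (p q : ℝ) :
    0 ≤ rdist G n c p q := by
  have hs0 := Int.fract_nonneg p
  have ht0 := Int.fract_nonneg q
  have hs1 := (Int.fract_lt_one p).le
  have ht1 := (Int.fract_lt_one q).le
  simp only [rdist]
  have leaf : ∀ (x y : ℝ) (k : ℕ), 0 ≤ x → 0 ≤ y → (0:ℝ) ≤ x + (k : ℝ) + y := by
    intro x y k hx hy
    have : (0:ℝ) ≤ (k : ℝ) := Nat.cast_nonneg k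
    linarith
  have hs1' : (0:ℝ) ≤ 1 - Int.fract p := by linarith
  have ht1' : (0:ℝ) ≤ 1 - Int.fract q := by linarith
  refine le_min (le_min (le_min (leaf _ _ _ hs0 ht0) (leaf _ _ _ hs0 ht1'))
    (le_min (leaf _ _ _ hs1' ht0) (leaf _ _ _ hs1' ht1'))) (le_min ?_ ?_) <;>
    split_ifs <;>
    first
      | exact abs_nonneg _
      | exact le_min (le_min (leaf _ _ _ hs0 ht0) (leaf _ _ _ hs0 ht1'))
          (le_min (leaf _ _ _ hs1' ht0) (leaf _ _ _ hs1' ht1'))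

/-- The point of the geometric realization of the cycle `c` parametrized by `p`, under the
affine extension of `c` to ℝ. -/
def cyclePt (n : ℕ) (c : ZMod n → ℤ) (p : ℝ) : ℝ :=
  ((c ((⌊p⌋ : ℤ) : ZMod n)) : ℝ) + Int.fract p *
    (((c (((⌊p⌋ : ℤ) : ZMod n) + 1)) : ℝ) - ((c ((⌊p⌋ : ℤ) : ZMod n)) : ℝ))


set_option maxHeartbeats 1000000 in
lemma qi_core {S : Finset ℤ} (hS : AddSubgroup.closure (S : Set ℤ) = ⊤)
    {n : ℕ} {c : ZMod n → ℤ} (hcyc : IsCycle (zCayley S) n c) (p q : ℝ) :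
    |cyclePt n c p - cyclePt n c q| ≤
        max ((S.sup Int.natAbs : ℕ) : ℝ) 1 * rdist (zCayley S) n c p q ∧
      rdist (zCayley S) n c p q ≤
        (((zCayley S).dist 0 1 : ℕ) : ℝ) * |cyclePt n c p - cyclePt n c q| +
          (2 + 2 * max ((S.sup Int.natAbs : ℕ) : ℝ) 1 * (((zCayley S).dist 0 1 : ℕ) : ℝ)) := by
  have hs0 := Int.fract_nonneg p
  have ht0 := Int.fract_nonneg q
  have hs1 := (Int.fract_lt_one p).le
  have ht1 := (Int.fract_lt_one q).le
  set B : ℝ := max ((S.sup Int.natAbs : ℕ) : ℝ) 1 with hB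
  set D : ℝ := (((zCayley S).dist 0 1 : ℕ) : ℝ) with hD
  have hB1 : (1:ℝ) ≤ B := le_max_right _ _
  have hB0 : (0:ℝ) ≤ B := by linarith
  have hD0 : (0:ℝ) ≤ D := Nat.cast_nonneg _
  have hadjB : ∀ {x y : ℤ}, (zCayley S).Adj x y → |(x : ℝ) - y| ≤ B := by
    intro x y h
    exact le_trans (zCayley_adj_le h) (le_max_left _ _)
  have hdistB : ∀ x y : ℤ, |(x : ℝ) - y| ≤ B * ((zCayley S).dist x y : ℝ) := by
    intro x y
    obtain ⟨w, hw⟩ := (zCayley_reachable hS x y).exists_walk_length_eq_dist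
    have h := zCayley_walk_le w
    rw [hw] at h
    refine le_trans h ?_
    exact mul_le_mul_of_nonneg_right (le_max_left _ _) (Nat.cast_nonneg _)
  have hdistD : ∀ x y : ℤ, ((zCayley S).dist x y : ℝ) ≤ D * |(x : ℝ) - y| :=
    zCayley_dist_le hS
  simp only [cyclePt, rdist]
  set s := Int.fract p with hsd
  set t := Int.fract q with htd
  set a : ℤ := c ((⌊p⌋ : ℤ) : ZMod n) with had
  set b : ℤ := c (((⌊p⌋ : ℤ) : ZMod n) + 1) with hbd
  set u : ℤ := c ((⌊q⌋ : ℤ) : ZMod n) with hud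
  set v : ℤ := c (((⌊q⌋ : ℤ) : ZMod n) + 1) with hvd
  have hab : |(a : ℝ) - b| ≤ B := hadjB (hcyc _)
  have huv : |(u : ℝ) - v| ≤ B := hadjB (hcyc _)
  set P : ℝ := (a : ℝ) + s * ((b : ℝ) - a) with hP
  set Q : ℝ := (u : ℝ) + t * ((v : ℝ) - u) with hQ
  have hPa : |P - (a : ℝ)| ≤ s * B := by
    rw [hP, show (a : ℝ) + s * ((b : ℝ) - a) - a = s * ((b : ℝ) - a) by ring, abs_mul,
      abs_of_nonneg hs0]
    have : |(b : ℝ) - a| ≤ B := by rw [abs_sub_comm]; exact hab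
    exact mul_le_mul_of_nonneg_left this hs0
  have hPb : |P - (b : ℝ)| ≤ (1 - s) * B := by
    rw [hP, show (a : ℝ) + s * ((b : ℝ) - a) - b = (1 - s) * ((a : ℝ) - b) by ring, abs_mul,
      abs_of_nonneg (by linarith)]
    exact mul_le_mul_of_nonneg_left hab (by linarith)
  have hQu : |Q - (u : ℝ)| ≤ t * B := by
    rw [hQ, show (u : ℝ) + t * ((v : ℝ) - u) - u = t * ((v : ℝ) - u) by ring, abs_mul,
      abs_of_nonneg ht0]
    have : |(v : ℝ) - u| ≤ B := by rw [abs_sub_comm]; exact huv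
    exact mul_le_mul_of_nonneg_left this ht0
  have hQv : |Q - (v : ℝ)| ≤ (1 - t) * B := by
    rw [hQ, show (u : ℝ) + t * ((v : ℝ) - u) - v = (1 - t) * ((u : ℝ) - v) by ring, abs_mul,
      abs_of_nonneg (by linarith)]
    exact mul_le_mul_of_nonneg_left huv (by linarith)
  have routeBound : ∀ (x y : ℤ) (σ τ : ℝ), |P - (x : ℝ)| ≤ σ * B → |Q - (y : ℝ)| ≤ τ * B →
      |P - Q| ≤ B * (σ + ((zCayley S).dist x y : ℝ) + τ) := by
    intro x y σ τ hx hy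
    have hxy := hdistB x y
    have tri : |P - Q| ≤ |P - (x : ℝ)| + (|(x : ℝ) - (y : ℝ)| + |(y : ℝ) - Q|) := by
      calc |P - Q| = |(P - (x : ℝ)) + (((x : ℝ) - y) + ((y : ℝ) - Q))| := by ring_nf
        _ ≤ |P - (x : ℝ)| + |((x : ℝ) - y) + ((y : ℝ) - Q)| := abs_add_le _ _
        _ ≤ |P - (x : ℝ)| + (|(x : ℝ) - y| + |(y : ℝ) - Q|) := by
            have := abs_add_le ((x : ℝ) - y) ((y : ℝ) - Q)
            linarith
    have hyQ : |(y : ℝ) - Q| = |Q - (y : ℝ)| := abs_sub_comm _ _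
    nlinarith [tri, hx, hy, hxy]
  have hb1 : |P - Q| ≤ B * (s + ((zCayley S).dist a u : ℝ) + t) := routeBound a u s t hPa hQu
  have hb2 : |P - Q| ≤ B * (s + ((zCayley S).dist a v : ℝ) + (1 - t)) :=
    routeBound a v s (1 - t) hPa hQv
  have hb3 : |P - Q| ≤ B * ((1 - s) + ((zCayley S).dist b u : ℝ) + t) :=
    routeBound b u (1 - s) t hPb hQu
  have hb4 : |P - Q| ≤ B * ((1 - s) + ((zCayley S).dist b v : ℝ) + (1 - t)) :=
    routeBound b v (1 - s) (1 - t) hPb hQv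
  have hroute : |P - Q| ≤ B *
      ((s + ((zCayley S).dist a u : ℝ) + t) ⊓ (s + ((zCayley S).dist a v : ℝ) + (1 - t)) ⊓
        ((1 - s + ((zCayley S).dist b u : ℝ) + t) ⊓
          (1 - s + ((zCayley S).dist b v : ℝ) + (1 - t)))) := by
    rw [mul_min_of_nonneg _ _ hB0]
    refine le_min ?_ ?_
    · rw [mul_min_of_nonneg _ _ hB0]
      exact le_min hb1 hb2
    · rw [mul_min_of_nonneg _ _ hB0]
      exact le_min hb3 hb4
  constructor
  · -- upper bound
    rw [mul_min_of_nonneg _ _ hB0]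
    refine le_min hroute ?_
    rw [mul_min_of_nonneg _ _ hB0]
    refine le_min ?_ ?_
    · split_ifs with h
      · obtain ⟨h1, h2⟩ := h
        have hc1 : (u : ℝ) = (a : ℝ) := by rw [h1]
        have hc2 : (v : ℝ) = (b : ℝ) := by rw [h2]
        have hPQ : P - Q = (s - t) * ((b : ℝ) - a) := by rw [hP, hQ, hc1, hc2]; ring
        rw [hPQ, abs_mul]
        have hba : |(b : ℝ) - a| ≤ B := by rw [abs_sub_comm]; exact hab
        nlinarith [abs_nonneg (s - t), abs_nonneg ((b : ℝ) - a)]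
      · exact hroute
    · split_ifs with h
      · obtain ⟨h1, h2⟩ := h
        have hc1 : (v : ℝ) = (a : ℝ) := by rw [← h1]
        have hc2 : (u : ℝ) = (b : ℝ) := by rw [← h2]
        have hPQ : P - Q = (s + t - 1) * ((b : ℝ) - a) := by rw [hP, hQ, hc1, hc2]; ring
        rw [hPQ, abs_mul]
        have hba : |(b : ℝ) - a| ≤ B := by rw [abs_sub_comm]; exact hab
        nlinarith [abs_nonneg (s + t - 1), abs_nonneg ((b : ℝ) - a)]
      · exact hroute
  · -- lower bound
    have hr1 : (s + ((zCayley S).dist a u : ℝ) + t) ≤ D * |P - Q| + (2 + 2 * B * D) := by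
      have hau := hdistD a u
      have htri : |(a : ℝ) - u| ≤ s * B + |P - Q| + t * B := by
        calc |(a : ℝ) - u| = |((a : ℝ) - P) + ((P - Q) + (Q - u))| := by ring_nf
          _ ≤ |(a : ℝ) - P| + |(P - Q) + (Q - u)| := abs_add_le _ _
          _ ≤ |(a : ℝ) - P| + (|P - Q| + |Q - (u : ℝ)|) := by
              have := abs_add_le (P - Q) (Q - (u : ℝ))
              linarith
          _ ≤ s * B + |P - Q| + t * B := by
              have h1 : |(a : ℝ) - P| = |P - (a : ℝ)| := abs_sub_comm _ _
              linarith [hPa, hQu]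

      have hsB : s * B ≤ B := by nlinarith
      have htB : t * B ≤ B := by nlinarith
      have h5 : |(a : ℝ) - u| ≤ B + |P - Q| + B := by linarith
      have h6 : ((zCayley S).dist a u : ℝ) ≤ D * (B + |P - Q| + B) :=
        le_trans hau (mul_le_mul_of_nonneg_left h5 hD0)
      have h7 : D * (B + |P - Q| + B) = D * |P - Q| + 2 * B * D := by ring
      rw [h7] at h6
      linarith
    refine le_trans (min_le_left _ _) ?_
    refine le_trans (min_le_left _ _) ?_
    refine le_trans (min_le_left _ _) hr1


lemma cayz : ∀ S : Finset ℤ, AddSubgroup.closure (S : Set ℤ) = ⊤ →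
    StronglyShortcut (zCayley S) := by
  intro S hS
  set B : ℝ := max ((S.sup Int.natAbs : ℕ) : ℝ) 1 with hBdef
  set D : ℝ := (((zCayley S).dist 0 1 : ℕ) : ℝ) with hDdef
  set K : ℝ := max B (max D 1) with hKdef
  set M : ℝ := 2 + 2 * B * D with hMdef
  have hB1 : (1:ℝ) ≤ B := le_max_right _ _
  have hB0 : (0:ℝ) ≤ B := by linarith
  have hD0 : (0:ℝ) ≤ D := Nat.cast_nonneg _
  have hK1 : (1:ℝ) ≤ K := le_trans (le_max_right _ _) (le_max_right _ _)
  have hKB : B ≤ K := le_max_left _ _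
  have hKD : D ≤ K := le_trans (le_max_left _ _) (le_max_right _ _)
  have hK0 : (0:ℝ) < K := lt_of_lt_of_le one_pos hK1
  have hM0 : (0:ℝ) ≤ M := by nlinarith
  refine ⟨⌈2 * K / (1/2 : ℝ) * (M + 2 * 0)⌉₊, 1/2, by norm_num, by norm_num, ?_⟩
  intro n c hn hcyc hai
  set vr : ℤ → ℝ := fun k => ((c ((k : ZMod n)) : ℤ) : ℝ) with hvr
  set F : ℝ → ℝ := fun p => vr ⌊p⌋ + Int.fract p • (vr (⌊p⌋ + 1) - vr ⌊p⌋) with hF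
  have hFc : Continuous F := polygonal_continuous vr
  set e : EuclideanSpace ℝ (Fin 2) := EuclideanSpace.single (0 : Fin 2) (1:ℝ) with he
  have hne : ‖e‖ = 1 := by rw [he, EuclideanSpace.norm_single]; norm_num
  have he0 : e ≠ 0 := by
    intro h
    rw [h, norm_zero] at hne
    norm_num at hne
  set g : ℝ → EuclideanSpace ℝ (Fin 2) := fun p => F p • e with hg
  have hgc : Continuous g := hFc.smul continuous_const
  have hdist_g : ∀ p q : ℝ, dist (g p) (g q) = |F p - F q| := by
    intro p q
    rw [hg]
    simp only []
    rw [dist_eq_norm, ← sub_smul, norm_smul, hne, Real.norm_eq_abs, mul_one]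
  have hone : ∀ k : ℤ, ((k + 1 : ℤ) : ZMod n) = ((k : ℤ) : ZMod n) + 1 := by
    intro k; push_cast; ring
  have hFeq : ∀ p : ℝ, F p = cyclePt n c p := by
    intro p
    rw [hF]
    simp only [hvr, smul_eq_mul]
    rw [cyclePt, hone ⌊p⌋]
  have hper : ∀ p : ℝ, g (p + (n : ℝ)) = g p := by
    intro p
    rw [hg]
    simp only []
    congr 1
    rw [hF]
    simp only [hvr]
    rw [Int.floor_add_natCast, Int.fract_add_natCast]
    have h1 : (((⌊p⌋ + (n : ℤ)) : ℤ) : ZMod n) = ((⌊p⌋ : ℤ) : ZMod n) := by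
      push_cast; simp
    have h2 : (((⌊p⌋ + (n : ℤ) + 1) : ℤ) : ZMod n) = (((⌊p⌋ + 1) : ℤ) : ZMod n) := by
      push_cast; simp
    rw [show ⌊p⌋ + (n : ℤ) + 1 = (⌊p⌋ + (n:ℤ)) + 1 from rfl] at h2
    rw [h1, h2, hone ⌊p⌋]
  have hline : ∀ p : ℝ, ∃ s : ℝ, dist (g p) (0 + s • e) ≤ 0 := by
    intro p
    refine ⟨F p, ?_⟩
    rw [zero_add, hg]
    simp only []
    simp [dist_self]
  have hqi : ∀ p q : ℝ, (1 / K) * rdist (zCayley S) n c p q - M ≤ dist (g p) (g q) ∧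
      dist (g p) (g q) ≤ K * rdist (zCayley S) n c p q + M := by
    intro p q
    obtain ⟨hup, hlow⟩ := qi_core hS hcyc p q
    rw [hdist_g p q, hFeq p, hFeq q]
    have hrd0 := rdist_nonneg (zCayley S) n c p q
    have hd0 : (0:ℝ) ≤ |cyclePt n c p - cyclePt n c q| := abs_nonneg _
    have hup' : |cyclePt n c p - cyclePt n c q| ≤ B * rdist (zCayley S) n c p q := by
      rw [hBdef]; exact hup
    have hlow' : rdist (zCayley S) n c p q ≤
        D * |cyclePt n c p - cyclePt n c q| + M := by
      rw [hMdef, hBdef, hDdef]; exact hlow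
    constructor
    · have hstep : rdist (zCayley S) n c p q ≤
          K * |cyclePt n c p - cyclePt n c q| + K * M := by
        have h1 : D * |cyclePt n c p - cyclePt n c q| ≤
            K * |cyclePt n c p - cyclePt n c q| := mul_le_mul_of_nonneg_right hKD hd0
        have h2 : M ≤ K * M := le_mul_of_one_le_left hM0 hK1
        linarith
      have h3 := mul_le_mul_of_nonneg_left hstep (by positivity : (0:ℝ) ≤ 1 / K)
      have h4 : (1 / K) * (K * |cyclePt n c p - cyclePt n c q| + K * M) =
          |cyclePt n c p - cyclePt n c q| + M := by
        field_simp
      rw [h4] at h3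
      linarith
    · have h5 : B * rdist (zCayley S) n c p q ≤ K * rdist (zCayley S) n c p q :=
        mul_le_mul_of_nonneg_right hKB hrd0
      linarith
  have key := useplank ℤ (zCayley S) n c K M 0 (1/2) g 0 e hn hcyc hK1 hM0 le_rfl
    (by norm_num) (by norm_num) hgc hper hqi he0 hline hai
  have hceil := Nat.le_ceil (2 * K / (1/2 : ℝ) * (M + 2 * 0))
  exact_mod_cast le_trans key hceil

/-- Lemma `useplank` and Theorem `cayz`.  Let `Γ` be a graph admitting a
continuous `(K, M)`-quasi-isometric embedding `ι : Γ → ℝ²`, let `ξ ∈ (0,1)`, and let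
`f : C → Γ` be a `ξ`-almost isometric cycle.  If the image of `ι ∘ f` is contained in the
`N`-neighborhood of a line `L ⊂ ℝ²`, then `|C| ≤ (2K/ξ)·(M + 2N)`.  (Here `g = ι ∘ f` is
recorded directly: it is continuous, periodic, and satisfies the quasi-isometric-embedding
inequalities with respect to the distance `d_Γ` between points in the image of the cycle.)
Consequently, for every finite generating set `S` of `ℤ`, the Cayley graph `Cay(ℤ, S)` is
strongly shortcut. -/
theorem lem_useplank_and_thm_cayz :
    (∀ (V : Type) (G : SimpleGraph V) (n : ℕ) (c : ZMod n → V)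
       (K M N ξ : ℝ) (g : ℝ → EuclideanSpace ℝ (Fin 2))
       (x₀ dir : EuclideanSpace ℝ (Fin 2)),
      0 < n → IsCycle G n c → 1 ≤ K → 0 ≤ M → 0 ≤ N → 0 < ξ → ξ < 1 →
      Continuous g → (∀ p : ℝ, g (p + (n : ℝ)) = g p) →
      (∀ p q : ℝ, (1 / K) * rdist G n c p q - M ≤ dist (g p) (g q) ∧
        dist (g p) (g q) ≤ K * rdist G n c p q + M) →
      dir ≠ 0 →
      (∀ p : ℝ, ∃ s : ℝ, dist (g p) (x₀ + s • dir) ≤ N) →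
      IsAlmostIsometricCycle G n c ξ →
      (n : ℝ) ≤ 2 * K / ξ * (M + 2 * N)) ∧
    (∀ S : Finset ℤ, AddSubgroup.closure (S : Set ℤ) = ⊤ → StronglyShortcut (zCayley S)) := by
  exact ⟨useplank, cayz⟩

end ShortcutGraphs
end
end
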